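/- arXiv:2405.16519 — 8 statements merged into one kernel-verified Lean document; each statement's English description precedes it below -/
import Mathlib

section
/- Let d ≥ 1, n ≥ 2, m ≥ 1, and let Ω ⊆ ℝ^d be a set with nonempty interior. Then for every p ∈ [1,∞), no map E : P_n(Ω) → ℝ^m is bi-Lipschitz with respect to the p-Wasserstein distance W_p; that is, there do not exist constants 0 < c ≤ C < ∞ such that c·W_p(μ,ν) ≤ ‖E(μ) − E(ν)‖ ≤ C·W_p(μ,ν) for all μ, ν ∈ P_n(Ω). -/
open MeasureTheory ENNReal Filter

noncomputable section

/-- A coupling of two measures on `EuclideanSpace ℝ (Fin d)`. -/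
def IsCoupling {d : ℕ} (π : Measure (EuclideanSpace ℝ (Fin d) × EuclideanSpace ℝ (Fin d)))
    (μ ν : Measure (EuclideanSpace ℝ (Fin d))) : Prop :=
  IsProbabilityMeasure π ∧ π.map Prod.fst = μ ∧ π.map Prod.snd = ν

/-- The `p`-Wasserstein distance `W_p(μ,ν)` for `p ∈ [1,∞)`. -/
def Wp (d : ℕ) (p : ℝ) (μ ν : Measure (EuclideanSpace ℝ (Fin d))) : ℝ :=
  ((⨅ π ∈ {π : Measure (EuclideanSpace ℝ (Fin d) × EuclideanSpace ℝ (Fin d)) | IsCoupling π μ ν},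
      ∫⁻ q, (‖q.1 - q.2‖₊ : ℝ≥0∞) ^ p ∂π) ^ (1 / p)).toReal

/-- The `∞`-Wasserstein distance `W_∞(μ,ν)`. -/
def Winf (d : ℕ) (μ ν : Measure (EuclideanSpace ℝ (Fin d))) : ℝ :=
  (⨅ π ∈ {π : Measure (EuclideanSpace ℝ (Fin d) × EuclideanSpace ℝ (Fin d)) | IsCoupling π μ ν},
      essSup (fun q => (‖q.1 - q.2‖₊ : ℝ≥0∞)) π).toReal

/-- `μ ∈ P_n(Ω)`: a probability measure supported on at most `n` points, all lying in `Ω`. -/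
def MemPn (d n : ℕ) (Ω : Set (EuclideanSpace ℝ (Fin d)))
    (μ : Measure (EuclideanSpace ℝ (Fin d))) : Prop :=
  IsProbabilityMeasure μ ∧
    ∃ S : Finset (EuclideanSpace ℝ (Fin d)), S.card ≤ n ∧ ↑S ⊆ Ω ∧
      μ ((↑S : Set (EuclideanSpace ℝ (Fin d)))ᶜ) = 0

/-- A finitely supported probability measure on `ℝ^d`. -/
def FinSuppProb (d : ℕ) (μ : Measure (EuclideanSpace ℝ (Fin d))) : Prop :=
  IsProbabilityMeasure μ ∧
    ∃ S : Finset (EuclideanSpace ℝ (Fin d)), μ ((↑S : Set (EuclideanSpace ℝ (Fin d)))ᶜ) = 0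

/-- `α·μ`: the pushforward of `μ` under the dilation `x ↦ α • x`. -/
def scaleMeasure (d : ℕ) (α : ℝ) (μ : Measure (EuclideanSpace ℝ (Fin d))) :
    Measure (EuclideanSpace ℝ (Fin d)) :=
  μ.map (fun x => α • x)

namespace NoBiLip

variable {d : ℕ} {p r : ℝ} {x0 u : EuclideanSpace ℝ (Fin d)}

/-- the displacement scale at level `k` -/
def tk (p r : ℝ) (k : ℕ) : ℝ := r * (2:ℝ) ^ ((k:ℝ)/p)

def yk (p r : ℝ) (x0 u : EuclideanSpace ℝ (Fin d)) (k : ℕ) : EuclideanSpace ℝ (Fin d) :=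
  x0 + (tk p r k) • u

def eps (k : ℕ) : ℝ≥0∞ := 2⁻¹ ^ k

def muk (p r : ℝ) (x0 u : EuclideanSpace ℝ (Fin d)) (k : ℕ) :
    Measure (EuclideanSpace ℝ (Fin d)) :=
  ((1 : ℝ≥0∞) - eps k) • Measure.dirac x0 + eps k • Measure.dirac (yk p r x0 u k)

lemma eps_le_one (k : ℕ) : eps k ≤ 1 :=
  pow_le_one' (by simp [ENNReal.inv_le_one]) k

lemma eps_ne_top (k : ℕ) : eps k ≠ ∞ := by simp [eps]

lemma eps_pos (k : ℕ) : 0 < eps k := by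
  simp [eps, pos_iff_ne_zero, pow_ne_zero_iff]

lemma eps_anti {i j : ℕ} (h : i ≤ j) : eps j ≤ eps i :=
  pow_le_pow_right_of_le_one' (by simp [ENNReal.inv_le_one]) h

lemma eps_succ (k : ℕ) : eps (k+1) = eps k / 2 := by
  rw [eps, eps, pow_succ, ENNReal.div_eq_inv_mul, mul_comm]

lemma tk_pos (hp : 1 ≤ p) (hr : 0 < r) (k : ℕ) : 0 < tk p r k :=
  mul_pos hr (Real.rpow_pos_of_pos (by norm_num) _)

lemma tk_mono (hp : 1 ≤ p) (hr : 0 < r) {i j : ℕ} (h : i ≤ j) : tk p r i ≤ tk p r j := by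
  have hp0 : 0 < p := lt_of_lt_of_le one_pos hp
  apply mul_le_mul_of_nonneg_left _ hr.le
  apply Real.rpow_le_rpow_of_exponent_le (by norm_num)
  exact div_le_div_of_nonneg_right (by exact_mod_cast h) hp0.le

lemma yk_sub_x0 (k : ℕ) : yk p r x0 u k - x0 = (tk p r k) • u := by
  simp [yk]

lemma norm_yk_sub_x0 (hp : 1 ≤ p) (hr : 0 < r) (hu : ‖u‖ = 1) (k : ℕ) :
    ‖yk p r x0 u k - x0‖ = tk p r k := by
  rw [yk_sub_x0, norm_smul, hu, mul_one, Real.norm_eq_abs, abs_of_pos (tk_pos hp hr k)]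

lemma yk_ne_x0 (hp : 1 ≤ p) (hr : 0 < r) (hu : ‖u‖ = 1) (k : ℕ) : yk p r x0 u k ≠ x0 := by
  intro h
  have := norm_yk_sub_x0 (x0 := x0) hp hr hu k
  rw [h, sub_self, norm_zero] at this
  exact absurd this.symm (ne_of_gt (tk_pos hp hr k))

lemma norm_yk_sub_yk (hp : 1 ≤ p) (hr : 0 < r) (hu : ‖u‖ = 1) {i j : ℕ} (h : i ≤ j) :
    ‖yk p r x0 u j - yk p r x0 u i‖ = tk p r j - tk p r i := by
  have : yk p r x0 u j - yk p r x0 u i = (tk p r j - tk p r i) • u := by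
    simp [yk, sub_smul]
  rw [this, norm_smul, hu, mul_one, Real.norm_eq_abs, abs_of_nonneg (by linarith [tk_mono hp hr h])]

/-- the key cost value -/
lemma cost_val (hp : 1 ≤ p) (hr : 0 < r) (k : ℕ) :
    ENNReal.ofReal (tk p r k) ^ p = ENNReal.ofReal (r ^ p) * 2 ^ k := by
  have hp0 : 0 < p := lt_of_lt_of_le one_pos hp
  have h2 : (0:ℝ) < (2:ℝ) ^ ((k:ℝ)/p) := Real.rpow_pos_of_pos (by norm_num) _
  have htp : (tk p r k) ^ p = r ^ p * 2 ^ k := by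
    rw [tk, Real.mul_rpow hr.le h2.le, ← Real.rpow_natCast 2 k,
      ← Real.rpow_mul (by norm_num), div_mul_cancel₀ _ hp0.ne']
  rw [show (ENNReal.ofReal (tk p r k))^p = ENNReal.ofReal ((tk p r k)^p) from
    ENNReal.ofReal_rpow_of_pos (tk_pos hp hr k), htp,
    ENNReal.ofReal_mul (by positivity), ENNReal.ofReal_pow (by norm_num), ENNReal.ofReal_ofNat]

lemma eps_mul_pow (i : ℕ) (x : ℝ≥0∞) : eps i * (x * 2 ^ i) = x := by
  rw [eps, mul_comm x, ← mul_assoc, ← mul_pow]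
  simp [ENNReal.inv_mul_cancel]

lemma muk_prob (k : ℕ) : IsProbabilityMeasure (muk p r x0 u k) := by
  constructor
  simp only [muk, Measure.add_apply, Measure.smul_apply, smul_eq_mul,
    Measure.dirac_apply_of_mem (Set.mem_univ _), mul_one]
  exact tsub_add_cancel_of_le (eps_le_one k)


/-- The explicit coupling between `muk i` and `muk j`. -/
def pik (p r : ℝ) (x0 u : EuclideanSpace ℝ (Fin d)) (i j : ℕ) :
    Measure (EuclideanSpace ℝ (Fin d) × EuclideanSpace ℝ (Fin d)) :=
  ((1:ℝ≥0∞) - eps i) • Measure.dirac (x0, x0)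
    + (eps i - eps j) • Measure.dirac (yk p r x0 u i, x0)
    + eps j • Measure.dirac (yk p r x0 u i, yk p r x0 u j)

lemma pik_coupling (hp : 1 ≤ p) (hr : 0 < r) {i j : ℕ} (hij : i ≤ j) :
    IsCoupling (pik p r x0 u i j) (muk p r x0 u i) (muk p r x0 u j) := by
  refine ⟨?_, ?_, ?_⟩
  · constructor
    simp only [pik, Measure.add_apply, Measure.smul_apply, smul_eq_mul,
      Measure.dirac_apply_of_mem (Set.mem_univ _), mul_one]
    rw [tsub_add_tsub_cancel (eps_le_one i) (eps_anti hij)]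
    exact tsub_add_cancel_of_le (le_trans (eps_anti hij) (eps_le_one i))
  · rw [pik, Measure.map_add _ _ measurable_fst, Measure.map_add _ _ measurable_fst,
      Measure.map_smul, Measure.map_smul, Measure.map_smul,
      Measure.map_dirac' measurable_fst, Measure.map_dirac' measurable_fst,
      Measure.map_dirac' measurable_fst]
    show ((1:ℝ≥0∞) - eps i) • Measure.dirac x0 + (eps i - eps j) • Measure.dirac (yk p r x0 u i)
        + eps j • Measure.dirac (yk p r x0 u i) = _
    rw [add_assoc, ← add_smul, tsub_add_cancel_of_le (eps_anti hij)]
    rfl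
  · rw [pik, Measure.map_add _ _ measurable_snd, Measure.map_add _ _ measurable_snd,
      Measure.map_smul, Measure.map_smul, Measure.map_smul,
      Measure.map_dirac' measurable_snd, Measure.map_dirac' measurable_snd,
      Measure.map_dirac' measurable_snd]
    show ((1:ℝ≥0∞) - eps i) • Measure.dirac x0 + (eps i - eps j) • Measure.dirac x0
        + eps j • Measure.dirac (yk p r x0 u j) = _
    rw [← add_smul, tsub_add_tsub_cancel (eps_le_one i) (eps_anti hij)]
    rfl

lemma pik_cost (hp : 1 ≤ p) (hr : 0 < r) (hu : ‖u‖ = 1) {i j : ℕ} (hij : i ≤ j) :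
    ∫⁻ q, (‖q.1 - q.2‖₊ : ℝ≥0∞) ^ p ∂(pik p r x0 u i j) ≤ ENNReal.ofReal ((2*r) ^ p) := by
  have hp0 : 0 < p := lt_of_lt_of_le one_pos hp
  rw [pik, lintegral_add_measure, lintegral_add_measure, lintegral_smul_measure,
    lintegral_smul_measure, lintegral_smul_measure, lintegral_dirac, lintegral_dirac,
    lintegral_dirac]
  have e0 : ((‖((x0,x0) : _ × _).1 - ((x0,x0) : _ × _).2‖₊ : ℝ≥0∞)) ^ p = 0 := by
    simp [ENNReal.zero_rpow_of_pos hp0]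
  have e1 : ((‖((yk p r x0 u i, x0) : _ × _).1 - ((yk p r x0 u i, x0) : _ × _).2‖₊ : ℝ≥0∞)) ^ p
      = ENNReal.ofReal (r ^ p) * 2 ^ i := by
    rw [← enorm_eq_nnnorm, ← ofReal_norm]
    show (ENNReal.ofReal ‖yk p r x0 u i - x0‖) ^ p = _
    rw [norm_yk_sub_x0 hp hr hu, cost_val hp hr]
  have e2 : ((‖((yk p r x0 u i, yk p r x0 u j) : _ × _).1
        - ((yk p r x0 u i, yk p r x0 u j) : _ × _).2‖₊ : ℝ≥0∞)) ^ p
      ≤ ENNReal.ofReal (r ^ p) * 2 ^ j := by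
    rw [← enorm_eq_nnnorm, ← ofReal_norm]
    show (ENNReal.ofReal ‖yk p r x0 u i - yk p r x0 u j‖) ^ p ≤ _
    rw [norm_sub_rev, norm_yk_sub_yk hp hr hu hij, ← cost_val hp hr]
    apply ENNReal.rpow_le_rpow _ hp0.le
    apply ENNReal.ofReal_le_ofReal
    linarith [tk_pos hp hr i]
  rw [e0, e1, smul_zero, zero_add, smul_eq_mul, smul_eq_mul]
  have t1 : (eps i - eps j) * (ENNReal.ofReal (r ^ p) * 2 ^ i) ≤ ENNReal.ofReal (r ^ p) := by
    calc (eps i - eps j) * (ENNReal.ofReal (r ^ p) * 2 ^ i)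
        ≤ eps i * (ENNReal.ofReal (r ^ p) * 2 ^ i) :=
          mul_le_mul_left tsub_le_self _
      _ = ENNReal.ofReal (r ^ p) := eps_mul_pow i _
  have t2 : eps j * ((‖((yk p r x0 u i, yk p r x0 u j) : _ × _).1
        - ((yk p r x0 u i, yk p r x0 u j) : _ × _).2‖₊ : ℝ≥0∞)) ^ p
      ≤ ENNReal.ofReal (r ^ p) := by
    calc eps j * _ ≤ eps j * (ENNReal.ofReal (r ^ p) * 2 ^ j) := mul_le_mul_right e2 _
      _ = ENNReal.ofReal (r ^ p) := eps_mul_pow j _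
  calc (eps i - eps j) * (ENNReal.ofReal (r ^ p) * 2 ^ i) + eps j * _
      ≤ ENNReal.ofReal (r ^ p) + ENNReal.ofReal (r ^ p) := add_le_add t1 t2
    _ = ENNReal.ofReal (r ^ p + r ^ p) := (ENNReal.ofReal_add (by positivity) (by positivity)).symm
    _ ≤ ENNReal.ofReal ((2*r) ^ p) := by
        apply ENNReal.ofReal_le_ofReal
        rw [Real.mul_rpow (by norm_num) hr.le]
        have h2p : (2:ℝ) ≤ (2:ℝ) ^ p := by
          nth_rewrite 1 [show (2:ℝ) = (2:ℝ) ^ (1:ℝ) by rw [Real.rpow_one]]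
          exact Real.rpow_le_rpow_of_exponent_le (by norm_num) hp
        nlinarith [Real.rpow_nonneg hr.le p, Real.rpow_pos_of_pos hr p]

lemma muk_apply_yk (hp : 1 ≤ p) (hr : 0 < r) (hu : ‖u‖ = 1) (k : ℕ) :
    muk p r x0 u k {yk p r x0 u k} = eps k := by
  rw [muk, Measure.add_apply, Measure.smul_apply, Measure.smul_apply,
    Measure.dirac_apply, Measure.dirac_apply]
  rw [Set.indicator_of_notMem (by simp [(yk_ne_x0 hp hr hu k).symm]),
    Set.indicator_of_mem (by simp)]
  simp

lemma muk_apply_compl (hp : 1 ≤ p) (hr : 0 < r) (hu : ‖u‖ = 1) (k : ℕ) :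
    muk p r x0 u k ({x0}ᶜ) = eps k := by
  rw [muk, Measure.add_apply, Measure.smul_apply, Measure.smul_apply,
    Measure.dirac_apply, Measure.dirac_apply]
  rw [Set.indicator_of_notMem (by simp), Set.indicator_of_mem (by simp [yk_ne_x0 hp hr hu k])]
  simp

lemma coupling_cost_lb (hp : 1 ≤ p) (hr : 0 < r) (hu : ‖u‖ = 1) {i j : ℕ} (hij : i < j)
    {π : Measure (EuclideanSpace ℝ (Fin d) × EuclideanSpace ℝ (Fin d))}
    (hπ : IsCoupling π (muk p r x0 u i) (muk p r x0 u j)) :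
    ENNReal.ofReal ((r/2) ^ p) ≤ ∫⁻ q, (‖q.1 - q.2‖₊ : ℝ≥0∞) ^ p ∂π := by
  have hp0 : 0 < p := lt_of_lt_of_le one_pos hp
  obtain ⟨hprob, h1, h2⟩ := hπ
  have hfst : π (Prod.fst ⁻¹' {yk p r x0 u i}) = eps i := by
    rw [← Measure.map_apply measurable_fst (measurableSet_singleton _), h1,
      muk_apply_yk hp hr hu]
  have hsnd : π (Prod.snd ⁻¹' ({x0}ᶜ)) = eps j := by
    rw [← Measure.map_apply measurable_snd (measurableSet_singleton _).compl, h2,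
      muk_apply_compl hp hr hu]
  have hsub : Prod.fst ⁻¹' {yk p r x0 u i}
      ⊆ {((yk p r x0 u i, x0) : EuclideanSpace ℝ (Fin d) × EuclideanSpace ℝ (Fin d))}
        ∪ Prod.snd ⁻¹' ({x0}ᶜ) := by
    rintro ⟨a, b⟩ ha
    simp only [Set.mem_preimage, Set.mem_singleton_iff] at ha
    by_cases hb : b = x0
    · exact Or.inl (by simp [ha, hb])
    · exact Or.inr (by simpa using hb)
  have hkey : eps i - eps j ≤ π {(yk p r x0 u i, x0)} := by
    rw [tsub_le_iff_right, ← hfst, ← hsnd]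
    exact le_trans (measure_mono hsub) (measure_union_le _ _)
  have hmass : eps i / 2 ≤ π {(yk p r x0 u i, x0)} := by
    refine le_trans ?_ hkey
    have hj : eps j ≤ eps i / 2 := by
      rw [← eps_succ i]; exact eps_anti hij
    calc eps i / 2 = eps i - eps i / 2 := (ENNReal.sub_half (eps_ne_top i)).symm
      _ ≤ eps i - eps j := tsub_le_tsub_left hj _
  have hind : ∀ q : EuclideanSpace ℝ (Fin d) × EuclideanSpace ℝ (Fin d),
      Set.indicator {((yk p r x0 u i, x0) : _ × _)}
        (fun _ => ENNReal.ofReal (r ^ p) * 2 ^ i) q ≤ (‖q.1 - q.2‖₊ : ℝ≥0∞) ^ p := by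
    intro q
    by_cases hq : q = (yk p r x0 u i, x0)
    · rw [hq, Set.indicator_of_mem (by simp)]
      rw [show ((yk p r x0 u i, x0) : _ × _).1 - ((yk p r x0 u i, x0) : _ × _).2
          = yk p r x0 u i - x0 from rfl, ← enorm_eq_nnnorm, ← ofReal_norm,
        norm_yk_sub_x0 hp hr hu, cost_val hp hr]
    · rw [Set.indicator_of_notMem (by simpa using hq)]
      exact zero_le
  calc ENNReal.ofReal ((r/2) ^ p)
      ≤ ENNReal.ofReal (r ^ p) / 2 := by
        rw [show (2:ℝ≥0∞) = ENNReal.ofReal 2 by simp,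
          ← ENNReal.ofReal_div_of_pos (by norm_num)]
        apply ENNReal.ofReal_le_ofReal
        rw [Real.div_rpow hr.le (by norm_num)]
        have h2p : (2:ℝ) ≤ (2:ℝ) ^ p := by
          nth_rewrite 1 [show (2:ℝ) = (2:ℝ) ^ (1:ℝ) by rw [Real.rpow_one]]
          exact Real.rpow_le_rpow_of_exponent_le (by norm_num) hp
        gcongr
    _ = eps i / 2 * (ENNReal.ofReal (r ^ p) * 2 ^ i) := by
        rw [ENNReal.div_eq_inv_mul, ENNReal.div_eq_inv_mul, mul_assoc, eps_mul_pow]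
    _ ≤ π {(yk p r x0 u i, x0)} * (ENNReal.ofReal (r ^ p) * 2 ^ i) :=
        mul_le_mul_left hmass _
    _ = ∫⁻ q, Set.indicator {((yk p r x0 u i, x0) : _ × _)}
          (fun _ => ENNReal.ofReal (r ^ p) * 2 ^ i) q ∂π := by
        rw [lintegral_indicator_const (measurableSet_singleton _), mul_comm]
    _ ≤ _ := lintegral_mono hind

lemma wp_bounds (hp : 1 ≤ p) (hr : 0 < r) (hu : ‖u‖ = 1) {i j : ℕ} (hij : i < j) :
    r/2 ≤ Wp d p (muk p r x0 u i) (muk p r x0 u j)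
      ∧ Wp d p (muk p r x0 u i) (muk p r x0 u j) ≤ 2*r := by
  have hp0 : 0 < p := lt_of_lt_of_le one_pos hp
  set I := ⨅ π ∈ {π : Measure (EuclideanSpace ℝ (Fin d) × EuclideanSpace ℝ (Fin d)) |
      IsCoupling π (muk p r x0 u i) (muk p r x0 u j)},
    ∫⁻ q, (‖q.1 - q.2‖₊ : ℝ≥0∞) ^ p ∂π with hI
  have hub : I ≤ ENNReal.ofReal ((2*r) ^ p) :=
    le_trans (iInf₂_le (pik p r x0 u i j) (pik_coupling hp hr hij.le)) (pik_cost hp hr hu hij.le)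
  have hlb : ENNReal.ofReal ((r/2) ^ p) ≤ I :=
    le_iInf₂ fun π hπ => coupling_cost_lb hp hr hu hij hπ
  have hub' : I ^ (1/p) ≤ ENNReal.ofReal (2*r) := by
    calc I ^ (1/p) ≤ (ENNReal.ofReal ((2*r) ^ p)) ^ (1/p) :=
          ENNReal.rpow_le_rpow hub (by positivity)
      _ = ENNReal.ofReal (2*r) := by
          rw [show ENNReal.ofReal ((2*r)^p) = (ENNReal.ofReal (2*r)) ^ p from
            (ENNReal.ofReal_rpow_of_pos (by linarith)).symm,
            ← ENNReal.rpow_mul, mul_one_div_cancel hp0.ne', ENNReal.rpow_one]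
  have hlb' : ENNReal.ofReal (r/2) ≤ I ^ (1/p) := by
    calc ENNReal.ofReal (r/2) = (ENNReal.ofReal ((r/2) ^ p)) ^ (1/p) := by
          rw [show ENNReal.ofReal ((r/2)^p) = (ENNReal.ofReal (r/2)) ^ p from
            (ENNReal.ofReal_rpow_of_pos (by linarith)).symm,
            ← ENNReal.rpow_mul, mul_one_div_cancel hp0.ne', ENNReal.rpow_one]
      _ ≤ I ^ (1/p) := ENNReal.rpow_le_rpow hlb (by positivity)
  constructor
  · have := ENNReal.toReal_mono (ne_top_of_le_ne_top ENNReal.ofReal_ne_top hub') hlb'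
    rwa [ENNReal.toReal_ofReal (by linarith)] at this
  · exact ENNReal.toReal_le_of_le_ofReal (by linarith) hub'

lemma muk_memPn (hp : 1 ≤ p) (hr : 0 < r) (hu : ‖u‖ = 1) {n : ℕ} (hn : 2 ≤ n)
    {Ω : Set (EuclideanSpace ℝ (Fin d))} (k : ℕ) (hx : x0 ∈ Ω) (hy : yk p r x0 u k ∈ Ω) :
    MemPn d n Ω (muk p r x0 u k) := by
  classical
  refine ⟨muk_prob k, {x0, yk p r x0 u k}, ?_, ?_, ?_⟩
  · exact le_trans (Finset.card_insert_le _ _) (by simpa using hn)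
  · intro z hz
    simp only [Finset.coe_insert, Finset.coe_singleton, Set.mem_insert_iff,
      Set.mem_singleton_iff] at hz
    rcases hz with h | h
    · exact h ▸ hx
    · exact h ▸ hy
  · rw [muk, Measure.add_apply, Measure.smul_apply, Measure.smul_apply,
      Measure.dirac_apply, Measure.dirac_apply,
      Set.indicator_of_notMem (by simp), Set.indicator_of_notMem (by simp)]
    simp

end NoBiLip

open NoBiLip in
/-- For `d ≥ 1`, `n ≥ 2`, `m ≥ 1`, `Ω ⊆ ℝ^d` with nonempty interior and
`p ∈ [1,∞)`, no map `E : P_n(Ω) → ℝ^m` is bi-Lipschitz with respect to `W_p`. -/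
theorem no_biLipschitz_Wp (d n m : ℕ) (hd : 1 ≤ d) (hn : 2 ≤ n) (hm : 1 ≤ m)
    (Ω : Set (EuclideanSpace ℝ (Fin d))) (hΩ : (interior Ω).Nonempty)
    (p : ℝ) (hp : 1 ≤ p)
    (E : Measure (EuclideanSpace ℝ (Fin d)) → EuclideanSpace ℝ (Fin m)) :
    ¬ ∃ c C : ℝ, 0 < c ∧ c ≤ C ∧
      ∀ μ ν : Measure (EuclideanSpace ℝ (Fin d)), MemPn d n Ω μ → MemPn d n Ω ν →
        c * Wp d p μ ν ≤ ‖E μ - E ν‖ ∧ ‖E μ - E ν‖ ≤ C * Wp d p μ ν := by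
  classical
  rintro ⟨c, C, hc, hcC, hbl⟩
  have hC : 0 < C := lt_of_lt_of_le hc hcC
  have hp0 : 0 < p := lt_of_lt_of_le one_pos hp
  obtain ⟨x0, hx0⟩ := hΩ
  obtain ⟨ρ, hρ, hball⟩ := Metric.isOpen_iff.1 isOpen_interior x0 hx0
  set u : EuclideanSpace ℝ (Fin d) := EuclideanSpace.single (⟨0, hd⟩ : Fin d) (1:ℝ) with hu_def
  have hu : ‖u‖ = 1 := by
    rw [hu_def, EuclideanSpace.norm_single]; norm_num
  obtain ⟨T, hTsub, hTfin, hTcover⟩ :=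
    (isCompact_closedBall (0 : EuclideanSpace ℝ (Fin m)) (2*C)).finite_cover_balls
      (show 0 < c/8 by linarith)
  set M : ℕ := hTfin.toFinset.card + 1 with hM
  set r : ℝ := (ρ/2) * (2:ℝ) ^ (-(M:ℝ)/p) with hr_def
  have hr : 0 < r := mul_pos (by linarith) (Real.rpow_pos_of_pos (by norm_num) _)
  have hx0Ω : x0 ∈ Ω := interior_subset hx0
  have hyΩ : ∀ k ≤ M, yk p r x0 u k ∈ Ω := by
    intro k hk
    apply interior_subset (hball ?_)
    rw [Metric.mem_ball, dist_eq_norm, norm_yk_sub_x0 hp hr hu]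
    have htke : tk p r k = (ρ/2) * (2:ℝ) ^ (((k:ℝ) - M)/p) := by
      rw [tk, hr_def, mul_assoc, ← Real.rpow_add (by norm_num : (0:ℝ) < 2),
        ← add_div, neg_add_eq_sub]
    rw [htke]
    have h1 : (2:ℝ) ^ (((k:ℝ) - (M:ℝ))/p) ≤ 1 := by
      apply Real.rpow_le_one_of_one_le_of_nonpos (by norm_num)
      exact div_nonpos_of_nonpos_of_nonneg (sub_nonpos.2 (by exact_mod_cast hk)) hp0.le
    nlinarith
  set μ : ℕ → Measure (EuclideanSpace ℝ (Fin d)) := muk p r x0 u with hμ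
  have hmem : ∀ k ∈ Finset.Icc 1 M, MemPn d n Ω (μ k) := fun k hk =>
    muk_memPn hp hr hu hn k hx0Ω (hyΩ k (Finset.mem_Icc.1 hk).2)
  have himg : ∀ k ∈ Finset.Icc 1 M, ∀ l ∈ Finset.Icc 1 M, k ≠ l →
      c * (r/2) ≤ ‖E (μ k) - E (μ l)‖ ∧ ‖E (μ k) - E (μ l)‖ ≤ C * (2*r) := by
    have key : ∀ k ∈ Finset.Icc 1 M, ∀ l ∈ Finset.Icc 1 M, k < l →
        c * (r/2) ≤ ‖E (μ k) - E (μ l)‖ ∧ ‖E (μ k) - E (μ l)‖ ≤ C * (2*r) := by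
      intro k hk l hl h
      obtain ⟨hlb, hub⟩ := wp_bounds (x0 := x0) (u := u) hp hr hu h
      obtain ⟨h1, h2⟩ := hbl (μ k) (μ l) (hmem k hk) (hmem l hl)
      constructor
      · exact le_trans (mul_le_mul_of_nonneg_left hlb hc.le) h1
      · exact le_trans h2 (mul_le_mul_of_nonneg_left hub hC.le)
    intro k hk l hl hkl
    rcases lt_or_gt_of_ne hkl with h | h
    · exact key k hk l hl h
    · rw [norm_sub_rev]
      exact key l hl k hk h
  set w : ℕ → EuclideanSpace ℝ (Fin m) := fun k => r⁻¹ • (E (μ k) - E (μ 1)) with hw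
  have hM1 : 1 ∈ Finset.Icc 1 M := Finset.mem_Icc.2 ⟨le_refl _, by omega⟩
  have hwball : ∀ k ∈ Finset.Icc 1 M,
      w k ∈ Metric.closedBall (0 : EuclideanSpace ℝ (Fin m)) (2*C) := by
    intro k hk
    rw [Metric.mem_closedBall, dist_zero_right]
    by_cases h1 : k = 1
    · subst h1
      rw [hw]; simp only [sub_self, smul_zero, norm_zero]; positivity
    · have h2 := (himg k hk 1 hM1 h1).2
      rw [hw]
      simp only [norm_smul, norm_inv, Real.norm_eq_abs, abs_of_pos hr]
      calc r⁻¹ * ‖E (μ k) - E (μ 1)‖ ≤ r⁻¹ * (C * (2*r)) := by gcongr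
        _ = 2*C := by field_simp
  have hwsep : ∀ k ∈ Finset.Icc 1 M, ∀ l ∈ Finset.Icc 1 M, k ≠ l → c/2 ≤ ‖w k - w l‖ := by
    intro k hk l hl hkl
    have hsub : w k - w l = r⁻¹ • (E (μ k) - E (μ l)) := by
      rw [hw]; rw [← smul_sub, sub_sub_sub_cancel_right]
    rw [hsub, norm_smul, norm_inv, Real.norm_eq_abs, abs_of_pos hr]
    have h1 := (himg k hk l hl hkl).1
    calc c/2 = r⁻¹ * (c*(r/2)) := by field_simp
      _ ≤ r⁻¹ * ‖E (μ k) - E (μ l)‖ := by gcongr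
  have hex : ∀ k ∈ Finset.Icc 1 M, ∃ z ∈ T, w k ∈ Metric.ball z (c/8) := by
    intro k hk
    have hcov := hTcover (hwball k hk)
    rw [Set.mem_iUnion₂] at hcov
    obtain ⟨z, hz, hzball⟩ := hcov
    exact ⟨z, hz, hzball⟩
  set F : ℕ → EuclideanSpace ℝ (Fin m) := fun k =>
    if h : ∃ z ∈ T, w k ∈ Metric.ball z (c/8) then h.choose else 0 with hF
  have hFspec : ∀ k ∈ Finset.Icc 1 M, F k ∈ hTfin.toFinset ∧ w k ∈ Metric.ball (F k) (c/8) := by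
    intro k hk
    have h := hex k hk
    rw [hF]; simp only [dif_pos h]
    exact ⟨hTfin.mem_toFinset.2 h.choose_spec.1, h.choose_spec.2⟩
  have hcard : hTfin.toFinset.card < (Finset.Icc 1 M).card := by
    rw [Nat.card_Icc]; omega
  obtain ⟨k, hk, l, hl, hkl, hFeq⟩ :=
    Finset.exists_ne_map_eq_of_card_lt_of_maps_to hcard (fun k hk => (hFspec k hk).1)
  have hwk := (hFspec k hk).2
  have hwl := (hFspec l hl).2
  rw [hFeq] at hwk
  rw [Metric.mem_ball] at hwk hwl
  have hlt : ‖w k - w l‖ < c/4 := by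
    have htri := dist_triangle (w k) (F l) (w l)
    rw [← dist_eq_norm]
    have := dist_comm (F l) (w l)
    calc dist (w k) (w l) ≤ dist (w k) (F l) + dist (F l) (w l) := htri
      _ < c/8 + c/8 := by rw [dist_comm (F l)]; exact add_lt_add hwk hwl
      _ = c/4 := by ring
  linarith [hwsep k hk l hl hkl]
end
end

section
/- Let d ≥ 1, n ≥ 2, m ≥ 1, and let Ω ⊆ ℝ^d be a set with nonempty interior. Then no map E : P_n(Ω) → ℝ^m is bi-Lipschitz with respect to the ∞-Wasserstein distance W_∞; that is, there do not exist constants 0 < c ≤ C < ∞ such that c·W_∞(μ,ν) ≤ ‖E(μ) − E(ν)‖ ≤ C·W_∞(μ,ν) for all μ, ν ∈ P_n(Ω). -/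
open MeasureTheory ENNReal Filter

noncomputable section

lemma coupling_mass {d : ℕ} (a b : EuclideanSpace ℝ (Fin d)) (hab : a ≠ b)
    (t s : ℝ≥0∞) (hts : t < s)
    (π : Measure (EuclideanSpace ℝ (Fin d) × EuclideanSpace ℝ (Fin d)))
    (hfst : π.map Prod.fst = t • Measure.dirac a + (1-t) • Measure.dirac b)
    (hsnd : π.map Prod.snd = s • Measure.dirac a + (1-s) • Measure.dirac b) :
    π {(b, a)} ≠ 0 := by
  have hma : MeasurableSet ({a} : Set (EuclideanSpace ℝ (Fin d))) := measurableSet_singleton a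
  have hfa : π (Prod.fst ⁻¹' {a}) = t := by
    rw [← Measure.map_apply measurable_fst hma, hfst]
    simp [Measure.dirac_apply, Set.indicator_apply, Ne.symm hab]
  have hsa : π (Prod.snd ⁻¹' {a}) = s := by
    rw [← Measure.map_apply measurable_snd hma, hsnd]
    simp [Measure.dirac_apply, Set.indicator_apply, Ne.symm hab]
  have hcompl : π (Prod.fst ⁻¹' ({a, b}ᶜ)) = 0 := by
    rw [← Measure.map_apply measurable_fst ((measurableSet_singleton b).insert a).compl, hfst]
    simp [Measure.dirac_apply, Set.indicator_apply]
  intro h0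
  have hE2 : π {q : EuclideanSpace ℝ (Fin d) × EuclideanSpace ℝ (Fin d) | q.1 ≠ a ∧ q.2 = a} = 0 := by
    refine le_antisymm ?_ zero_le
    refine le_trans (measure_mono ?_) (le_trans (measure_union_le {(b,a)} (Prod.fst ⁻¹' ({a, b}ᶜ))) ?_)
    · rintro ⟨q1, q2⟩ ⟨h1, h2⟩
      by_cases hb : q1 = b
      · left; exact Set.mem_singleton_iff.mpr (Prod.ext hb h2)
      · right; simp [Set.mem_preimage, h1, hb]
    · rw [h0, hcompl]; simp
  have hsplit : π (Prod.snd ⁻¹' {a}) ≤ π (Prod.fst ⁻¹' {a}) +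
      π {q : EuclideanSpace ℝ (Fin d) × EuclideanSpace ℝ (Fin d) | q.1 ≠ a ∧ q.2 = a} := by
    refine le_trans (measure_mono ?_) (measure_union_le _ _)
    rintro ⟨q1, q2⟩ h2
    by_cases h : q1 = a
    · left; exact h
    · right; exact ⟨h, h2⟩
  rw [hfa, hsa, hE2, add_zero] at hsplit
  exact absurd hsplit (not_le.mpr hts)

lemma pairMeasure_prob {d : ℕ} (x y : EuclideanSpace ℝ (Fin d)) (t : ℝ≥0∞) (ht : t ≤ 1) :
    IsProbabilityMeasure (t • Measure.dirac x + (1-t) • Measure.dirac y) := by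
  constructor
  simp only [Measure.add_apply, Measure.smul_apply, smul_eq_mul, measure_univ, mul_one]
  exact add_tsub_cancel_of_le ht

lemma pairMeasure_null {d : ℕ} (x y : EuclideanSpace ℝ (Fin d)) (t : ℝ≥0∞)
    (A : Set (EuclideanSpace ℝ (Fin d))) (hx : x ∉ A) (hy : y ∉ A) :
    (t • Measure.dirac x + (1-t) • Measure.dirac y) A = 0 := by
  simp [Measure.dirac_apply, Set.indicator_apply, hx, hy]

lemma winf_eq {d : ℕ} (x y : EuclideanSpace ℝ (Fin d)) (hxy : x ≠ y)
    (t s : ℝ≥0∞) (ht : t ≤ 1) (hs : s ≤ 1) (hts : t ≠ s) :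
    Winf d (t • Measure.dirac x + (1-t) • Measure.dirac y)
      (s • Measure.dirac x + (1-s) • Measure.dirac y) = ‖x - y‖ := by
  have hrev' : ‖y - x‖₊ = ‖x - y‖₊ := by rw [← nnnorm_neg, neg_sub]
  have hrev : (‖y - x‖₊ : ℝ≥0∞) = (‖x - y‖₊ : ℝ≥0∞) := by rw [hrev']
  set μ := t • Measure.dirac x + (1-t) • Measure.dirac y with hμ
  set ν := s • Measure.dirac x + (1-s) • Measure.dirac y with hν
  haveI : IsProbabilityMeasure μ := pairMeasure_prob x y t ht
  haveI : IsProbabilityMeasure ν := pairMeasure_prob x y s hs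
  have key : (⨅ π ∈ {π : Measure (EuclideanSpace ℝ (Fin d) × EuclideanSpace ℝ (Fin d)) |
      IsCoupling π μ ν}, essSup (fun q => (‖q.1 - q.2‖₊ : ℝ≥0∞)) π) = (‖x - y‖₊ : ℝ≥0∞) := by
    apply le_antisymm
    · -- use the product coupling
      have hcoup : (μ.prod ν) ∈ {π : Measure (EuclideanSpace ℝ (Fin d) × EuclideanSpace ℝ (Fin d)) |
          IsCoupling π μ ν} := by
        refine ⟨inferInstance, ?_, ?_⟩
        · rw [Measure.map_fst_prod]; simp
        · rw [Measure.map_snd_prod]; simp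
      refine le_trans (iInf₂_le (μ.prod ν) hcoup) ?_
      have hnull : (μ.prod ν) ((({x, y} : Set (EuclideanSpace ℝ (Fin d))) ×ˢ
          ({x, y} : Set (EuclideanSpace ℝ (Fin d))))ᶜ) = 0 := by
        refine le_antisymm (le_trans (measure_mono ?_)
          (le_trans (measure_union_le ((({x, y} : Set (EuclideanSpace ℝ (Fin d)))ᶜ) ×ˢ Set.univ)
            (Set.univ ×ˢ (({x, y} : Set (EuclideanSpace ℝ (Fin d)))ᶜ))) ?_)) zero_le
        · rintro ⟨q1, q2⟩ hq
          simp only [Set.mem_compl_iff, Set.mem_prod, not_and_or] at hq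
          rcases hq with h | h
          · left; exact ⟨h, Set.mem_univ _⟩
          · right; exact ⟨Set.mem_univ _, h⟩
        · rw [Measure.prod_prod, Measure.prod_prod, hμ, hν]
          rw [pairMeasure_null x y t (({x, y} : Set (EuclideanSpace ℝ (Fin d)))ᶜ) (by simp) (by simp),
            pairMeasure_null x y s (({x, y} : Set (EuclideanSpace ℝ (Fin d)))ᶜ) (by simp) (by simp)]
          simp
      refine essSup_le_of_ae_le _ ?_
      filter_upwards [(MeasureTheory.mem_ae_iff.mpr hnull :
        ({x, y} : Set (EuclideanSpace ℝ (Fin d))) ×ˢ ({x, y} : Set (EuclideanSpace ℝ (Fin d))) ∈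
          ae (μ.prod ν))] with q hq
      obtain ⟨h1, h2⟩ := hq
      rcases h1 with h1 | h1 <;> rcases h2 with h2 | h2 <;>
        (try simp only [Set.mem_singleton_iff] at h1 h2) <;> rw [h1, h2] <;>
        first | exact le_rfl | exact le_of_eq hrev | simp
    · refine le_iInf₂ fun π hπ => ?_
      obtain ⟨hp, hf, hsnd⟩ := hπ
      have hmass : ∃ p : EuclideanSpace ℝ (Fin d) × EuclideanSpace ℝ (Fin d),
          π {p} ≠ 0 ∧ (‖p.1 - p.2‖₊ : ℝ≥0∞) = (‖x - y‖₊ : ℝ≥0∞) := by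
        rcases lt_or_gt_of_ne hts with h | h
        · exact ⟨(y, x), coupling_mass x y hxy t s h π hf hsnd, hrev⟩
        · have h1t : (1:ℝ≥0∞) - t ≤ 1 := tsub_le_self
          have h1s : (1:ℝ≥0∞) - s ≤ 1 := tsub_le_self
          have hlt : (1:ℝ≥0∞) - t < 1 - s := by
            refine (ENNReal.cancel_of_ne one_ne_top).tsub_lt_tsub_iff_left_of_le
              (ENNReal.cancel_of_ne (ne_top_of_le_ne_top one_ne_top ht)) ht |>.mpr h
          have hf' : π.map Prod.fst = (1-t) • Measure.dirac y + (1-(1-t)) • Measure.dirac x := by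
            rw [hf, ENNReal.sub_sub_cancel one_ne_top ht, add_comm]
          have hs' : π.map Prod.snd = (1-s) • Measure.dirac y + (1-(1-s)) • Measure.dirac x := by
            rw [hsnd, ENNReal.sub_sub_cancel one_ne_top hs, add_comm]
          exact ⟨(x, y), coupling_mass y x (Ne.symm hxy) (1-t) (1-s) hlt π hf' hs', rfl⟩
      obtain ⟨p, hp0, hpnorm⟩ := hmass
      by_contra hlt
      push_neg at hlt
      have hae := ENNReal.ae_le_essSup (μ := π) (fun q => (‖q.1 - q.2‖₊ : ℝ≥0∞))
      rw [Filter.eventually_iff, mem_ae_iff] at hae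
      refine hp0 (measure_mono_null ?_ hae)
      intro q hq
      simp only [Set.mem_singleton_iff] at hq
      subst hq
      simp only [Set.mem_compl_iff, Set.mem_setOf_eq, not_le]
      rw [hpnorm]
      exact hlt
  rw [Winf, key]
  simp

/-- For `d ≥ 1`, `n ≥ 2`, `m ≥ 1`, and `Ω ⊆ ℝ^d` with nonempty interior,
no map `E : P_n(Ω) → ℝ^m` is bi-Lipschitz with respect to `W_∞`. -/
theorem no_biLipschitz_Winf (d n m : ℕ) (hd : 1 ≤ d) (hn : 2 ≤ n) (hm : 1 ≤ m)
    (Ω : Set (EuclideanSpace ℝ (Fin d))) (hΩ : (interior Ω).Nonempty)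
    (E : Measure (EuclideanSpace ℝ (Fin d)) → EuclideanSpace ℝ (Fin m)) :
    ¬ ∃ c C : ℝ, 0 < c ∧ c ≤ C ∧
      ∀ μ ν : Measure (EuclideanSpace ℝ (Fin d)), MemPn d n Ω μ → MemPn d n Ω ν →
        c * Winf d μ ν ≤ ‖E μ - E ν‖ ∧ ‖E μ - E ν‖ ≤ C * Winf d μ ν := by
  classical
  rintro ⟨c, C, hc, hcC, hE⟩
  obtain ⟨x, hx⟩ := hΩ
  obtain ⟨ε, hε, hball⟩ := Metric.isOpen_iff.mp isOpen_interior x hx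
  set u : EuclideanSpace ℝ (Fin d) := EuclideanSpace.single ⟨0, hd⟩ (1:ℝ) with hu
  set y : EuclideanSpace ℝ (Fin d) := x + (ε/2) • u with hy
  have hnu : ‖u‖ = 1 := by rw [hu, EuclideanSpace.norm_single]; norm_num
  have hyx : ‖y - x‖ = ε/2 := by
    rw [hy, add_sub_cancel_left, norm_smul, hnu, mul_one, Real.norm_eq_abs,
      abs_of_pos (by positivity)]
  have hxy : x ≠ y := by
    intro h
    rw [h, sub_self, norm_zero] at hyx
    linarith
  set r : ℝ := ‖x - y‖ with hr
  have hrpos : 0 < r := by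
    rw [hr, norm_sub_rev, hyx]; positivity
  have hyΩ : y ∈ Ω := interior_subset <| hball <| by
    rw [Metric.mem_ball, dist_eq_norm, hyx]; linarith
  have hxΩ : x ∈ Ω := interior_subset hx
  -- the family of measures
  set t : ℕ → ℝ≥0∞ := fun k => ((k : ℝ≥0∞) + 1)⁻¹ with htdef
  have ht1 : ∀ k, t k ≤ 1 := fun k => ENNReal.inv_le_one.mpr (self_le_add_left 1 _)
  have htmono : ∀ j k : ℕ, j < k → t k < t j := by
    intro j k h
    exact ENNReal.inv_lt_inv.mpr (by exact_mod_cast Nat.add_lt_add_right h 1)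
  have htne : ∀ j k : ℕ, j ≠ k → t j ≠ t k := by
    intro j k h
    rcases lt_or_gt_of_ne h with h' | h'
    · exact (htmono j k h').ne'
    · exact (htmono k j h').ne
  set μ : ℕ → Measure (EuclideanSpace ℝ (Fin d)) :=
    fun k => t k • Measure.dirac x + (1 - t k) • Measure.dirac y with hμdef
  have hmem : ∀ k, MemPn d n Ω (μ k) := by
    intro k
    refine ⟨pairMeasure_prob x y (t k) (ht1 k), insert x {y}, ?_, ?_, ?_⟩
    · exact le_trans (Finset.card_insert_le x {y}) (by simpa using hn)
    · intro z hz
      simp only [Finset.coe_insert, Finset.coe_singleton, Set.mem_insert_iff,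
        Set.mem_singleton_iff] at hz
      rcases hz with rfl | rfl
      · exact hxΩ
      · exact hyΩ
    · exact pairMeasure_null x y (t k)
        ((↑(insert x ({y} : Finset (EuclideanSpace ℝ (Fin d)))) :
          Set (EuclideanSpace ℝ (Fin d)))ᶜ) (by simp) (by simp)
  have hWinf : ∀ j k : ℕ, j ≠ k → Winf d (μ j) (μ k) = r := by
    intro j k hjk
    exact winf_eq x y hxy (t j) (t k) (ht1 j) (ht1 k) (htne j k hjk)
  -- the embedded points
  set f : ℕ → EuclideanSpace ℝ (Fin m) := fun k => E (μ k) with hf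
  have hsep : ∀ j k : ℕ, j ≠ k → c * r ≤ dist (f j) (f k) := by
    intro j k hjk
    rw [dist_eq_norm]
    have h := (hE (μ j) (μ k) (hmem j) (hmem k)).1
    rwa [hWinf j k hjk] at h
  have hbdd : ∀ k, f k ∈ Metric.closedBall (f 0) (C * r) := by
    intro k
    rcases eq_or_ne k 0 with rfl | h
    · exact Metric.mem_closedBall_self (mul_nonneg (hc.trans_le hcC).le hrpos.le)
    · have h2 := (hE (μ k) (μ 0) (hmem k) (hmem 0)).2
      rw [hWinf k 0 h] at h2
      rw [Metric.mem_closedBall, dist_eq_norm]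
      exact h2
  obtain ⟨a, -, φ, hφ, hconv⟩ :=
    (isCompact_closedBall (f 0) (C * r)).tendsto_subseq hbdd
  obtain ⟨N, hN⟩ := Metric.tendsto_atTop.mp hconv (c * r / 2) (by positivity)
  have h1 : dist (f (φ N)) a < c * r / 2 := hN N le_rfl
  have h2 : dist (f (φ (N + 1))) a < c * r / 2 := hN (N + 1) (Nat.le_succ N)
  have hne' : φ N ≠ φ (N + 1) := fun h => by
    have := hφ.injective h
    omega
  have hlow := hsep (φ N) (φ (N + 1)) hne'
  have htri := dist_triangle (f (φ N)) a (f (φ (N + 1)))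
  rw [dist_comm a (f (φ (N + 1)))] at htri
  linarith
end
end

section
/- Let d ≥ 1, n ≥ 2, m ≥ 1, let Ω ⊆ ℝ^d be an open ball centered at the origin, and let p ∈ [1,∞). Suppose E : P_n(Ω) → ℝ^m is homogeneous, i.e. E(α·μ) = α·E(μ) for every μ ∈ P_n(Ω) and every α ∈ [0,1] (so that α·μ ∈ P_n(Ω)). Then E is not bi-Lipschitz with respect to the p-Wasserstein distance W_p. -/
open MeasureTheory ENNReal Filter

noncomputable section

namespace NoBiLipAux

variable {d : ℕ}

/-- The two-point measure `(1-t)δ₀ + tδ_x`. -/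
def mu (d : ℕ) (t : ℝ) (x : EuclideanSpace ℝ (Fin d)) : Measure (EuclideanSpace ℝ (Fin d)) :=
  ENNReal.ofReal (1 - t) • Measure.dirac 0 + ENNReal.ofReal t • Measure.dirac x

lemma mu_prob {t : ℝ} (h0 : 0 ≤ t) (h1 : t ≤ 1) (x : EuclideanSpace ℝ (Fin d)) :
    IsProbabilityMeasure (mu d t x) := by
  constructor
  simp only [mu, Measure.add_apply, Measure.smul_apply, smul_eq_mul, measure_univ, mul_one]
  rw [← ENNReal.ofReal_add (by linarith) h0]
  norm_num

lemma mu_zero (x : EuclideanSpace ℝ (Fin d)) : mu d 0 x = Measure.dirac 0 := by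
  simp [mu]

lemma mu_pt_zero {t : ℝ} (h0 : 0 ≤ t) (h1 : t ≤ 1) :
    mu d t (0 : EuclideanSpace ℝ (Fin d)) = Measure.dirac 0 := by
  rw [mu, ← add_smul, ← ENNReal.ofReal_add (by linarith) h0]
  norm_num

lemma measurable_smul' (α : ℝ) : Measurable (fun x : EuclideanSpace ℝ (Fin d) => α • x) :=
  (continuous_const_smul α).measurable

lemma scale_mu (α t : ℝ) (x : EuclideanSpace ℝ (Fin d)) :
    scaleMeasure d α (mu d t x) = mu d t (α • x) := by
  rw [scaleMeasure, mu, Measure.map_add _ _ (measurable_smul' α),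
    Measure.map_smul, Measure.map_smul, Measure.map_dirac' (measurable_smul' α),
    Measure.map_dirac' (measurable_smul' α), smul_zero, mu]

lemma memPn_mu {n : ℕ} (hn : 2 ≤ n) {R t : ℝ} {x : EuclideanSpace ℝ (Fin d)}
    (h0 : 0 ≤ t) (h1 : t ≤ 1) (hR : 0 < R)
    (hx : x ∈ Metric.ball (0 : EuclideanSpace ℝ (Fin d)) R) :
    MemPn d n (Metric.ball (0 : EuclideanSpace ℝ (Fin d)) R) (mu d t x) := by
  classical
  refine ⟨mu_prob h0 h1 x, {0, x}, ?_, ?_, ?_⟩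
  · exact le_trans (Finset.card_insert_le _ _) (by simpa using hn)
  · intro z hz
    simp only [Finset.coe_insert, Finset.coe_singleton, Set.mem_insert_iff,
      Set.mem_singleton_iff] at hz
    rcases hz with rfl | rfl
    · exact Metric.mem_ball_self hR
    · exact hx
  · simp only [mu, Measure.add_apply, Measure.smul_apply, smul_eq_mul]
    rw [Measure.dirac_apply, Measure.dirac_apply]
    have h0m : (0 : EuclideanSpace ℝ (Fin d)) ∈ (↑({0, x} : Finset _) : Set _) := by simp
    have hxm : x ∈ (↑({0, x} : Finset _) : Set _) := by simp
    rw [Set.indicator_of_notMem (by simpa using h0m), Set.indicator_of_notMem (by simpa using hxm)]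
    simp

/-- Lower bound for the cost of any coupling of `mu s x` and `mu t y`. -/
lemma coupling_cost_ge {p : ℝ} (hp : 1 ≤ p) {s t : ℝ} (hs : 0 ≤ s) (hst : s ≤ t)
    (x y : EuclideanSpace ℝ (Fin d))
    {π : Measure (EuclideanSpace ℝ (Fin d) × EuclideanSpace ℝ (Fin d))}
    (hπ : IsCoupling π (mu d s x) (mu d t y)) :
    ENNReal.ofReal ((t - s) * ‖y‖ ^ p) ≤ ∫⁻ q, (‖q.1 - q.2‖₊ : ℝ≥0∞) ^ p ∂π := by
  obtain ⟨hprob, hfst, hsnd⟩ := hπ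
  have hp0 : (0 : ℝ) < p := by linarith
  have hν : ENNReal.ofReal t ≤ π (Prod.snd ⁻¹' {y}) := by
    rw [← Measure.map_apply measurable_snd (measurableSet_singleton y), hsnd]
    simp only [mu, Measure.add_apply, Measure.smul_apply, smul_eq_mul]
    calc ENNReal.ofReal t = ENNReal.ofReal t * Measure.dirac y {y} := by
          rw [Measure.dirac_apply_of_mem (Set.mem_singleton y), mul_one]
      _ ≤ _ := le_add_self
  have hμ : π (Prod.fst ⁻¹' ({(0 : EuclideanSpace ℝ (Fin d))}ᶜ)) ≤ ENNReal.ofReal s := by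
    rw [← Measure.map_apply measurable_fst (measurableSet_singleton
      (0 : EuclideanSpace ℝ (Fin d))).compl, hfst]
    simp only [mu, Measure.add_apply, Measure.smul_apply, smul_eq_mul]
    have h1 : Measure.dirac (0 : EuclideanSpace ℝ (Fin d)) ({(0 : EuclideanSpace ℝ (Fin d))}ᶜ) = 0 := by
      rw [Measure.dirac_apply, Set.indicator_of_notMem (by simp)]
    have h2 : Measure.dirac x ({(0 : EuclideanSpace ℝ (Fin d))}ᶜ) ≤ 1 := prob_le_one
    calc ENNReal.ofReal (1 - s) * Measure.dirac (0 : EuclideanSpace ℝ (Fin d)) {(0:EuclideanSpace ℝ (Fin d))}ᶜ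
          + ENNReal.ofReal s * Measure.dirac x {(0:EuclideanSpace ℝ (Fin d))}ᶜ
        ≤ ENNReal.ofReal (1 - s) * 0 + ENNReal.ofReal s * 1 :=
          add_le_add (mul_le_mul_right h1.le _) (mul_le_mul_right h2 _)
      _ = ENNReal.ofReal s := by simp
  have hsub : (Prod.snd ⁻¹' ({y} : Set (EuclideanSpace ℝ (Fin d)))) ⊆
      {((0 : EuclideanSpace ℝ (Fin d)), y)} ∪
        (Prod.fst ⁻¹' ({(0 : EuclideanSpace ℝ (Fin d))}ᶜ)) := by
    rintro ⟨a, b⟩ hb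
    simp only [Set.mem_preimage, Set.mem_singleton_iff] at hb
    subst hb
    by_cases ha : a = 0
    · subst ha; exact Or.inl rfl
    · exact Or.inr ha
  have hA : ENNReal.ofReal (t - s) ≤ π {((0 : EuclideanSpace ℝ (Fin d)), y)} := by
    rw [ENNReal.ofReal_sub _ hs]
    rw [tsub_le_iff_right]
    calc ENNReal.ofReal t ≤ π (Prod.snd ⁻¹' {y}) := hν
      _ ≤ π ({((0 : EuclideanSpace ℝ (Fin d)), y)} ∪
            (Prod.fst ⁻¹' ({(0 : EuclideanSpace ℝ (Fin d))}ᶜ))) := measure_mono hsub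
      _ ≤ π {((0 : EuclideanSpace ℝ (Fin d)), y)} +
            π (Prod.fst ⁻¹' ({(0 : EuclideanSpace ℝ (Fin d))}ᶜ)) := measure_union_le _ _
      _ ≤ _ := add_le_add_right hμ _
  calc ENNReal.ofReal ((t - s) * ‖y‖ ^ p)
      = (‖y‖₊ : ℝ≥0∞) ^ p * ENNReal.ofReal (t - s) := by
        rw [ENNReal.ofReal_mul (by linarith), ← ENNReal.ofReal_coe_nnreal, coe_nnnorm,
          ENNReal.ofReal_rpow_of_nonneg (norm_nonneg y) hp0.le, mul_comm]
    _ ≤ (‖y‖₊ : ℝ≥0∞) ^ p * π {((0 : EuclideanSpace ℝ (Fin d)), y)} := mul_le_mul_right hA _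
    _ = ∫⁻ q in {((0 : EuclideanSpace ℝ (Fin d)), y)}, (‖q.1 - q.2‖₊ : ℝ≥0∞) ^ p ∂π := by
        rw [lintegral_singleton]
        simp
    _ ≤ ∫⁻ q, (‖q.1 - q.2‖₊ : ℝ≥0∞) ^ p ∂π := setLIntegral_le_lintegral _ _

/-- The explicit coupling of `mu s x` and `mu t y`. -/
def kappa (d : ℕ) (s t : ℝ) (x y : EuclideanSpace ℝ (Fin d)) :
    Measure (EuclideanSpace ℝ (Fin d) × EuclideanSpace ℝ (Fin d)) :=
  ENNReal.ofReal (1 - t) • Measure.dirac (0, 0) + ENNReal.ofReal (t - s) • Measure.dirac (0, y)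
    + ENNReal.ofReal s • Measure.dirac (x, y)

lemma kappa_isCoupling {s t : ℝ} (hs : 0 ≤ s) (hst : s ≤ t) (ht : t ≤ 1)
    (x y : EuclideanSpace ℝ (Fin d)) : IsCoupling (kappa d s t x y) (mu d s x) (mu d t y) := by
  refine ⟨⟨?_⟩, ?_, ?_⟩
  · simp only [kappa, Measure.add_apply, Measure.smul_apply, smul_eq_mul, measure_univ, mul_one]
    rw [← ENNReal.ofReal_add (by linarith) (by linarith), ← ENNReal.ofReal_add (by linarith) hs]
    norm_num
  · rw [kappa, Measure.map_add _ _ measurable_fst, Measure.map_add _ _ measurable_fst,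
      Measure.map_smul, Measure.map_smul, Measure.map_smul,
      Measure.map_dirac' measurable_fst, Measure.map_dirac' measurable_fst,
      Measure.map_dirac' measurable_fst]
    show ENNReal.ofReal (1 - t) • Measure.dirac 0 + ENNReal.ofReal (t - s) • Measure.dirac 0
        + ENNReal.ofReal s • Measure.dirac x = mu d s x
    rw [← add_smul, ← ENNReal.ofReal_add (by linarith) (by linarith)]
    have : 1 - t + (t - s) = 1 - s := by ring
    rw [this, mu]
  · rw [kappa, Measure.map_add _ _ measurable_snd, Measure.map_add _ _ measurable_snd,
      Measure.map_smul, Measure.map_smul, Measure.map_smul,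
      Measure.map_dirac' measurable_snd, Measure.map_dirac' measurable_snd,
      Measure.map_dirac' measurable_snd]
    show ENNReal.ofReal (1 - t) • Measure.dirac 0 + ENNReal.ofReal (t - s) • Measure.dirac y
        + ENNReal.ofReal s • Measure.dirac y = mu d t y
    rw [add_assoc, ← add_smul, ← ENNReal.ofReal_add (by linarith) hs]
    have : t - s + s = t := by ring
    rw [this, mu]

lemma kappa_cost {p : ℝ} (hp : 1 ≤ p) (s t : ℝ) (x y : EuclideanSpace ℝ (Fin d)) :
    ∫⁻ q, (‖q.1 - q.2‖₊ : ℝ≥0∞) ^ p ∂(kappa d s t x y)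
      = ENNReal.ofReal (t - s) * (‖y‖₊ : ℝ≥0∞) ^ p
        + ENNReal.ofReal s * (‖x - y‖₊ : ℝ≥0∞) ^ p := by
  have hp0 : (0 : ℝ) < p := by linarith
  rw [kappa, lintegral_add_measure, lintegral_add_measure, lintegral_smul_measure,
    lintegral_smul_measure, lintegral_smul_measure, lintegral_dirac, lintegral_dirac,
    lintegral_dirac]
  simp only [sub_zero, zero_sub, nnnorm_neg, sub_self, nnnorm_zero, ENNReal.coe_zero]
  rw [ENNReal.zero_rpow_of_pos hp0]
  ring

end NoBiLipAux

namespace NoBiLipAux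

variable {d : ℕ}

lemma Wp_ge {p : ℝ} (hp : 1 ≤ p) {s t : ℝ} (hs : 0 ≤ s) (hst : s ≤ t) (ht : t ≤ 1)
    (x y : EuclideanSpace ℝ (Fin d)) :
    (t - s) ^ (1 / p) * ‖y‖ ≤ Wp d p (mu d s x) (mu d t y) := by
  have hp0 : (0 : ℝ) < p := by linarith
  have hA0 : (0 : ℝ) ≤ (t - s) * ‖y‖ ^ p := by
    apply mul_nonneg (by linarith) (Real.rpow_nonneg (norm_nonneg y) p)
  set I := ⨅ π ∈ {π : Measure (EuclideanSpace ℝ (Fin d) × EuclideanSpace ℝ (Fin d)) |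
      IsCoupling π (mu d s x) (mu d t y)}, ∫⁻ q, (‖q.1 - q.2‖₊ : ℝ≥0∞) ^ p ∂π with hI
  have hIge : ENNReal.ofReal ((t - s) * ‖y‖ ^ p) ≤ I :=
    le_iInf₂ fun π hπ => coupling_cost_ge hp hs hst x y hπ
  have hIle : I ≤ ∫⁻ q, (‖q.1 - q.2‖₊ : ℝ≥0∞) ^ p ∂(kappa d s t x y) := by
    rw [hI]
    exact iInf_le_of_le (kappa d s t x y)
      (iInf_le_of_le (kappa_isCoupling hs hst ht x y) le_rfl)
  have hItop : I ≠ ⊤ := by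
    refine ne_top_of_le_ne_top ?_ hIle
    rw [kappa_cost hp]
    exact ENNReal.add_ne_top.2 ⟨ENNReal.mul_ne_top ENNReal.ofReal_ne_top
        (ENNReal.rpow_ne_top_of_nonneg hp0.le ENNReal.coe_ne_top),
      ENNReal.mul_ne_top ENNReal.ofReal_ne_top
        (ENNReal.rpow_ne_top_of_nonneg hp0.le ENNReal.coe_ne_top)⟩
  have h1 : ENNReal.ofReal ((t - s) * ‖y‖ ^ p) ^ (1 / p) ≤ I ^ (1 / p) :=
    ENNReal.rpow_le_rpow hIge (by positivity)
  have h2 : I ^ (1 / p) ≠ ⊤ := ENNReal.rpow_ne_top_of_nonneg (by positivity) hItop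
  have h3 := ENNReal.toReal_mono h2 h1
  rw [ENNReal.ofReal_rpow_of_nonneg hA0 (by positivity),
    ENNReal.toReal_ofReal (Real.rpow_nonneg hA0 _)] at h3
  calc (t - s) ^ (1 / p) * ‖y‖
      = ((t - s) * ‖y‖ ^ p) ^ (1 / p) := by
        rw [Real.mul_rpow (by linarith) (Real.rpow_nonneg (norm_nonneg y) p),
          ← Real.rpow_mul (norm_nonneg y), mul_one_div_cancel hp0.ne', Real.rpow_one]
    _ ≤ (I ^ (1 / p)).toReal := h3
    _ = Wp d p (mu d s x) (mu d t y) := by rw [Wp, ← hI]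

lemma Wp_le_dirac {p : ℝ} (hp : 1 ≤ p) {t : ℝ} (h0 : 0 ≤ t) (h1 : t ≤ 1)
    (x : EuclideanSpace ℝ (Fin d)) :
    Wp d p (mu d t x) (Measure.dirac 0) ≤ t ^ (1 / p) * ‖x‖ := by
  have hp0 : (0 : ℝ) < p := by linarith
  set I := ⨅ π ∈ {π : Measure (EuclideanSpace ℝ (Fin d) × EuclideanSpace ℝ (Fin d)) |
      IsCoupling π (mu d t x) (Measure.dirac 0)}, ∫⁻ q, (‖q.1 - q.2‖₊ : ℝ≥0∞) ^ p ∂π with hI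
  have hcoup : IsCoupling (kappa d t 1 x 0) (mu d t x) (Measure.dirac 0) := by
    have h := kappa_isCoupling h0 h1 le_rfl x (0 : EuclideanSpace ℝ (Fin d))
    rwa [mu_pt_zero (by linarith) le_rfl] at h
  have hIle : I ≤ ∫⁻ q, (‖q.1 - q.2‖₊ : ℝ≥0∞) ^ p ∂(kappa d t 1 x 0) := by
    rw [hI]
    exact iInf_le_of_le (kappa d t 1 x 0) (iInf_le_of_le hcoup le_rfl)
  have hcost : ∫⁻ q, (‖q.1 - q.2‖₊ : ℝ≥0∞) ^ p ∂(kappa d t 1 x 0)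
      = ENNReal.ofReal (t * ‖x‖ ^ p) := by
    rw [kappa_cost hp]
    simp only [nnnorm_zero, ENNReal.coe_zero, ENNReal.zero_rpow_of_pos hp0, mul_zero, zero_add,
      sub_zero]
    rw [ENNReal.ofReal_mul h0, ← ENNReal.ofReal_coe_nnreal, coe_nnnorm,
      ENNReal.ofReal_rpow_of_nonneg (norm_nonneg x) hp0.le]
  rw [hcost] at hIle
  have h1' : I ^ (1 / p) ≤ ENNReal.ofReal (t * ‖x‖ ^ p) ^ (1 / p) :=
    ENNReal.rpow_le_rpow hIle (by positivity)
  have h2 : ENNReal.ofReal (t * ‖x‖ ^ p) ^ (1 / p) ≠ ⊤ :=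
    ENNReal.rpow_ne_top_of_nonneg (by positivity) ENNReal.ofReal_ne_top
  have h3 := ENNReal.toReal_mono h2 h1'
  have hA0 : (0 : ℝ) ≤ t * ‖x‖ ^ p := mul_nonneg h0 (Real.rpow_nonneg (norm_nonneg x) p)
  rw [ENNReal.ofReal_rpow_of_nonneg hA0 (by positivity),
    ENNReal.toReal_ofReal (Real.rpow_nonneg hA0 _)] at h3
  calc Wp d p (mu d t x) (Measure.dirac 0) = (I ^ (1 / p)).toReal := by rw [Wp, ← hI]
    _ ≤ (t * ‖x‖ ^ p) ^ (1 / p) := h3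
    _ = t ^ (1 / p) * ‖x‖ := by
        rw [Real.mul_rpow h0 (Real.rpow_nonneg (norm_nonneg x) p),
          ← Real.rpow_mul (norm_nonneg x), mul_one_div_cancel hp0.ne', Real.rpow_one]

end NoBiLipAux

/-- For `Ω` an open ball centered at the origin and `p ∈ [1,∞)`, no
homogeneous map `E : P_n(Ω) → ℝ^m` is bi-Lipschitz with respect to `W_p`. -/
theorem no_biLipschitz_Wp_homogeneous (d n m : ℕ) (hd : 1 ≤ d) (hn : 2 ≤ n) (hm : 1 ≤ m)
    (Ω : Set (EuclideanSpace ℝ (Fin d)))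
    (hΩ : ∃ R : ℝ, 0 < R ∧ Ω = Metric.ball (0 : EuclideanSpace ℝ (Fin d)) R)
    (p : ℝ) (hp : 1 ≤ p)
    (E : Measure (EuclideanSpace ℝ (Fin d)) → EuclideanSpace ℝ (Fin m))
    (hhom : ∀ μ : Measure (EuclideanSpace ℝ (Fin d)), MemPn d n Ω μ →
      ∀ α : ℝ, 0 ≤ α → α ≤ 1 → E (scaleMeasure d α μ) = α • E μ) :
    ¬ ∃ c C : ℝ, 0 < c ∧ c ≤ C ∧
      ∀ μ ν : Measure (EuclideanSpace ℝ (Fin d)), MemPn d n Ω μ → MemPn d n Ω ν →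
        c * Wp d p μ ν ≤ ‖E μ - E ν‖ ∧ ‖E μ - E ν‖ ≤ C * Wp d p μ ν := by
  rintro ⟨c, C, hc, hcC, hbd⟩
  obtain ⟨R, hR, rfl⟩ := hΩ
  have hC : 0 < C := lt_of_lt_of_le hc hcC
  have hp0 : (0 : ℝ) < p := by linarith
  -- the base point u of norm R/2
  set u : EuclideanSpace ℝ (Fin d) :=
    (R / 2) • EuclideanSpace.single (⟨0, hd⟩ : Fin d) (1 : ℝ) with hu
  have hunorm : ‖u‖ = R / 2 := by
    rw [hu, norm_smul, EuclideanSpace.norm_single, Real.norm_eq_abs, Real.norm_eq_abs,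
      abs_of_pos (by linarith : (0:ℝ) < R / 2), abs_one, mul_one]
  have huball : ∀ r : ℝ, 0 ≤ r → r ≤ 1 →
      r • u ∈ Metric.ball (0 : EuclideanSpace ℝ (Fin d)) R := by
    intro r h0 h1
    rw [Metric.mem_ball, dist_zero_right, norm_smul, Real.norm_eq_abs, hunorm,
      abs_of_nonneg h0]
    nlinarith
  have hub : u ∈ Metric.ball (0 : EuclideanSpace ℝ (Fin d)) R := by
    have := huball 1 zero_le_one le_rfl; rwa [one_smul] at this
  have hmem : ∀ {t r : ℝ}, 0 ≤ t → t ≤ 1 → 0 ≤ r → r ≤ 1 →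
      MemPn d n (Metric.ball (0 : EuclideanSpace ℝ (Fin d)) R) (NoBiLipAux.mu d t (r • u)) :=
    fun h0 h1 hr0 hr1 => NoBiLipAux.memPn_mu hn h0 h1 hR (huball _ hr0 hr1)
  have hmemu : ∀ {t : ℝ}, 0 ≤ t → t ≤ 1 →
      MemPn d n (Metric.ball (0 : EuclideanSpace ℝ (Fin d)) R) (NoBiLipAux.mu d t u) :=
    fun h0 h1 => NoBiLipAux.memPn_mu hn h0 h1 hR hub
  have hdmem : MemPn d n (Metric.ball (0 : EuclideanSpace ℝ (Fin d)) R) (Measure.dirac 0) := by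
    have := hmemu (le_refl (0:ℝ)) zero_le_one
    rwa [NoBiLipAux.mu_zero] at this
  have hE0 : E (Measure.dirac 0) = 0 := by
    have h := hhom _ (hmemu zero_le_one le_rfl) 0 le_rfl zero_le_one
    rw [NoBiLipAux.scale_mu, zero_smul, NoBiLipAux.mu_pt_zero zero_le_one le_rfl,
      zero_smul] at h
    exact h
  have hscale : ∀ t r : ℝ, 0 ≤ t → t ≤ 1 → 0 ≤ r → r ≤ 1 →
      E (NoBiLipAux.mu d t (r • u)) = r • E (NoBiLipAux.mu d t u) := by
    intro t r h0 h1 hr0 hr1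
    have h := hhom _ (hmemu h0 h1) r hr0 hr1
    rw [NoBiLipAux.scale_mu] at h
    exact h
  -- the sequence of scales
  set T : ℕ → ℝ := fun k => (1 / 2 : ℝ) ^ (k + 1) with hT
  have hT0 : ∀ k, 0 < T k := fun k => pow_pos (by norm_num) _
  have hT1 : ∀ k, T k ≤ 1 := fun k => pow_le_one₀ (by norm_num) (by norm_num)
  have hThalf : ∀ k l, k < l → T l ≤ T k / 2 := by
    intro k l hkl
    have h1 : T l ≤ (1 / 2 : ℝ) ^ (k + 2) := by
      apply pow_le_pow_of_le_one (by norm_num) (by norm_num)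
      omega
    have h2 : (1 / 2 : ℝ) ^ (k + 2) = T k / 2 := by rw [hT]; ring
    linarith
  set a : ℕ → EuclideanSpace ℝ (Fin m) := fun k => E (NoBiLipAux.mu d (T k) u) with ha
  set A : ℕ → ℝ := fun k => ‖a k‖ with hA
  have hAup : ∀ k, A k ≤ C * ((T k) ^ (1 / p) * (R / 2)) := by
    intro k
    have hb := (hbd _ _ (hmemu (hT0 k).le (hT1 k)) hdmem).2
    rw [hE0, sub_zero] at hb
    refine le_trans hb ?_
    refine mul_le_mul_of_nonneg_left (le_trans
      (NoBiLipAux.Wp_le_dirac hp (hT0 k).le (hT1 k) u) (le_of_eq ?_)) hC.le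
    rw [hunorm]
  have hAlow : ∀ k, c * ((T k) ^ (1 / p) * (R / 2)) ≤ A k := by
    intro k
    have hb := (hbd _ _ hdmem (hmemu (hT0 k).le (hT1 k))).1
    rw [hE0, zero_sub, norm_neg] at hb
    refine le_trans ?_ hb
    refine mul_le_mul_of_nonneg_left ?_ hc.le
    have h := NoBiLipAux.Wp_ge hp (le_refl (0:ℝ)) (hT0 k).le (hT1 k)
      (0 : EuclideanSpace ℝ (Fin d)) u
    rw [NoBiLipAux.mu_zero, sub_zero, hunorm] at h
    exact h
  have hApos : ∀ k, 0 < A k := by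
    intro k
    refine lt_of_lt_of_le ?_ (hAlow k)
    have h1 : 0 < (T k) ^ (1 / p) := Real.rpow_pos_of_pos (hT0 k) _
    have h2 : (0:ℝ) < R / 2 := by linarith
    positivity
  set b : ℕ → EuclideanSpace ℝ (Fin m) := fun k => (A k)⁻¹ • a k with hbdef
  have hbnorm : ∀ k, ‖b k‖ = 1 := by
    intro k
    rw [hbdef]
    simp only
    rw [norm_smul, Real.norm_eq_abs, abs_of_pos (inv_pos.2 (hApos k))]
    exact inv_mul_cancel₀ (hApos k).ne'
  set δ : ℝ := c / (2 * C) with hδdef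
  have hδ : 0 < δ := div_pos hc (by linarith)
  have hsep : ∀ k l, k < l → δ ≤ ‖b l - b k‖ := by
    intro k l hkl
    set M : ℝ := max (A k) (A l) with hM
    have hM0 : 0 < M := lt_max_of_lt_left (hApos k)
    set rk : ℝ := A l / M with hrk
    set rl : ℝ := A k / M with hrl
    have hrk0 : 0 ≤ rk := div_nonneg (hApos l).le hM0.le
    have hrk1 : rk ≤ 1 := div_le_one_of_le₀ (le_max_right _ _) hM0.le
    have hrl0 : 0 ≤ rl := div_nonneg (hApos k).le hM0.le
    have hrl1 : rl ≤ 1 := div_le_one_of_le₀ (le_max_left _ _) hM0.le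
    have hEk : E (NoBiLipAux.mu d (T k) (rk • u)) = rk • a k :=
      hscale (T k) rk (hT0 k).le (hT1 k) hrk0 hrk1
    have hEl : E (NoBiLipAux.mu d (T l) (rl • u)) = rl • a l :=
      hscale (T l) rl (hT0 l).le (hT1 l) hrl0 hrl1
    have hTlk : T l ≤ T k := by
      have := hThalf k l hkl
      have := hT0 k
      linarith
    have hbdkl := (hbd _ _ (hmem (hT0 l).le (hT1 l) hrl0 hrl1)
      (hmem (hT0 k).le (hT1 k) hrk0 hrk1)).1
    rw [hEk, hEl] at hbdkl
    have hW := NoBiLipAux.Wp_ge hp (hT0 l).le hTlk (hT1 k) (rl • u) (rk • u)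
    have hnrk : ‖rk • u‖ = rk * (R / 2) := by
      rw [norm_smul, Real.norm_eq_abs, abs_of_nonneg hrk0, hunorm]
    rw [hnrk] at hW
    -- rewrite the E-difference via b
    have hMne : M ≠ 0 := hM0.ne'
    have hAkne : A k ≠ 0 := (hApos k).ne'
    have hAlne : A l ≠ 0 := (hApos l).ne'
    have hsc1 : (A k * A l / M) * (A l)⁻¹ = rl := by
      rw [hrl]; field_simp
    have hsc2 : (A k * A l / M) * (A k)⁻¹ = rk := by
      rw [hrk]; field_simp
    have e1 : rl • a l = (A k * A l / M) • b l := by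
      rw [hbdef]
      simp only
      rw [smul_smul, hsc1]
    have e2 : rk • a k = (A k * A l / M) • b k := by
      rw [hbdef]
      simp only
      rw [smul_smul, hsc2]
    have hdiff : rl • a l - rk • a k = (A k * A l / M) • (b l - b k) := by
      rw [smul_sub, e1, e2]
    rw [hdiff, norm_smul, Real.norm_eq_abs,
      abs_of_pos (div_pos (mul_pos (hApos k) (hApos l)) hM0)] at hbdkl
    -- key scalar inequality
    have f1 : (T k) ^ (1 / p) * (1 / 2) ≤ (T k - T l) ^ (1 / p) := by
      have g1 : (T k / 2 : ℝ) ^ (1 / p) ≤ (T k - T l) ^ (1 / p) := by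
        apply Real.rpow_le_rpow (by linarith [hT0 k]) (by linarith [hThalf k l hkl]) (by positivity)
      have g2 : (T k / 2 : ℝ) ^ (1 / p) = (T k) ^ (1 / p) * (1 / 2 : ℝ) ^ (1 / p) := by
        rw [div_eq_mul_one_div (T k) 2, Real.mul_rpow (hT0 k).le (by norm_num)]
      have g3 : (1 / 2 : ℝ) ^ (1 : ℝ) ≤ (1 / 2 : ℝ) ^ (1 / p) :=
        Real.rpow_le_rpow_of_exponent_ge (by norm_num) (by norm_num)
          (by rw [div_le_one hp0]; linarith)
      rw [Real.rpow_one] at g3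
      have h4 : 0 < (T k) ^ (1 / p) := Real.rpow_pos_of_pos (hT0 k) _
      calc (T k) ^ (1 / p) * (1 / 2) ≤ (T k) ^ (1 / p) * ((1 / 2 : ℝ) ^ (1 / p)) :=
            mul_le_mul_of_nonneg_left g3 h4.le
        _ = (T k / 2 : ℝ) ^ (1 / p) := g2.symm
        _ ≤ (T k - T l) ^ (1 / p) := g1
    have f2 := hAup k
    have hkey : δ * (A k * A l / M) ≤ c * ((T k - T l) ^ (1 / p) * (rk * (R / 2))) := by
      have hδC : δ * C = c / 2 := by
        rw [hδdef]; field_simp [hC.ne']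
      have step : δ * A k ≤ c * ((T k - T l) ^ (1 / p) * (R / 2)) := by
        have s1 : δ * A k ≤ δ * (C * ((T k) ^ (1 / p) * (R / 2))) :=
          mul_le_mul_of_nonneg_left f2 hδ.le
        have s2 : δ * (C * ((T k) ^ (1 / p) * (R / 2)))
            = (c / 2) * ((T k) ^ (1 / p) * (R / 2)) := by
          rw [← mul_assoc, hδC]
        have s3 : (c / 2) * ((T k) ^ (1 / p) * (R / 2))
            ≤ c * ((T k - T l) ^ (1 / p) * (R / 2)) := by
          have hcr : (0:ℝ) ≤ c * (R / 2) := by positivity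
          calc (c / 2) * ((T k) ^ (1 / p) * (R / 2))
              = (c * (R / 2)) * ((T k) ^ (1 / p) * (1 / 2)) := by ring
            _ ≤ (c * (R / 2)) * ((T k - T l) ^ (1 / p)) :=
                mul_le_mul_of_nonneg_left f1 hcr
            _ = c * ((T k - T l) ^ (1 / p) * (R / 2)) := by ring
        linarith
      have : δ * (A k * A l / M) = (δ * A k) * (A l / M) := by ring
      rw [this, hrk]
      have h5 : 0 ≤ A l / M := div_nonneg (hApos l).le hM0.le
      calc (δ * A k) * (A l / M)
          ≤ (c * ((T k - T l) ^ (1 / p) * (R / 2))) * (A l / M) :=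
            mul_le_mul_of_nonneg_right step h5
        _ = c * ((T k - T l) ^ (1 / p) * (A l / M * (R / 2))) := by ring
    have hchain : δ * (A k * A l / M) ≤ (A k * A l / M) * ‖b l - b k‖ := by
      calc δ * (A k * A l / M) ≤ c * ((T k - T l) ^ (1 / p) * (rk * (R / 2))) := hkey
        _ ≤ c * Wp d p (NoBiLipAux.mu d (T l) (rl • u)) (NoBiLipAux.mu d (T k) (rk • u)) := by
            refine mul_le_mul_of_nonneg_left ?_ hc.le
            calc (T k - T l) ^ (1 / p) * (rk * (R / 2))
                = (T k - T l) ^ (1 / p) * (rk * (R / 2)) := rfl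
              _ ≤ _ := hW
        _ ≤ (A k * A l / M) * ‖b l - b k‖ := hbdkl
    have hP : (0:ℝ) < A k * A l / M := div_pos (mul_pos (hApos k) (hApos l)) hM0
    exact (mul_le_mul_iff_right₀ hP).mp
      (by linarith [hchain] : A k * A l / M * δ ≤ A k * A l / M * ‖b l - b k‖)
  -- compactness of the sphere gives a contradiction
  have hmemS : ∀ k, b k ∈ Metric.sphere (0 : EuclideanSpace ℝ (Fin m)) 1 := by
    intro k
    rw [Metric.mem_sphere, dist_zero_right]
    exact hbnorm k
  obtain ⟨x0, -, φ, hφ, hconv⟩ :=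
    (isCompact_sphere (0 : EuclideanSpace ℝ (Fin m)) 1).tendsto_subseq hmemS
  have hcs : CauchySeq (fun k => b (φ k)) := hconv.cauchySeq
  rw [Metric.cauchySeq_iff] at hcs
  obtain ⟨N, hN⟩ := hcs δ hδ
  have h2 := hN (N + 1) (by omega) N (by omega)
  have hlt : φ N < φ (N + 1) := hφ (by omega)
  have h3 := hsep (φ N) (φ (N + 1)) hlt
  rw [dist_eq_norm] at h2
  linarith
end
end

section
/- Let d ≥ 1, n ≥ 2, m ≥ 1, and let Ω ⊆ ℝ^d be an open ball centered at the origin. Suppose E : P_n(Ω) → ℝ^m is homogeneous, i.e. E(α·μ) = α·E(μ) for every μ ∈ P_n(Ω) and every α ∈ [0,1]. Then E is not bi-Lipschitz with respect to the ∞-Wasserstein distance W_∞. -/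
open MeasureTheory ENNReal Filter

noncomputable section

open Set in
section
open Set

namespace NoBiLip

variable {d : ℕ}

def mu (x : EuclideanSpace ℝ (Fin d)) (e : ℝ≥0∞) : Measure (EuclideanSpace ℝ (Fin d)) :=
  (1 - e) • Measure.dirac 0 + e • Measure.dirac x

lemma mu_apply (x : EuclideanSpace ℝ (Fin d)) (e : ℝ≥0∞) {s : Set (EuclideanSpace ℝ (Fin d))}
    (hs : MeasurableSet s) :
    mu x e s = (1 - e) * s.indicator 1 0 + e * s.indicator 1 x := by
  simp [mu, Measure.dirac_apply' _ hs]

lemma mu_prob (x : EuclideanSpace ℝ (Fin d)) {e : ℝ≥0∞} (he : e ≤ 1) :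
    IsProbabilityMeasure (mu x e) := by
  constructor
  rw [mu_apply x e MeasurableSet.univ]
  simp [tsub_add_cancel_of_le he]

lemma mu_compl (x : EuclideanSpace ℝ (Fin d)) (e : ℝ≥0∞) :
    mu x e ({0, x}ᶜ : Set (EuclideanSpace ℝ (Fin d))) = 0 := by
  rw [mu_apply x e (by measurability)]
  simp

lemma mu_zero (x : EuclideanSpace ℝ (Fin d)) (hx : x ≠ 0) (e : ℝ≥0∞) :
    mu x e ({0} : Set (EuclideanSpace ℝ (Fin d))) = 1 - e := by
  rw [mu_apply x e (measurableSet_singleton 0)]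
  simp [hx]

lemma marg_fst {π : Measure (EuclideanSpace ℝ (Fin d) × EuclideanSpace ℝ (Fin d))}
    {μ ν : Measure (EuclideanSpace ℝ (Fin d))} (h : IsCoupling π μ ν)
    {s : Set (EuclideanSpace ℝ (Fin d))} (hs : MeasurableSet s) :
    π (Prod.fst ⁻¹' s) = μ s := by
  rw [← h.2.1, Measure.map_apply measurable_fst hs]

lemma marg_snd {π : Measure (EuclideanSpace ℝ (Fin d) × EuclideanSpace ℝ (Fin d))}
    {μ ν : Measure (EuclideanSpace ℝ (Fin d))} (h : IsCoupling π μ ν)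
    {s : Set (EuclideanSpace ℝ (Fin d))} (hs : MeasurableSet s) :
    π (Prod.snd ⁻¹' s) = ν s := by
  rw [← h.2.2, Measure.map_apply measurable_snd hs]

lemma coupling_null {π : Measure (EuclideanSpace ℝ (Fin d) × EuclideanSpace ℝ (Fin d))}
    {μ ν : Measure (EuclideanSpace ℝ (Fin d))} (h : IsCoupling π μ ν)
    {A : Set (EuclideanSpace ℝ (Fin d))} (hA : MeasurableSet A)
    (hμ : μ Aᶜ = 0) (hν : ν Aᶜ = 0) : π ((A ×ˢ A)ᶜ) = 0 := by
  have hsub : (A ×ˢ A)ᶜ ⊆ (Prod.fst ⁻¹' Aᶜ) ∪ (Prod.snd ⁻¹' Aᶜ) := by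
    intro q hq
    simp only [mem_compl_iff, mem_prod, not_and_or] at hq
    simpa using hq
  refine le_antisymm ?_ zero_le
  calc π ((A ×ˢ A)ᶜ) ≤ π (Prod.fst ⁻¹' Aᶜ) + π (Prod.snd ⁻¹' Aᶜ) :=
        (measure_mono hsub).trans (measure_union_le _ _)
    _ = 0 := by rw [marg_fst h hA.compl, marg_snd h hA.compl, hμ, hν, add_zero]

lemma winf_eq (x : EuclideanSpace ℝ (Fin d)) (hx : x ≠ 0) {e e' : ℝ≥0∞}
    (he : e ≤ 1) (he' : e' ≤ 1) (hne : e ≠ e') :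
    Winf d (mu x e) (mu x e') = ‖x‖ := by
  set A : Set (EuclideanSpace ℝ (Fin d)) := {0, x} with hA_def
  have hA : MeasurableSet A := by measurability
  set f : EuclideanSpace ℝ (Fin d) × EuclideanSpace ℝ (Fin d) → ℝ≥0∞ :=
    fun q => (‖q.1 - q.2‖₊ : ℝ≥0∞) with hf_def
  haveI h1 : IsProbabilityMeasure (mu x e) := mu_prob x he
  haveI h2 : IsProbabilityMeasure (mu x e') := mu_prob x he'
  -- the product coupling
  set π₀ := (mu x e).prod (mu x e') with hπ₀_def
  have hπ₀ : IsCoupling π₀ (mu x e) (mu x e') := by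
    refine ⟨by infer_instance, ?_, ?_⟩
    · rw [Measure.map_fst_prod]; simp
    · rw [Measure.map_snd_prod]; simp
  -- upper bound on its essSup
  have hess₀ : essSup f π₀ ≤ (‖x‖₊ : ℝ≥0∞) := by
    apply essSup_le_of_ae_le (hfbdd := by isBoundedDefault)
    have h0 := coupling_null hπ₀ hA (mu_compl x e) (mu_compl x e')
    have hae : ∀ᵐ q ∂π₀, q ∈ A ×ˢ A := by
      rw [ae_iff]
      exact measure_mono_null (fun q hq => hq) h0
    filter_upwards [hae] with q hq
    have hq1 : q.1 = 0 ∨ q.1 = x := by simpa [hA_def] using hq.1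
    have hq2 : q.2 = 0 ∨ q.2 = x := by simpa [hA_def] using hq.2
    rcases hq1 with h1' | h1' <;> rcases hq2 with h2' | h2' <;>
      simp [hf_def, h1', h2', sub_self, zero_sub, sub_zero, nnnorm_neg]
  -- lower bound on essSup of any coupling
  have hlow : ∀ π ∈ {π : Measure (EuclideanSpace ℝ (Fin d) × EuclideanSpace ℝ (Fin d)) |
      IsCoupling π (mu x e) (mu x e')}, (‖x‖₊ : ℝ≥0∞) ≤ essSup f π := by
    intro π hπ
    by_contra hlt
    push_neg at hlt
    have hG : π {q | (‖x‖₊ : ℝ≥0∞) ≤ f q} = 0 := by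
      have hnull : π {q | ¬ f q ≤ essSup f π} = 0 := by
        simpa [ae_iff] using ae_le_essSup (μ := π) f
      refine measure_mono_null ?_ hnull
      intro q hq
      exact fun h => absurd (le_trans hq h) (not_le.mpr hlt)
    set B : Set (EuclideanSpace ℝ (Fin d) × EuclideanSpace ℝ (Fin d)) :=
      ({0} ×ˢ {x}) ∪ ({x} ×ˢ {0}) with hB_def
    have hBG : B ⊆ {q | (‖x‖₊ : ℝ≥0∞) ≤ f q} := by
      intro q hq
      rcases hq with hq | hq <;>
      · obtain ⟨hq1, hq2⟩ := hq
        simp only [mem_singleton_iff] at hq1 hq2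
        simp [hf_def, mem_setOf_eq, hq1, hq2, zero_sub, sub_zero, nnnorm_neg]
    have hπB : π B = 0 := measure_mono_null hBG hG
    set D : Set (EuclideanSpace ℝ (Fin d) × EuclideanSpace ℝ (Fin d)) :=
      {((0 : EuclideanSpace ℝ (Fin d)), (0 : EuclideanSpace ℝ (Fin d))), (x, x)} with hD_def
    have hDc : π Dᶜ = 0 := by
      have hsub : Dᶜ ⊆ (A ×ˢ A)ᶜ ∪ B := by
        intro q hq
        by_cases hmem : q ∈ A ×ˢ A
        · right
          obtain ⟨h1', h2'⟩ := hmem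
          rcases h1' with h1' | h1' <;> rcases h2' with h2' | h2' <;>
            simp_all [hB_def, hD_def, Prod.ext_iff]
        · exact Or.inl hmem
      refine le_antisymm ?_ zero_le
      calc π Dᶜ ≤ π ((A ×ˢ A)ᶜ ∪ B) := measure_mono hsub
        _ ≤ π ((A ×ˢ A)ᶜ) + π B := measure_union_le _ _
        _ = 0 := by rw [coupling_null hπ hA (mu_compl x e) (mu_compl x e'), hπB, add_zero]
    have h0fst : π (Prod.fst ⁻¹' ({0} : Set (EuclideanSpace ℝ (Fin d)))) =
        π ({((0 : EuclideanSpace ℝ (Fin d)), (0 : EuclideanSpace ℝ (Fin d)))} :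
          Set (EuclideanSpace ℝ (Fin d) × EuclideanSpace ℝ (Fin d))) := by
      rw [← measure_inter_conull hDc]
      congr 1
      ext q
      simp only [mem_inter_iff, mem_preimage, mem_singleton_iff, hD_def, mem_insert_iff,
        Prod.ext_iff]
      constructor
      · rintro ⟨hq1, hq2 | hq2⟩
        · exact ⟨hq1, hq2.2⟩
        · exact absurd (hq2.1 ▸ hq1) hx
      · rintro ⟨hq1, hq2⟩; exact ⟨hq1, Or.inl ⟨hq1, hq2⟩⟩
    have h0snd : π (Prod.snd ⁻¹' ({0} : Set (EuclideanSpace ℝ (Fin d)))) =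
        π ({((0 : EuclideanSpace ℝ (Fin d)), (0 : EuclideanSpace ℝ (Fin d)))} :
          Set (EuclideanSpace ℝ (Fin d) × EuclideanSpace ℝ (Fin d))) := by
      rw [← measure_inter_conull hDc]
      congr 1
      ext q
      simp only [mem_inter_iff, mem_preimage, mem_singleton_iff, hD_def, mem_insert_iff,
        Prod.ext_iff]
      constructor
      · rintro ⟨hq1, hq2 | hq2⟩
        · exact ⟨hq2.1, hq1⟩
        · exact absurd (hq2.2 ▸ hq1) hx
      · rintro ⟨hq1, hq2⟩; exact ⟨hq2, Or.inl ⟨hq1, hq2⟩⟩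
    have heq : (1 : ℝ≥0∞) - e = 1 - e' := by
      rw [← mu_zero x hx e, ← mu_zero x hx e']
      rw [← marg_fst hπ (measurableSet_singleton 0), ← marg_snd hπ (measurableSet_singleton 0)]
      rw [h0fst, h0snd]
    apply hne
    calc e = 1 - (1 - e) := (ENNReal.sub_sub_cancel one_ne_top he).symm
      _ = 1 - (1 - e') := by rw [heq]
      _ = e' := ENNReal.sub_sub_cancel one_ne_top he'
  -- conclude
  have hI : (⨅ π ∈ {π : Measure (EuclideanSpace ℝ (Fin d) × EuclideanSpace ℝ (Fin d)) |
      IsCoupling π (mu x e) (mu x e')}, essSup f π) = (‖x‖₊ : ℝ≥0∞) := by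
    refine le_antisymm ?_ (le_iInf₂ hlow)
    exact (iInf₂_le π₀ hπ₀).trans hess₀
  rw [Winf]
  rw [hI]
  simp

end NoBiLip
end

/-- For `Ω` an open ball centered at the origin, no homogeneous map
`E : P_n(Ω) → ℝ^m` is bi-Lipschitz with respect to `W_∞`. -/
theorem no_biLipschitz_Winf_homogeneous (d n m : ℕ) (hd : 1 ≤ d) (hn : 2 ≤ n) (hm : 1 ≤ m)
    (Ω : Set (EuclideanSpace ℝ (Fin d)))
    (hΩ : ∃ R : ℝ, 0 < R ∧ Ω = Metric.ball (0 : EuclideanSpace ℝ (Fin d)) R)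
    (E : Measure (EuclideanSpace ℝ (Fin d)) → EuclideanSpace ℝ (Fin m))
    (hhom : ∀ μ : Measure (EuclideanSpace ℝ (Fin d)), MemPn d n Ω μ →
      ∀ α : ℝ, 0 ≤ α → α ≤ 1 → E (scaleMeasure d α μ) = α • E μ) :
    ¬ ∃ c C : ℝ, 0 < c ∧ c ≤ C ∧
      ∀ μ ν : Measure (EuclideanSpace ℝ (Fin d)), MemPn d n Ω μ → MemPn d n Ω ν →
        c * Winf d μ ν ≤ ‖E μ - E ν‖ ∧ ‖E μ - E ν‖ ≤ C * Winf d μ ν := by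
  classical
  rintro ⟨c, C, hc, hcC, hbl⟩
  obtain ⟨R, hR, rfl⟩ := hΩ
  set x : EuclideanSpace ℝ (Fin d) :=
    (R / 2) • EuclideanSpace.single (⟨0, hd⟩ : Fin d) (1 : ℝ) with hx_def
  have hxn : ‖x‖ = R / 2 := by
    rw [hx_def, norm_smul, EuclideanSpace.norm_single, Real.norm_eq_abs,
      abs_of_pos (by linarith : (0:ℝ) < R/2)]
    simp
  have hx : x ≠ 0 := by
    intro h; rw [h, norm_zero] at hxn; linarith
  have hxpos : 0 < ‖x‖ := by rw [hxn]; linarith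
  set ε : ℕ → ℝ≥0∞ := fun k => ((k : ℝ≥0∞) + 1)⁻¹ with hε_def
  have hεle : ∀ k, ε k ≤ 1 := by
    intro k
    rw [hε_def]
    simp only [ENNReal.inv_le_one]
    exact le_add_self
  have hεinj : Function.Injective ε := by
    intro j k h
    simp only [hε_def] at h
    have h2 : (j : ℝ≥0∞) + 1 = (k : ℝ≥0∞) + 1 := by
      have := congrArg (·⁻¹) h
      simpa using this
    have h3 : (j : ℕ) + 1 = k + 1 := by exact_mod_cast h2
    omega
  have hmem : ∀ k, MemPn d n (Metric.ball 0 R) (NoBiLip.mu x (ε k)) := by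
    intro k
    refine ⟨NoBiLip.mu_prob x (hεle k), {0, x}, ?_, ?_, ?_⟩
    · refine le_trans (Finset.card_insert_le _ _) ?_
      simp only [Finset.card_singleton]
      omega
    · intro z hz
      simp only [Finset.coe_insert, Finset.coe_singleton, Set.mem_insert_iff,
        Set.mem_singleton_iff] at hz
      rcases hz with rfl | rfl
      · exact Metric.mem_ball_self hR
      · rw [mem_ball_zero_iff, hxn]; linarith
    · have hco : ((({0, x} : Finset (EuclideanSpace ℝ (Fin d))) :
          Set (EuclideanSpace ℝ (Fin d)))) = ({0, x} : Set (EuclideanSpace ℝ (Fin d))) := by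
        simp
      rw [hco]
      exact NoBiLip.mu_compl x (ε k)
  set y : ℕ → EuclideanSpace ℝ (Fin m) := fun k => E (NoBiLip.mu x (ε k)) with hy_def
  have hW : ∀ j k : ℕ, j ≠ k → Winf d (NoBiLip.mu x (ε j)) (NoBiLip.mu x (ε k)) = ‖x‖ :=
    fun j k hjk => NoBiLip.winf_eq x hx (hεle j) (hεle k) (fun h' => hjk (hεinj h'))
  have hsep : ∀ j k : ℕ, j ≠ k → c * ‖x‖ ≤ ‖y j - y k‖ := by
    intro j k hjk
    have h := (hbl _ _ (hmem j) (hmem k)).1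
    rwa [hW j k hjk] at h
  have hbd : ∀ j k : ℕ, j ≠ k → ‖y j - y k‖ ≤ C * ‖x‖ := by
    intro j k hjk
    have h := (hbl _ _ (hmem j) (hmem k)).2
    rwa [hW j k hjk] at h
  have hball : ∀ k, y k ∈ Metric.closedBall (y 0) (C * ‖x‖) := by
    intro k
    rcases eq_or_ne k 0 with rfl | hk
    · exact Metric.mem_closedBall_self (mul_nonneg (hc.le.trans hcC) (norm_nonneg _))
    · rw [Metric.mem_closedBall, dist_eq_norm]
      exact hbd k 0 hk
  obtain ⟨a, -, φ, hφ, hconv⟩ := tendsto_subseq_of_bounded Metric.isBounded_closedBall hball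
  have hcs := hconv.cauchySeq
  rw [Metric.cauchySeq_iff] at hcs
  obtain ⟨N, hN⟩ := hcs (c * ‖x‖) (mul_pos hc hxpos)
  have h1 := hN (N + 1) (by omega) N (le_refl N)
  have hne : φ (N + 1) ≠ φ N := fun h => by
    have := hφ.injective h
    omega
  have h2 := hsep (φ (N + 1)) (φ N) hne
  simp only [Function.comp_apply, dist_eq_norm] at h1
  linarith
end
end

section
/- Let d ≥ 1, n ≥ 2, m ≥ 1, let Ω ⊆ ℝ^d be an open ball centered at the origin, and let p ∈ [1,∞). Then no map E : P_n(Ω) → ℝ^m (with no homogeneity assumption) is bi-Lipschitz with respect to the p-Wasserstein distance W_p. -/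
open MeasureTheory ENNReal Filter

noncomputable section

section Aux

open Metric Set

variable {d : ℕ}

lemma aux_cost_measurable (p : ℝ) (hp : 0 ≤ p) :
    Measurable (fun q : EuclideanSpace ℝ (Fin d) × EuclideanSpace ℝ (Fin d) =>
      (‖q.1 - q.2‖₊ : ℝ≥0∞) ^ p) := by
  have : Continuous (fun q : EuclideanSpace ℝ (Fin d) × EuclideanSpace ℝ (Fin d) =>
      ‖q.1 - q.2‖ ^ p) :=
    (continuous_fst.sub continuous_snd).norm.rpow_const (fun _ => Or.inr hp)
  have h : (fun q : EuclideanSpace ℝ (Fin d) × EuclideanSpace ℝ (Fin d) =>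
      (‖q.1 - q.2‖₊ : ℝ≥0∞) ^ p) = fun q => ENNReal.ofReal (‖q.1 - q.2‖ ^ p) := by
    funext q
    rw [← enorm_eq_nnnorm, ← ofReal_norm, ENNReal.ofReal_rpow_of_nonneg (norm_nonneg _) hp]
  rw [h]
  exact this.measurable.ennreal_ofReal

lemma aux_Wp_bounds {μ ν : Measure (EuclideanSpace ℝ (Fin d))} {p δ B : ℝ}
    (hp : 1 ≤ p) (hδ : 0 ≤ δ) (hB : 0 ≤ B)
    (π₀ : Measure (EuclideanSpace ℝ (Fin d) × EuclideanSpace ℝ (Fin d)))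
    (hπ₀ : IsCoupling π₀ μ ν)
    (hcost₀ : ∫⁻ q, (‖q.1 - q.2‖₊ : ℝ≥0∞) ^ p ∂π₀ ≤ ENNReal.ofReal (B ^ p))
    (hlow : ∀ π, IsCoupling π μ ν →
      ENNReal.ofReal (δ ^ p) ≤ ∫⁻ q, (‖q.1 - q.2‖₊ : ℝ≥0∞) ^ p ∂π) :
    δ ≤ Wp d p μ ν ∧ Wp d p μ ν ≤ B := by
  have hp0 : p ≠ 0 := by positivity
  have h1p : (0:ℝ) ≤ 1 / p := by positivity
  set I := ⨅ π ∈ {π : Measure (EuclideanSpace ℝ (Fin d) × EuclideanSpace ℝ (Fin d)) |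
      IsCoupling π μ ν}, ∫⁻ q, (‖q.1 - q.2‖₊ : ℝ≥0∞) ^ p ∂π with hI
  have hIB : I ≤ ENNReal.ofReal (B ^ p) := le_trans (iInf₂_le π₀ hπ₀) hcost₀
  have hδI : ENNReal.ofReal (δ ^ p) ≤ I := le_iInf₂ hlow
  have hBrw : (ENNReal.ofReal (B ^ p)) ^ (1/p) = ENNReal.ofReal B := by
    rw [ENNReal.ofReal_rpow_of_nonneg (by positivity) h1p, one_div,
      Real.rpow_rpow_inv hB hp0]
  have hδrw : (ENNReal.ofReal (δ ^ p)) ^ (1/p) = ENNReal.ofReal δ := by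
    rw [ENNReal.ofReal_rpow_of_nonneg (by positivity) h1p, one_div,
      Real.rpow_rpow_inv hδ hp0]
  have hle : I ^ (1/p) ≤ ENNReal.ofReal B := by
    rw [← hBrw]; exact ENNReal.rpow_le_rpow hIB h1p
  have hge : ENNReal.ofReal δ ≤ I ^ (1/p) := by
    rw [← hδrw]; exact ENNReal.rpow_le_rpow hδI h1p
  have hne : I ^ (1/p) ≠ ⊤ := ne_top_of_le_ne_top ENNReal.ofReal_ne_top hle
  constructor
  · have := ENNReal.toReal_mono hne hge
    rwa [ENNReal.toReal_ofReal hδ] at this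
  · have := ENNReal.toReal_mono ENNReal.ofReal_ne_top hle
    rwa [ENNReal.toReal_ofReal hB] at this

lemma aux_cost_lower {π : Measure (EuclideanSpace ℝ (Fin d) × EuclideanSpace ℝ (Fin d))}
    {μ ν : Measure (EuclideanSpace ℝ (Fin d))}
    (hc : IsCoupling π μ ν) {p δ : ℝ} (hp : 1 ≤ p) (hδ : 0 ≤ δ)
    (u : EuclideanSpace ℝ (Fin d)) (T : Set (EuclideanSpace ℝ (Fin d)))
    (hTfin : T.Finite) (hνT : ν Tᶜ = 0)
    (hdist : ∀ y ∈ T, δ ≤ ‖u - y‖) :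
    ENNReal.ofReal (δ ^ p) * μ {u} ≤ ∫⁻ q, (‖q.1 - q.2‖₊ : ℝ≥0∞) ^ p ∂π := by
  obtain ⟨hprob, hfst, hsnd⟩ := hc
  have hp0 : (0:ℝ) ≤ p := by linarith
  set A : Set (EuclideanSpace ℝ (Fin d) × EuclideanSpace ℝ (Fin d)) :=
    (Prod.fst ⁻¹' {u}) ∩ (Prod.snd ⁻¹' T) with hA
  have hAm : MeasurableSet A :=
    (measurable_fst (measurableSet_singleton u)).inter (measurable_snd hTfin.measurableSet)
  have hπu : π (Prod.fst ⁻¹' {u}) = μ {u} := by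
    rw [← hfst, Measure.map_apply measurable_fst (measurableSet_singleton u)]
  have hπT : π (Prod.snd ⁻¹' Tᶜ) = 0 := by
    rw [← hνT, ← hsnd, Measure.map_apply measurable_snd hTfin.measurableSet.compl]
  have hsub : Prod.fst ⁻¹' {u} ⊆ A ∪ Prod.snd ⁻¹' Tᶜ := by
    intro q hq
    by_cases h : q.2 ∈ T
    · exact Or.inl ⟨hq, h⟩
    · exact Or.inr h
  have hμA : μ {u} ≤ π A := by
    calc μ {u} = π (Prod.fst ⁻¹' {u}) := hπu.symm
      _ ≤ π (A ∪ Prod.snd ⁻¹' Tᶜ) := measure_mono hsub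
      _ ≤ π A + π (Prod.snd ⁻¹' Tᶜ) := measure_union_le _ _
      _ = π A := by rw [hπT, add_zero]
  calc ENNReal.ofReal (δ ^ p) * μ {u} ≤ ENNReal.ofReal (δ ^ p) * π A :=
        mul_le_mul_right hμA _
    _ = ∫⁻ _ in A, ENNReal.ofReal (δ ^ p) ∂π := (setLIntegral_const A _).symm
    _ ≤ ∫⁻ q in A, (‖q.1 - q.2‖₊ : ℝ≥0∞) ^ p ∂π := by
        refine setLIntegral_mono (aux_cost_measurable p hp0) (fun q hq => ?_)
        obtain ⟨hq1, hq2⟩ := hq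
        have h1 : q.1 = u := hq1
        have h2 : δ ≤ ‖q.1 - q.2‖ := h1 ▸ hdist q.2 hq2
        rw [← enorm_eq_nnnorm, ← ofReal_norm, ENNReal.ofReal_rpow_of_nonneg (norm_nonneg _) hp0]
        exact ENNReal.ofReal_le_ofReal (Real.rpow_le_rpow hδ h2 hp0)
    _ ≤ ∫⁻ q, (‖q.1 - q.2‖₊ : ℝ≥0∞) ^ p ∂π := setLIntegral_le_lintegral _ _


lemma aux_isCoupling_mix (x₁ y₁ x₂ y₂ x₃ y₃ : EuclideanSpace ℝ (Fin d))
    (w₁ w₂ w₃ : ℝ≥0∞) (h : w₁ + w₂ + w₃ = 1) :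
    IsCoupling
      (w₁ • Measure.dirac (x₁, y₁) + w₂ • Measure.dirac (x₂, y₂) + w₃ • Measure.dirac (x₃, y₃))
      (w₁ • Measure.dirac x₁ + w₂ • Measure.dirac x₂ + w₃ • Measure.dirac x₃)
      (w₁ • Measure.dirac y₁ + w₂ • Measure.dirac y₂ + w₃ • Measure.dirac y₃) := by
  refine ⟨⟨?_⟩, ?_, ?_⟩
  · simpa using h
  · simp [Measure.map_add _ _ measurable_fst, Measure.map_smul, Measure.map_dirac' measurable_fst]
  · simp [Measure.map_add _ _ measurable_snd, Measure.map_smul, Measure.map_dirac' measurable_snd]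

lemma aux_cost_mix (p : ℝ) (x₁ y₁ x₂ y₂ x₃ y₃ : EuclideanSpace ℝ (Fin d))
    (w₁ w₂ w₃ : ℝ≥0∞) :
    ∫⁻ q, (‖q.1 - q.2‖₊ : ℝ≥0∞) ^ p
      ∂(w₁ • Measure.dirac (x₁, y₁) + w₂ • Measure.dirac (x₂, y₂) + w₃ • Measure.dirac (x₃, y₃))
    = w₁ * (‖x₁ - y₁‖₊ : ℝ≥0∞) ^ p + w₂ * (‖x₂ - y₂‖₊ : ℝ≥0∞) ^ p
      + w₃ * (‖x₃ - y₃‖₊ : ℝ≥0∞) ^ p := by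
  simp [lintegral_add_measure, lintegral_smul_measure, lintegral_dirac]

end Aux

set_option maxHeartbeats 1000000 in
/-- For `Ω` an open ball centered at the origin and `p ∈ [1,∞)`, no map
`E : P_n(Ω) → ℝ^m` is bi-Lipschitz with respect to `W_p`. -/
theorem no_biLipschitz_Wp_ball (d n m : ℕ) (hd : 1 ≤ d) (hn : 2 ≤ n) (hm : 1 ≤ m)
    (Ω : Set (EuclideanSpace ℝ (Fin d)))
    (hΩ : ∃ R : ℝ, 0 < R ∧ Ω = Metric.ball (0 : EuclideanSpace ℝ (Fin d)) R)
    (p : ℝ) (hp : 1 ≤ p)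
    (E : Measure (EuclideanSpace ℝ (Fin d)) → EuclideanSpace ℝ (Fin m)) :
    ¬ ∃ c C : ℝ, 0 < c ∧ c ≤ C ∧
      ∀ μ ν : Measure (EuclideanSpace ℝ (Fin d)), MemPn d n Ω μ → MemPn d n Ω ν →
        c * Wp d p μ ν ≤ ‖E μ - E ν‖ ∧ ‖E μ - E ν‖ ≤ C * Wp d p μ ν := by
  classical
  rintro ⟨c, C, hc, hcC, hE⟩
  obtain ⟨R, hR, rfl⟩ := hΩ
  have hC : 0 < C := lt_of_lt_of_le hc hcC
  have hp0 : (0:ℝ) ≤ p := by linarith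
  have hpne : p ≠ 0 := by positivity
  have hd0 : 0 < d := hd
  set e : EuclideanSpace ℝ (Fin d) := EuclideanSpace.single ⟨0, hd0⟩ (1:ℝ) with he_def
  have he : ‖e‖ = 1 := by simp [he_def]
  obtain ⟨r, hr_def⟩ : ∃ r : ℝ, r = R / 2 := ⟨_, rfl⟩
  have hr : 0 < r := by rw [hr_def]; positivity
  obtain ⟨t, hts, htfin, hcov⟩ :=
    (isCompact_closedBall (0 : EuclideanSpace ℝ (Fin m)) (2*C)).finite_cover_balls
      (show (0:ℝ) < c/4 by linarith)
  set K := htfin.toFinset.card with hK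
  set τ : ℕ → ℝ := fun k => r / 2^k with hτ
  set a : ℕ → ℝ := fun k => ((2:ℝ)^k / 2^K) ^ p with ha
  set u : ℕ → EuclideanSpace ℝ (Fin d) := fun k => (τ k) • e with hu
  set μ : ℕ → Measure (EuclideanSpace ℝ (Fin d)) := fun k =>
    ENNReal.ofReal (a k) • Measure.dirac (u k)
      + ENNReal.ofReal (1 - a k) • Measure.dirac 0 with hμ
  obtain ⟨ρ, hρ⟩ : ∃ ρ : ℝ, ρ = r / 2^K := ⟨_, rfl⟩
  have hρpos : 0 < ρ := by rw [hρ]; positivity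
  have hτpos : ∀ k, 0 < τ k := fun k => by positivity
  have hτler : ∀ k, τ k ≤ r := fun k => by
    rw [hτ]
    exact div_le_self hr.le (one_le_pow₀ (by norm_num))
  have hτhalf : ∀ j k, j < k → τ k ≤ τ j / 2 := by
    intro j k hjk
    rw [hτ]
    simp only
    rw [div_div]
    apply div_le_div_of_nonneg_left hr.le (by positivity)
    calc ((2:ℝ)^j * 2) = 2^(j+1) := by ring
      _ ≤ 2^k := pow_le_pow_right₀ (by norm_num) (by omega)
  have hτmono : ∀ j k, j < k → τ k ≤ τ j := fun j k hjk =>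
    le_trans (hτhalf j k hjk) (by linarith [hτpos j])
  have hapos : ∀ k, 0 < a k := fun k => Real.rpow_pos_of_pos (by positivity) p
  have hale1 : ∀ k, k ≤ K → a k ≤ 1 := fun k hk =>
    Real.rpow_le_one (by positivity) (by
      rw [div_le_one (by positivity)]
      exact pow_le_pow_right₀ (by norm_num) hk) hp0
  have hamono : ∀ j k, j ≤ k → a j ≤ a k := fun j k hjk =>
    Real.rpow_le_rpow (by positivity) (by
      apply div_le_div_of_nonneg_right ?_ (by positivity)
      exact pow_le_pow_right₀ (by norm_num) hjk) hp0
  have haρ : ∀ k, a k * (τ k) ^ p = ρ ^ p := by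
    intro k
    rw [ha, hτ, hρ]
    simp only
    rw [← Real.mul_rpow (by positivity) (by positivity)]
    congr 1
    field_simp
  have haρ2 : ∀ k, a k * (τ k / 2) ^ p = (ρ / 2) ^ p := by
    intro k
    rw [ha, hτ, hρ]
    simp only
    rw [← Real.mul_rpow (by positivity) (by positivity)]
    congr 1
    field_simp
  have hune : ∀ k, u k ≠ 0 := by
    intro k h
    have : ‖u k‖ = 0 := by rw [h, norm_zero]
    rw [hu] at this
    simp only [norm_smul, he, mul_one, Real.norm_eq_abs, abs_of_pos (hτpos k)] at this
    exact (hτpos k).ne' this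
  -- membership in P_n
  have hmem : ∀ k, k ≤ K → MemPn d n (Metric.ball 0 R) (μ k) := by
    intro k hk
    refine ⟨⟨?_⟩, ⟨{u k, 0}, ?_, ?_, ?_⟩⟩
    · simp only [hμ, Measure.coe_add, Measure.coe_smul, Pi.add_apply, Pi.smul_apply,
        smul_eq_mul, measure_univ, mul_one]
      rw [← ENNReal.ofReal_add (hapos k).le (by linarith [hale1 k hk])]
      norm_num
    · refine le_trans ?_ hn
      refine le_trans (Finset.card_insert_le _ _) ?_
      simp
    · intro x hx
      simp only [Finset.coe_insert, Finset.coe_singleton, Set.mem_insert_iff,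
        Set.mem_singleton_iff] at hx
      rcases hx with rfl | rfl
      · rw [Metric.mem_ball, dist_zero_right, hu]
        simp only [norm_smul, he, mul_one, Real.norm_eq_abs, abs_of_pos (hτpos k)]
        calc τ k ≤ r := hτler k
          _ < R := by rw [hr_def]; linarith
      · simp [Metric.mem_ball, hR]
    · simp only [hμ, Measure.coe_add, Measure.coe_smul, Pi.add_apply, Pi.smul_apply,
        smul_eq_mul]
      rw [Measure.dirac_apply, Measure.dirac_apply]
      rw [Set.indicator_of_notMem, Set.indicator_of_notMem] <;> simp
  -- Wasserstein sandwich
  have hWp : ∀ j k, j < k → k ≤ K →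
      ρ/2 ≤ Wp d p (μ j) (μ k) ∧ Wp d p (μ j) (μ k) ≤ 2*ρ := by
    intro j k hjk hkK
    have hjK : j ≤ K := le_trans hjk.le hkK
    have hajk : a j ≤ a k := hamono j k hjk.le
    have hak1 : a k ≤ 1 := hale1 k hkK
    have haj : 0 < a j := hapos j
    have hak : 0 < a k := hapos k
    have hτj : 0 < τ j := hτpos j
    have hτk : 0 < τ k := hτpos k
    have hτjk : τ k ≤ τ j := hτmono j k hjk
    have hnorm1 : ‖u j - u k‖ = τ j - τ k := by
      rw [hu]
      simp only [← sub_smul, norm_smul, he, mul_one, Real.norm_eq_abs]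
      rw [abs_of_nonneg (by linarith [hτmono j k hjk])]
    have hnorm2 : ‖(0 : EuclideanSpace ℝ (Fin d)) - u k‖ = τ k := by
      rw [zero_sub, norm_neg, hu]
      simp only [norm_smul, he, mul_one, Real.norm_eq_abs]
      exact abs_of_pos (hτpos k)
    have hsum : ENNReal.ofReal (a j) + ENNReal.ofReal (a k - a j)
        + ENNReal.ofReal (1 - a k) = 1 := by
      rw [← ENNReal.ofReal_add (hapos j).le (by linarith),
        ← ENNReal.ofReal_add (by linarith) (by linarith)]
      norm_num
    set π₀ : Measure (EuclideanSpace ℝ (Fin d) × EuclideanSpace ℝ (Fin d)) :=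
      ENNReal.ofReal (a j) • Measure.dirac (u j, u k)
        + ENNReal.ofReal (a k - a j) • Measure.dirac (0, u k)
        + ENNReal.ofReal (1 - a k) • Measure.dirac (0, 0) with hπ₀
    have hcoup0 : IsCoupling π₀ (μ j) (μ k) := by
      have hmix := aux_isCoupling_mix (u j) (u k) 0 (u k) 0 0
        (ENNReal.ofReal (a j)) (ENNReal.ofReal (a k - a j)) (ENNReal.ofReal (1 - a k)) hsum
      have h1 : ENNReal.ofReal (a j) • Measure.dirac (u j)
          + ENNReal.ofReal (a k - a j) • Measure.dirac (0 : EuclideanSpace ℝ (Fin d))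
          + ENNReal.ofReal (1 - a k) • Measure.dirac 0 = μ j := by
        rw [hμ, add_assoc, ← add_smul,
          ← ENNReal.ofReal_add (by linarith) (by linarith)]
        norm_num
      have h2 : ENNReal.ofReal (a j) • Measure.dirac (u k)
          + ENNReal.ofReal (a k - a j) • Measure.dirac (u k)
          + ENNReal.ofReal (1 - a k) • Measure.dirac (0 : EuclideanSpace ℝ (Fin d)) = μ k := by
        rw [hμ, ← add_smul, ← ENNReal.ofReal_add (hapos j).le (by linarith)]
        norm_num
      rw [← h1, ← h2]
      exact hmix
    have hcost0 : ∫⁻ q, (‖q.1 - q.2‖₊ : ℝ≥0∞) ^ p ∂π₀ ≤ ENNReal.ofReal ((2*ρ) ^ p) := by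
      rw [hπ₀, aux_cost_mix]
      have e1 : (‖u j - u k‖₊ : ℝ≥0∞) ^ p = ENNReal.ofReal ((τ j - τ k) ^ p) := by
        rw [← enorm_eq_nnnorm, ← ofReal_norm, ENNReal.ofReal_rpow_of_nonneg (norm_nonneg _) hp0,
          hnorm1]
      have e2 : (‖(0 : EuclideanSpace ℝ (Fin d)) - u k‖₊ : ℝ≥0∞) ^ p
          = ENNReal.ofReal (τ k ^ p) := by
        rw [← enorm_eq_nnnorm, ← ofReal_norm, ENNReal.ofReal_rpow_of_nonneg (norm_nonneg _) hp0,
          hnorm2]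
      have e3 : (‖(0 : EuclideanSpace ℝ (Fin d)) - (0 : EuclideanSpace ℝ (Fin d))‖₊ : ℝ≥0∞) ^ p
          = 0 := by
        simp [Real.zero_rpow hpne, ENNReal.zero_rpow_of_pos (by linarith : (0:ℝ) < p)]
      rw [e1, e2, e3, mul_zero, add_zero,
        ← ENNReal.ofReal_mul (hapos j).le, ← ENNReal.ofReal_mul (by linarith),
        ← ENNReal.ofReal_add (mul_nonneg haj.le (Real.rpow_nonneg (by linarith) p))
          (mul_nonneg (by linarith) (Real.rpow_nonneg hτk.le p))]
      apply ENNReal.ofReal_le_ofReal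
      have i1 : a j * (τ j - τ k) ^ p ≤ ρ ^ p := by
        rw [← haρ j]
        apply mul_le_mul_of_nonneg_left ?_ (hapos j).le
        apply Real.rpow_le_rpow (by linarith [hτmono j k hjk]) (by linarith [hτpos k]) hp0
      have i2 : (a k - a j) * τ k ^ p ≤ ρ ^ p := by
        rw [← haρ k]
        apply mul_le_mul_of_nonneg_right (by linarith [hapos j]) (Real.rpow_nonneg (hτpos k).le p)
      have i3 : 2 * ρ^p ≤ (2*ρ)^p := by
        rw [Real.mul_rpow (by norm_num) hρpos.le]
        have h2p : (2:ℝ)^(1:ℝ) ≤ 2^p := (Real.rpow_le_rpow_left_iff (by norm_num)).mpr hp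
        rw [Real.rpow_one] at h2p
        nlinarith [Real.rpow_pos_of_pos hρpos p]
      linarith
    have hlow : ∀ π, IsCoupling π (μ j) (μ k) →
        ENNReal.ofReal ((ρ/2) ^ p) ≤ ∫⁻ q, (‖q.1 - q.2‖₊ : ℝ≥0∞) ^ p ∂π := by
      intro π hπ
      have hT : (({0, u k} : Set (EuclideanSpace ℝ (Fin d)))).Finite :=
        (Set.finite_singleton (u k)).insert 0
      have hνT : (μ k) ({0, u k} : Set (EuclideanSpace ℝ (Fin d)))ᶜ = 0 := by
        simp only [hμ, Measure.coe_add, Measure.coe_smul, Pi.add_apply, Pi.smul_apply,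
          smul_eq_mul]
        rw [Measure.dirac_apply, Measure.dirac_apply]
        rw [Set.indicator_of_notMem, Set.indicator_of_notMem] <;> simp
      have hdist : ∀ y ∈ ({0, u k} : Set (EuclideanSpace ℝ (Fin d))), τ j / 2 ≤ ‖u j - y‖ := by
        intro y hy
        rcases hy with rfl | hy
        · rw [sub_zero, hu]
          simp only [norm_smul, he, mul_one, Real.norm_eq_abs, abs_of_pos (hτpos j)]
          linarith [hτpos j]
        · rw [Set.mem_singleton_iff] at hy
          subst hy
          rw [hnorm1]
          linarith [hτhalf j k hjk]
      have hμju : (μ j) {u j} = ENNReal.ofReal (a j) := by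
        simp only [hμ, Measure.coe_add, Measure.coe_smul, Pi.add_apply, Pi.smul_apply,
          smul_eq_mul]
        have l1 : Measure.dirac (u j) {u j} = 1 :=
          Measure.dirac_apply_of_mem (Set.mem_singleton _)
        have l2 : Measure.dirac (0 : EuclideanSpace ℝ (Fin d)) {u j} = 0 := by
          rw [Measure.dirac_apply]
          exact Set.indicator_of_notMem
            (fun h => hune j (Set.mem_singleton_iff.mp h).symm) _
        rw [l1, l2]
        simp
      have := aux_cost_lower hπ hp (by linarith [hτpos j] : (0:ℝ) ≤ τ j / 2)
        (u j) ({0, u k}) hT hνT hdist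
      rw [hμju, ← ENNReal.ofReal_mul (by positivity)] at this
      calc ENNReal.ofReal ((ρ/2) ^ p) = ENNReal.ofReal ((τ j / 2) ^ p * a j) := by
            rw [mul_comm, haρ2 j]
        _ ≤ _ := this
    exact aux_Wp_bounds hp (by linarith) (by linarith) π₀ hcoup0 hcost0 hlow
  -- images and rescaling
  set y : ℕ → EuclideanSpace ℝ (Fin m) := fun k => E (μ k) with hy
  have hyd : ∀ j k, j < k → k ≤ K →
      c * (ρ/2) ≤ ‖y j - y k‖ ∧ ‖y j - y k‖ ≤ C * (2*ρ) := by
    intro j k hjk hkK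
    obtain ⟨hW1, hW2⟩ := hWp j k hjk hkK
    obtain ⟨hl, hu'⟩ := hE (μ j) (μ k) (hmem j (le_trans hjk.le hkK)) (hmem k hkK)
    constructor
    · exact le_trans (mul_le_mul_of_nonneg_left hW1 hc.le) hl
    · exact le_trans hu' (mul_le_mul_of_nonneg_left hW2 hC.le)
  set z : ℕ → EuclideanSpace ℝ (Fin m) := fun k => (ρ⁻¹ : ℝ) • (y k - y 0) with hz
  have hzsub : ∀ j k, ‖z j - z k‖ = ρ⁻¹ * ‖y j - y k‖ := by
    intro j k
    rw [hz]
    simp only [← smul_sub]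
    rw [norm_smul, Real.norm_eq_abs, abs_of_pos (inv_pos.mpr hρpos)]
    congr 2
    abel
  have hzb : ∀ k, k ≤ K → z k ∈ Metric.closedBall (0 : EuclideanSpace ℝ (Fin m)) (2*C) := by
    intro k hk
    rw [Metric.mem_closedBall, dist_zero_right]
    rcases Nat.eq_zero_or_pos k with rfl | hk0
    · rw [hz]; simp; positivity
    · have h0 : z 0 = 0 := by rw [hz]; simp
      have : ‖z k - z 0‖ = ρ⁻¹ * ‖y k - y 0‖ := hzsub k 0
      rw [h0, sub_zero] at this
      rw [this, norm_sub_rev]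
      have := (hyd 0 k hk0 hk).2
      calc ρ⁻¹ * ‖y 0 - y k‖ ≤ ρ⁻¹ * (C * (2*ρ)) := by
            apply mul_le_mul_of_nonneg_left this (by positivity)
        _ = 2*C := by field_simp <;> ring
  have hsep : ∀ j k, j ≤ K → k ≤ K → j ≠ k → c/2 ≤ ‖z j - z k‖ := by
    have key : ∀ j k, j < k → k ≤ K → c/2 ≤ ‖z j - z k‖ := by
      intro j k hjk hkK
      rw [hzsub]
      have := (hyd j k hjk hkK).1
      calc c/2 = ρ⁻¹ * (c * (ρ/2)) := by field_simp <;> ring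
        _ ≤ ρ⁻¹ * ‖y j - y k‖ := by
            apply mul_le_mul_of_nonneg_left this (by positivity)
    intro j k hjK hkK hne
    rcases lt_or_gt_of_ne hne with h | h
    · exact key j k h hkK
    · rw [norm_sub_rev]; exact key k j h hjK
  -- packing
  have hφ : ∀ k : Fin (K+1), ∃ x, x ∈ t ∧ z k ∈ Metric.ball x (c/4) := by
    intro k
    have hk : (k : ℕ) ≤ K := by omega
    have h2 := hcov (hzb k hk)
    rw [Set.mem_iUnion₂] at h2
    obtain ⟨x, hx, hb⟩ := h2
    exact ⟨x, hx, hb⟩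
  choose φ hφt hφb using hφ
  have hinj : Function.Injective φ := by
    intro i j hij
    by_contra hne
    have hzne : c/2 ≤ ‖z i - z j‖ := hsep i j (by omega) (by omega) (by
      intro h; exact hne (Fin.ext h))
    have d1 : dist (z i) (φ i) < c/4 := Metric.mem_ball.mp (hφb i)
    have d2 : dist (z j) (φ j) < c/4 := Metric.mem_ball.mp (hφb j)
    have : dist (z i) (z j) < c/2 := by
      calc dist (z i) (z j) ≤ dist (z i) (φ i) + dist (φ j) (z j) := by
            rw [hij]; exact dist_triangle _ _ _
        _ < c/4 + c/4 := by rw [dist_comm (φ j)]; linarith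
        _ = c/2 := by ring
    rw [dist_eq_norm] at this
    linarith
  have hcard : K + 1 ≤ K := by
    have := Fintype.card_le_of_injective
      (fun k : Fin (K+1) => (⟨φ k, (Set.Finite.mem_toFinset htfin).2 (hφt k)⟩ : htfin.toFinset))
      (fun i j hij => hinj (Subtype.ext_iff.mp hij))
    simpa [hK] using this
  omega
end
end

section
/- Let d ≥ 1, n ≥ 2, m ≥ 1, and let Ω ⊆ ℝ^d be an open ball centered at the origin. Then no map E : P_n(Ω) → ℝ^m is bi-Lipschitz with respect to the ∞-Wasserstein distance W_∞. -/
open MeasureTheory ENNReal Filter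

noncomputable section

namespace NoBLWAux

variable {d : ℕ}

/-- Two-point measure with weights `p` and `1-p` at `0` and `y`. -/
def mu (d : ℕ) (y : EuclideanSpace ℝ (Fin d)) (p : ℝ≥0∞) :
    Measure (EuclideanSpace ℝ (Fin d)) :=
  p • Measure.dirac 0 + (1 - p) • Measure.dirac y

variable {y : EuclideanSpace ℝ (Fin d)} {p q : ℝ≥0∞}

lemma mu_apply (y : EuclideanSpace ℝ (Fin d)) (p : ℝ≥0∞) (s : Set (EuclideanSpace ℝ (Fin d))) :
    mu d y p s = p * s.indicator 1 0 + (1 - p) * s.indicator 1 y := by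
  simp [mu, Measure.dirac_apply]

lemma mu_prob (hp : p ≤ 1) : IsProbabilityMeasure (mu d y p) := by
  constructor
  rw [mu_apply]
  simp [add_tsub_cancel_of_le hp]

lemma mu_compl (y : EuclideanSpace ℝ (Fin d)) (p : ℝ≥0∞) :
    mu d y p ({0, y} : Set (EuclideanSpace ℝ (Fin d)))ᶜ = 0 := by
  rw [mu_apply]
  simp [Set.indicator_apply]

lemma mu_zero (hy : y ≠ 0) : mu d y p {0} = p := by
  rw [mu_apply]
  simp [Set.indicator_apply, hy]

lemma mu_y (hy : y ≠ 0) : mu d y p {y} = 1 - p := by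
  rw [mu_apply]
  simp [Set.indicator_apply, (Ne.symm hy : (0 : EuclideanSpace ℝ (Fin d)) ≠ y)]

/-- The key computation: for distinct weights, `W∞` between the two-point
measures equals `‖y‖`. -/
lemma winf_eq (hy : y ≠ 0) (hp : p ≤ 1) (hq : q ≤ 1) (hpq : p ≠ q) :
    Winf d (mu d y p) (mu d y q) = ‖y‖ := by
  classical
  set S : Set (EuclideanSpace ℝ (Fin d)) := {0, y} with hS
  have hSm : MeasurableSet S := (measurableSet_singleton y).insert 0
  have hμ : IsProbabilityMeasure (mu d y p) := mu_prob hp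
  have hν : IsProbabilityMeasure (mu d y q) := mu_prob hq
  have key_le : (⨅ π ∈ {π : Measure (EuclideanSpace ℝ (Fin d) × EuclideanSpace ℝ (Fin d)) |
      IsCoupling π (mu d y p) (mu d y q)},
      essSup (fun z => (‖z.1 - z.2‖₊ : ℝ≥0∞)) π) ≤ (‖y‖₊ : ℝ≥0∞) := by
    set π₀ := (mu d y p).prod (mu d y q) with hπ₀
    have hcoup : IsCoupling π₀ (mu d y p) (mu d y q) := by
      refine ⟨inferInstance, ?_, ?_⟩
      · rw [hπ₀, Measure.map_fst_prod, measure_univ, one_smul]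
      · rw [hπ₀, Measure.map_snd_prod, measure_univ, one_smul]
    refine le_trans (iInf₂_le π₀ hcoup) ?_
    refine essSup_le_of_ae_le _ ?_
    have hnull : π₀ ((S ×ˢ S : Set _)ᶜ) = 0 := by
      have hsub : ((S ×ˢ S : Set _)ᶜ) ⊆ (Prod.fst ⁻¹' Sᶜ) ∪ (Prod.snd ⁻¹' Sᶜ) := by
        intro z hz
        by_contra hcon
        simp only [Set.mem_union, Set.mem_preimage, Set.mem_compl_iff, not_or, not_not] at hcon
        exact hz ⟨hcon.1, hcon.2⟩
      refine measure_mono_null hsub ?_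
      refine measure_union_null ?_ ?_
      · have : π₀ (Prod.fst ⁻¹' Sᶜ) = (mu d y p) Sᶜ := by
          rw [← Measure.map_apply measurable_fst hSm.compl]
          congr 1
          rw [hπ₀, Measure.map_fst_prod, measure_univ, one_smul]
        rw [this, mu_compl]
      · have : π₀ (Prod.snd ⁻¹' Sᶜ) = (mu d y q) Sᶜ := by
          rw [← Measure.map_apply measurable_snd hSm.compl]
          congr 1
          rw [hπ₀, Measure.map_snd_prod, measure_univ, one_smul]
        rw [this, mu_compl]
    refine Filter.eventually_of_mem
      ((MeasureTheory.compl_mem_ae_iff).2 hnull) ?_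
    rintro ⟨z1, z2⟩ hz
    simp only [Set.mem_compl_iff, not_not] at hz
    have h1 : z1 = 0 ∨ z1 = y := by simpa [hS] using hz.1
    have h2 : z2 = 0 ∨ z2 = y := by simpa [hS] using hz.2
    have : ‖z1 - z2‖ ≤ ‖y‖ := by
      rcases h1 with rfl | rfl <;> rcases h2 with rfl | rfl <;> simp [norm_nonneg]
    exact ENNReal.coe_le_coe.2 (by simpa [← NNReal.coe_le_coe] using this)
  have key_ge : (‖y‖₊ : ℝ≥0∞) ≤ ⨅ π ∈ {π : Measure (EuclideanSpace ℝ (Fin d) ×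
      EuclideanSpace ℝ (Fin d)) | IsCoupling π (mu d y p) (mu d y q)},
      essSup (fun z => (‖z.1 - z.2‖₊ : ℝ≥0∞)) π := by
    refine le_iInf₂ fun π hπ => ?_
    obtain ⟨hπprob, hfst, hsnd⟩ := hπ
    have h0m : MeasurableSet ({0} : Set (EuclideanSpace ℝ (Fin d))) := measurableSet_singleton _
    have hym : MeasurableSet ({y} : Set (EuclideanSpace ℝ (Fin d))) := measurableSet_singleton _
    -- π vanishes outside S ×ˢ S
    have hnull : π ((S ×ˢ S : Set _)ᶜ) = 0 := by
      have hsub : ((S ×ˢ S : Set _)ᶜ) ⊆ (Prod.fst ⁻¹' Sᶜ) ∪ (Prod.snd ⁻¹' Sᶜ) := by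
        intro z hz
        by_contra hcon
        simp only [Set.mem_union, Set.mem_preimage, Set.mem_compl_iff, not_or, not_not] at hcon
        exact hz ⟨hcon.1, hcon.2⟩
      refine measure_mono_null hsub (measure_union_null ?_ ?_)
      · have : π (Prod.fst ⁻¹' Sᶜ) = (mu d y p) Sᶜ := by
          rw [← Measure.map_apply measurable_fst hSm.compl, hfst]
        rw [this, mu_compl]
      · have : π (Prod.snd ⁻¹' Sᶜ) = (mu d y q) Sᶜ := by
          rw [← Measure.map_apply measurable_snd hSm.compl, hsnd]
        rw [this, mu_compl]
    -- marginal computations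
    have hfst0 : π (Prod.fst ⁻¹' ({0} : Set (EuclideanSpace ℝ (Fin d)))) = p := by
      rw [← Measure.map_apply measurable_fst h0m, hfst, mu_zero hy]
    have hsnd0 : π (Prod.snd ⁻¹' ({0} : Set (EuclideanSpace ℝ (Fin d)))) = q := by
      rw [← Measure.map_apply measurable_snd h0m, hsnd, mu_zero hy]
    -- decompose
    have hA : ∀ (pr : (EuclideanSpace ℝ (Fin d) × EuclideanSpace ℝ (Fin d)) →
        EuclideanSpace ℝ (Fin d)) (hpr : Measurable pr),
        π (pr ⁻¹' ({0} : Set _)) = π (pr ⁻¹' {0} ∩ S ×ˢ S) := by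
      intro pr hpr
      rw [← measure_inter_add_diff (pr ⁻¹' {0}) (hSm.prod hSm)]
      have : π (pr ⁻¹' {0} \ S ×ˢ S) = 0 :=
        measure_mono_null (fun z hz => hz.2) hnull
      rw [this, add_zero]
    have hsplit1 : Prod.fst ⁻¹' ({0} : Set (EuclideanSpace ℝ (Fin d))) ∩ S ×ˢ S
        = ({0} ×ˢ ({0} : Set _)) ∪ ({0} ×ˢ ({y} : Set _)) := by
      ext ⟨z1, z2⟩
      simp only [Set.mem_inter_iff, Set.mem_preimage, Set.mem_singleton_iff, Set.mem_prod,
        Set.mem_union, hS, Set.mem_insert_iff]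
      constructor
      · rintro ⟨rfl, -, h2⟩; tauto
      · rintro (⟨rfl, rfl⟩ | ⟨rfl, rfl⟩) <;> simp
    have hsplit2 : Prod.snd ⁻¹' ({0} : Set (EuclideanSpace ℝ (Fin d))) ∩ S ×ˢ S
        = ({0} ×ˢ ({0} : Set _)) ∪ ({y} ×ˢ ({0} : Set _)) := by
      ext ⟨z1, z2⟩
      simp only [Set.mem_inter_iff, Set.mem_preimage, Set.mem_singleton_iff, Set.mem_prod,
        Set.mem_union, hS, Set.mem_insert_iff]
      constructor
      · rintro ⟨rfl, h1, -⟩; tauto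
      · rintro (⟨rfl, rfl⟩ | ⟨rfl, rfl⟩) <;> simp
    have hd1 : Disjoint (({0} : Set (EuclideanSpace ℝ (Fin d))) ×ˢ ({0} : Set (EuclideanSpace ℝ (Fin d)))) (({0} : Set (EuclideanSpace ℝ (Fin d))) ×ˢ ({y} : Set (EuclideanSpace ℝ (Fin d)))) := by
      refine Set.disjoint_left.2 ?_
      rintro ⟨a, b⟩ ⟨ha, hb⟩ ⟨ha', hb'⟩
      simp only [Set.mem_singleton_iff] at hb hb'
      exact hy (hb'.symm.trans hb)
    have hd2 : Disjoint (({0} : Set (EuclideanSpace ℝ (Fin d))) ×ˢ ({0} : Set (EuclideanSpace ℝ (Fin d)))) (({y} : Set (EuclideanSpace ℝ (Fin d))) ×ˢ ({0} : Set (EuclideanSpace ℝ (Fin d)))) := by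
      refine Set.disjoint_left.2 ?_
      rintro ⟨a, b⟩ ⟨ha, hb⟩ ⟨ha', hb'⟩
      simp only [Set.mem_singleton_iff] at ha ha'
      exact hy (ha'.symm.trans ha)
    have hp_eq : p = π (({0} : Set (EuclideanSpace ℝ (Fin d))) ×ˢ ({0} : Set (EuclideanSpace ℝ (Fin d)))) + π (({0} : Set (EuclideanSpace ℝ (Fin d))) ×ˢ ({y} : Set (EuclideanSpace ℝ (Fin d)))) := by
      rw [← hfst0, hA Prod.fst measurable_fst, hsplit1, measure_union hd1 (h0m.prod hym)]
    have hq_eq : q = π (({0} : Set (EuclideanSpace ℝ (Fin d))) ×ˢ ({0} : Set (EuclideanSpace ℝ (Fin d)))) + π (({y} : Set (EuclideanSpace ℝ (Fin d))) ×ˢ ({0} : Set (EuclideanSpace ℝ (Fin d)))) := by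
      rw [← hsnd0, hA Prod.snd measurable_snd, hsplit2, measure_union hd2 (hym.prod h0m)]
    -- the "cross" set has positive measure
    have hU : π ((({0} : Set (EuclideanSpace ℝ (Fin d))) ×ˢ ({y} : Set (EuclideanSpace ℝ (Fin d)))) ∪ (({y} : Set (EuclideanSpace ℝ (Fin d))) ×ˢ ({0} : Set (EuclideanSpace ℝ (Fin d))))) ≠ 0 := by
      intro h0
      rw [measure_union_null_iff] at h0
      exact hpq (by rw [hp_eq, hq_eq, h0.1, h0.2])
    -- conclude essSup ≥ ‖y‖
    by_contra hlt
    push_neg at hlt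
    have hae := ENNReal.ae_le_essSup (μ := π) (fun z => (‖z.1 - z.2‖₊ : ℝ≥0∞))
    have : π {z : EuclideanSpace ℝ (Fin d) × EuclideanSpace ℝ (Fin d) |
        ¬ (‖z.1 - z.2‖₊ : ℝ≥0∞) ≤ essSup (fun z => (‖z.1 - z.2‖₊ : ℝ≥0∞)) π} = 0 := hae
    refine hU (measure_mono_null ?_ this)
    rintro ⟨z1, z2⟩ hz
    have : ‖z1 - z2‖₊ = ‖y‖₊ := by
      rcases hz with ⟨h1, h2⟩ | ⟨h1, h2⟩ <;>
        simp only [Set.mem_singleton_iff] at h1 h2 <;> subst h1 <;> subst h2 <;> simp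
    simp only [Set.mem_setOf_eq, this, not_le]
    exact hlt
  have heq : (⨅ π ∈ {π : Measure (EuclideanSpace ℝ (Fin d) × EuclideanSpace ℝ (Fin d)) |
      IsCoupling π (mu d y p) (mu d y q)},
      essSup (fun z => (‖z.1 - z.2‖₊ : ℝ≥0∞)) π) = (‖y‖₊ : ℝ≥0∞) :=
    le_antisymm key_le key_ge
  rw [Winf]
  rw [show (fun q : EuclideanSpace ℝ (Fin d) × EuclideanSpace ℝ (Fin d) =>
    (‖q.1 - q.2‖₊ : ℝ≥0∞)) = (fun z : EuclideanSpace ℝ (Fin d) × EuclideanSpace ℝ (Fin d) =>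
    (‖z.1 - z.2‖₊ : ℝ≥0∞)) from rfl, heq]
  simp [coe_nnnorm]

end NoBLWAux

/-- For `Ω` an open ball centered at the origin, no map
`E : P_n(Ω) → ℝ^m` is bi-Lipschitz with respect to `W_∞`. -/
theorem no_biLipschitz_Winf_ball (d n m : ℕ) (hd : 1 ≤ d) (hn : 2 ≤ n) (hm : 1 ≤ m)
    (Ω : Set (EuclideanSpace ℝ (Fin d)))
    (hΩ : ∃ R : ℝ, 0 < R ∧ Ω = Metric.ball (0 : EuclideanSpace ℝ (Fin d)) R)
    (E : Measure (EuclideanSpace ℝ (Fin d)) → EuclideanSpace ℝ (Fin m)) :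
    ¬ ∃ c C : ℝ, 0 < c ∧ c ≤ C ∧
      ∀ μ ν : Measure (EuclideanSpace ℝ (Fin d)), MemPn d n Ω μ → MemPn d n Ω ν →
        c * Winf d μ ν ≤ ‖E μ - E ν‖ ∧ ‖E μ - E ν‖ ≤ C * Winf d μ ν := by
  classical
  rintro ⟨c, C, hc, hcC, H⟩
  obtain ⟨R, hR, rfl⟩ := hΩ
  set i : Fin d := ⟨0, hd⟩
  set y : EuclideanSpace ℝ (Fin d) := EuclideanSpace.single i (R / 2) with hydef
  have hynorm : ‖y‖ = R / 2 := by
    rw [hydef, EuclideanSpace.norm_single, Real.norm_eq_abs, abs_of_pos (by linarith)]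
  have hy0 : y ≠ 0 := by
    intro h
    rw [h, norm_zero] at hynorm
    linarith
  have hypos : 0 < ‖y‖ := by rw [hynorm]; linarith
  -- the sequence of weights
  set p : ℕ → ℝ≥0∞ := fun k => ((k : ℝ≥0∞) + 2)⁻¹ with hpdef
  have hple : ∀ k, p k ≤ 1 := by
    intro k
    rw [hpdef]
    simp only
    rw [ENNReal.inv_le_one]
    exact le_trans (by norm_num : (1 : ℝ≥0∞) ≤ 2) le_add_self
  have hpinj : Function.Injective p := by
    intro k l hkl
    have h2 : ((k : ℝ≥0∞) + 2) = ((l : ℝ≥0∞) + 2) := inv_inj.mp hkl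
    have h3 : (k : ℝ≥0∞) = (l : ℝ≥0∞) :=
      (ENNReal.add_left_inj (by norm_num)).mp h2
    exact_mod_cast h3
  -- membership in P_n
  have hmem : ∀ k, MemPn d n (Metric.ball (0 : EuclideanSpace ℝ (Fin d)) R)
      (NoBLWAux.mu d y (p k)) := by
    intro k
    refine ⟨NoBLWAux.mu_prob (hple k), {0, y}, ?_, ?_, ?_⟩
    · exact le_trans (Finset.card_insert_le _ _) (by simpa using hn)
    · intro z hz
      simp only [Finset.coe_insert, Finset.coe_singleton, Set.mem_insert_iff,
        Set.mem_singleton_iff] at hz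
      rcases hz with rfl | rfl
      · simpa using hR
      · simp only [Metric.mem_ball, dist_zero_right]
        rw [hynorm]; linarith
    · have : ((({0, y} : Finset (EuclideanSpace ℝ (Fin d))) : Set (EuclideanSpace ℝ (Fin d))))
          = ({0, y} : Set (EuclideanSpace ℝ (Fin d))) := by
        simp
      rw [this]
      exact NoBLWAux.mu_compl y (p k)
  -- distances between the images
  set v : ℕ → EuclideanSpace ℝ (Fin m) := fun k => E (NoBLWAux.mu d y (p k)) with hvdef
  have hWinf : ∀ k l, k ≠ l →
      Winf d (NoBLWAux.mu d y (p k)) (NoBLWAux.mu d y (p l)) = ‖y‖ :=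
    fun k l hkl => NoBLWAux.winf_eq hy0 (hple k) (hple l) (fun h => hkl (hpinj h))
  have hsep : ∀ k l, k ≠ l → c * ‖y‖ ≤ ‖v k - v l‖ := by
    intro k l hkl
    have := (H _ _ (hmem k) (hmem l)).1
    rwa [hWinf k l hkl] at this
  have hbd : ∀ k l, k ≠ l → ‖v k - v l‖ ≤ C * ‖y‖ := by
    intro k l hkl
    have := (H _ _ (hmem k) (hmem l)).2
    rwa [hWinf k l hkl] at this
  -- all points lie in a fixed closed ball
  have hball : ∀ k, v k ∈ Metric.closedBall (v 0) (C * ‖y‖) := by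
    intro k
    rcases eq_or_ne k 0 with rfl | hk
    · exact Metric.mem_closedBall_self (mul_nonneg (hc.le.trans hcC) hypos.le)
    · rw [Metric.mem_closedBall, dist_eq_norm]
      exact hbd k 0 hk
  obtain ⟨x, -, φ, hφ, hconv⟩ :=
    tendsto_subseq_of_bounded Metric.isBounded_closedBall hball
  have hcauchy := hconv.cauchySeq
  rw [Metric.cauchySeq_iff] at hcauchy
  obtain ⟨N, hN⟩ := hcauchy (c * ‖y‖) (mul_pos hc hypos)
  have hlt := hN N le_rfl (N + 1) (Nat.le_succ N)
  have hne : φ N ≠ φ (N + 1) := fun h => (Nat.lt_irrefl _ (h ▸ hφ (Nat.lt_succ_self N)))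
  have := hsep (φ N) (φ (N + 1)) hne
  rw [Function.comp_apply, Function.comp_apply, dist_eq_norm] at hlt
  linarith
end
end

section
/- Let d ≥ 1, n ≥ 1, m ≥ 1, let Ω ⊆ ℝ^d be an open ball centered at the origin, let p ∈ [1,∞), and let E : P_n(Ω) → ℝ^m satisfy E(δ_0) = 0 and ‖E(μ) − E(ν)‖ ≤ C·W_p(μ,ν) for all μ, ν ∈ P_n(Ω), for some constant C < ∞. Then for all μ, ν ∈ P_n(Ω) with ‖μ‖_{W_p} = 1 and 0 < ‖ν‖_{W_p} ≤ 1, one has ‖E(μ) − ‖ν‖_{W_p}·E((1/‖ν‖_{W_p})·ν)‖ ≤ 3C·W_p(μ,ν). -/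
open MeasureTheory ENNReal Filter

noncomputable section

section Aux

variable {d : ℕ}
local notation "Ed" => EuclideanSpace ℝ (Fin d)

lemma aux_meas_cost (p : ℝ) :
    Measurable fun q : Ed × Ed => (‖q.1 - q.2‖₊ : ℝ≥0∞) ^ p := by fun_prop

lemma aux_meas_nrm (p : ℝ) : Measurable fun x : Ed => (‖x‖₊ : ℝ≥0∞) ^ p := by fun_prop

lemma aux_isCoupling_prod (μ ν : Measure Ed) [IsProbabilityMeasure μ] [IsProbabilityMeasure ν] :
    IsCoupling (μ.prod ν) μ ν := by
  refine ⟨inferInstance, ?_, ?_⟩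
  · rw [← Measure.fst, Measure.fst_prod]
  · rw [← Measure.snd, Measure.snd_prod]

lemma aux_isCoupling_map (μ : Measure Ed) [IsProbabilityMeasure μ] (f g : Ed → Ed)
    (hf : Measurable f) (hg : Measurable g) :
    IsCoupling (μ.map (fun x => (f x, g x))) (μ.map f) (μ.map g) := by
  have hfg : Measurable fun x => (f x, g x) := hf.prodMk hg
  refine ⟨Measure.isProbabilityMeasure_map hfg.aemeasurable, ?_, ?_⟩
  · rw [Measure.map_map measurable_fst hfg]; rfl
  · rw [Measure.map_map measurable_snd hfg]; rfl

lemma aux_cost_map (μ : Measure Ed) (p : ℝ) (f g : Ed → Ed)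
    (hf : Measurable f) (hg : Measurable g) :
    ∫⁻ q, (‖q.1 - q.2‖₊ : ℝ≥0∞) ^ p ∂(μ.map (fun x => (f x, g x)))
      = ∫⁻ x, (‖f x - g x‖₊ : ℝ≥0∞) ^ p ∂μ := by
  rw [lintegral_map (aux_meas_cost p) (hf.prodMk hg)]

lemma aux_marg_fst (μ ν : Measure Ed) (p : ℝ) (π : Measure (Ed × Ed)) (hπ : IsCoupling π μ ν) :
    ∫⁻ q, (‖q.1‖₊ : ℝ≥0∞) ^ p ∂π = ∫⁻ x, (‖x‖₊ : ℝ≥0∞) ^ p ∂μ := by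
  rw [← hπ.2.1, lintegral_map (aux_meas_nrm p) measurable_fst]

lemma aux_marg_snd (μ ν : Measure Ed) (p : ℝ) (π : Measure (Ed × Ed)) (hπ : IsCoupling π μ ν) :
    ∫⁻ q, (‖q.2‖₊ : ℝ≥0∞) ^ p ∂π = ∫⁻ x, (‖x‖₊ : ℝ≥0∞) ^ p ∂ν := by
  rw [← hπ.2.2, lintegral_map (aux_meas_nrm p) measurable_snd]

lemma aux_cost_dirac (μ : Measure Ed) (p : ℝ) (π : Measure (Ed × Ed))
    (hπ : IsCoupling π μ (Measure.dirac 0)) :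
    ∫⁻ q, (‖q.1 - q.2‖₊ : ℝ≥0∞) ^ p ∂π = ∫⁻ x, (‖x‖₊ : ℝ≥0∞) ^ p ∂μ := by
  have hz : ∀ᵐ q : Ed × Ed ∂π, q.2 = 0 := by
    have h0 : π (Prod.snd ⁻¹' ({0}ᶜ : Set Ed)) = 0 := by
      rw [← Measure.map_apply measurable_snd (measurableSet_singleton 0).compl, hπ.2.2,
        Measure.dirac_apply' _ (measurableSet_singleton 0).compl]
      simp
    filter_upwards [measure_eq_zero_iff_ae_notMem.mp h0] with q hq
    simpa using hq
  calc ∫⁻ q, (‖q.1 - q.2‖₊ : ℝ≥0∞) ^ p ∂π = ∫⁻ q, (‖q.1‖₊ : ℝ≥0∞) ^ p ∂π := by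
        refine lintegral_congr_ae ?_
        filter_upwards [hz] with q hq
        rw [hq, sub_zero]
    _ = _ := aux_marg_fst μ (Measure.dirac 0) p π hπ

/-- The `W_p` distance to the Dirac measure at the origin. -/
lemma aux_Wp_dirac (μ : Measure Ed) [IsProbabilityMeasure μ] (p : ℝ) :
    Wp d p μ (Measure.dirac 0) = ((∫⁻ x, (‖x‖₊ : ℝ≥0∞) ^ p ∂μ) ^ (1/p)).toReal := by
  unfold Wp
  congr 2
  refine le_antisymm ?_ (le_iInf₂ fun π hπ => (aux_cost_dirac μ p π hπ).ge)
  refine le_trans (iInf₂_le (μ.prod (Measure.dirac 0)) ?_) ?_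
  · exact aux_isCoupling_prod μ (Measure.dirac 0)
  · exact (aux_cost_dirac μ p _ (aux_isCoupling_prod μ (Measure.dirac 0))).le

/-- Extract the moment integral from the value of `W_p(μ, δ_0)`. -/
lemma aux_moment_of_Wp_dirac (μ : Measure Ed) [IsProbabilityMeasure μ] (p : ℝ) (hp : 0 < p)
    (t : ℝ) (ht : 0 < t) (h : Wp d p μ (Measure.dirac 0) = t) :
    ∫⁻ x, (‖x‖₊ : ℝ≥0∞) ^ p ∂μ = ENNReal.ofReal t ^ p := by
  rw [aux_Wp_dirac μ p] at h
  set a := (∫⁻ x, (‖x‖₊ : ℝ≥0∞) ^ p ∂μ) ^ (1/p) with ha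
  have hane : a ≠ ⊤ := by
    intro h'
    rw [h', ENNReal.toReal_top] at h
    exact absurd h.symm ht.ne'
  have haofReal : a = ENNReal.ofReal t := by rw [← h, ENNReal.ofReal_toReal hane]
  have : (∫⁻ x, (‖x‖₊ : ℝ≥0∞) ^ p ∂μ) = a ^ p := by
    rw [ha, ← ENNReal.rpow_mul, one_div_mul_cancel hp.ne', ENNReal.rpow_one]
  rw [this, haofReal]

lemma aux_I_smul (ν : Measure Ed) (p : ℝ) (hp : 0 ≤ p) (c : ℝ) :
    ∫⁻ x, (‖c • x‖₊ : ℝ≥0∞) ^ p ∂ν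
      = (‖c‖₊ : ℝ≥0∞) ^ p * ∫⁻ x, (‖x‖₊ : ℝ≥0∞) ^ p ∂ν := by
  simp_rw [nnnorm_smul, ENNReal.coe_mul, ENNReal.mul_rpow_of_nonneg _ _ hp]
  rw [lintegral_const_mul _ (aux_meas_nrm p)]

/-- Upper bound on `W_p` from a single coupling. -/
lemma aux_Wp_le (μ ν : Measure Ed) (p : ℝ) (hp : 0 < p) (π : Measure (Ed × Ed))
    (hπ : IsCoupling π μ ν) (r : ℝ) (hr : 0 ≤ r)
    (hc : ∫⁻ q, (‖q.1 - q.2‖₊ : ℝ≥0∞) ^ p ∂π ≤ ENNReal.ofReal r ^ p) :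
    Wp d p μ ν ≤ r := by
  have h1 : (⨅ π' ∈ {π' : Measure (Ed × Ed) | IsCoupling π' μ ν},
      ∫⁻ q, (‖q.1 - q.2‖₊ : ℝ≥0∞) ^ p ∂π') ≤ ENNReal.ofReal r ^ p :=
    le_trans (iInf₂_le π hπ) hc
  have h2 := ENNReal.rpow_le_rpow h1 (by positivity : (0:ℝ) ≤ 1/p)
  rw [← ENNReal.rpow_mul, mul_one_div_cancel hp.ne', ENNReal.rpow_one] at h2
  have h3 := ENNReal.toReal_mono ENNReal.ofReal_ne_top h2
  rwa [ENNReal.toReal_ofReal hr] at h3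

/-- Reverse triangle inequality against the origin: `‖μ‖_{W_p} - ‖ν‖_{W_p} ≤ W_p(μ,ν)`. -/
lemma aux_Wp_triangle_zero (μ ν : Measure Ed) [IsProbabilityMeasure μ] [IsProbabilityMeasure ν]
    (p : ℝ) (hp1 : 1 ≤ p)
    (hIμ : ∫⁻ x, (‖x‖₊ : ℝ≥0∞) ^ p ∂μ = 1) (t : ℝ) (ht : 0 ≤ t) (ht1 : t ≤ 1)
    (hIν : ∫⁻ x, (‖x‖₊ : ℝ≥0∞) ^ p ∂ν = ENNReal.ofReal t ^ p) :
    1 - t ≤ Wp d p μ ν := by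
  have hp0 : (0:ℝ) < p := lt_of_lt_of_le one_pos hp1
  have hpinv : p * (1/p) = 1 := mul_one_div_cancel hp0.ne'
  have hIν' : (∫⁻ x, (‖x‖₊ : ℝ≥0∞) ^ p ∂ν) ^ (1/p) = ENNReal.ofReal t := by
    rw [hIν, ← ENNReal.rpow_mul, hpinv, ENNReal.rpow_one]
  have keyA : ∀ π : Measure (Ed × Ed), IsCoupling π μ ν →
      (1 : ℝ≥0∞) ≤ (∫⁻ q, (‖q.1 - q.2‖₊ : ℝ≥0∞) ^ p ∂π) ^ (1/p) + ENNReal.ofReal t := by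
    intro π hπ
    haveI := hπ.1
    set f : Ed × Ed → ℝ≥0∞ := fun q => (‖q.1 - q.2‖₊ : ℝ≥0∞) with hf
    set g : Ed × Ed → ℝ≥0∞ := fun q => (‖q.2‖₊ : ℝ≥0∞) with hg
    have h1 : ∫⁻ q, (‖q.1‖₊ : ℝ≥0∞) ^ p ∂π ≤ ∫⁻ q, (f + g) q ^ p ∂π := by
      refine lintegral_mono fun q => ENNReal.rpow_le_rpow ?_ hp0.le
      simp only [hf, hg, Pi.add_apply, f, g]
      rw [← ENNReal.coe_add, ENNReal.coe_le_coe]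
      calc ‖q.1‖₊ = ‖q.1 - q.2 + q.2‖₊ := by rw [sub_add_cancel]
        _ ≤ ‖q.1 - q.2‖₊ + ‖q.2‖₊ := nnnorm_add_le _ _
    have h2 : (∫⁻ q, (f + g) q ^ p ∂π) ^ (1/p) ≤
        (∫⁻ q, f q ^ p ∂π) ^ (1/p) + (∫⁻ q, g q ^ p ∂π) ^ (1/p) :=
      ENNReal.lintegral_Lp_add_le (by fun_prop) (by fun_prop) hp1
    have h3 : (∫⁻ q, (‖q.1‖₊ : ℝ≥0∞) ^ p ∂π) ^ (1/p) ≤ (∫⁻ q, (f + g) q ^ p ∂π) ^ (1/p) :=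
      ENNReal.rpow_le_rpow h1 (by positivity)
    rw [aux_marg_fst μ ν p π hπ, hIμ, ENNReal.one_rpow] at h3
    have h4 : (∫⁻ q, g q ^ p ∂π) ^ (1/p) = ENNReal.ofReal t := by
      rw [show (∫⁻ q, g q ^ p ∂π) = ∫⁻ q, (‖q.2‖₊ : ℝ≥0∞) ^ p ∂π from rfl,
        aux_marg_snd μ ν p π hπ, hIν']
    calc (1:ℝ≥0∞) ≤ (∫⁻ q, (f + g) q ^ p ∂π) ^ (1/p) := h3
      _ ≤ (∫⁻ q, f q ^ p ∂π) ^ (1/p) + (∫⁻ q, g q ^ p ∂π) ^ (1/p) := h2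
      _ = (∫⁻ q, (‖q.1 - q.2‖₊ : ℝ≥0∞) ^ p ∂π) ^ (1/p) + ENNReal.ofReal t := by rw [h4]
  have keyC : ENNReal.ofReal (1 - t) ^ p ≤
      ⨅ π ∈ {π : Measure (Ed × Ed) | IsCoupling π μ ν},
        ∫⁻ q, (‖q.1 - q.2‖₊ : ℝ≥0∞) ^ p ∂π := by
    refine le_iInf₂ fun π hπ => ?_
    have hB : ENNReal.ofReal (1 - t) ≤ (∫⁻ q, (‖q.1 - q.2‖₊ : ℝ≥0∞) ^ p ∂π) ^ (1/p) := by
      rw [ENNReal.ofReal_sub _ ht, ENNReal.ofReal_one]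
      exact tsub_le_iff_right.mpr (keyA π hπ)
    calc ENNReal.ofReal (1 - t) ^ p
        ≤ ((∫⁻ q, (‖q.1 - q.2‖₊ : ℝ≥0∞) ^ p ∂π) ^ (1/p)) ^ p := ENNReal.rpow_le_rpow hB hp0.le
      _ = _ := by rw [← ENNReal.rpow_mul, one_div_mul_cancel hp0.ne', ENNReal.rpow_one]
  have keyD : (⨅ π ∈ {π : Measure (Ed × Ed) | IsCoupling π μ ν},
      ∫⁻ q, (‖q.1 - q.2‖₊ : ℝ≥0∞) ^ p ∂π) ≠ ⊤ := by
    have hπ := aux_isCoupling_prod μ ν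
    set π := μ.prod ν
    set f : Ed × Ed → ℝ≥0∞ := fun q => (‖q.1‖₊ : ℝ≥0∞) with hf
    set g : Ed × Ed → ℝ≥0∞ := fun q => (‖q.2‖₊ : ℝ≥0∞) with hg
    have h1 : ∫⁻ q, (‖q.1 - q.2‖₊ : ℝ≥0∞) ^ p ∂π ≤ ∫⁻ q, (f + g) q ^ p ∂π := by
      refine lintegral_mono fun q => ENNReal.rpow_le_rpow ?_ hp0.le
      simp only [hf, hg, Pi.add_apply, f, g]
      rw [← ENNReal.coe_add, ENNReal.coe_le_coe]
      exact nnnorm_sub_le _ _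
    have h2 : (∫⁻ q, (f + g) q ^ p ∂π) ^ (1/p) ≤
        (∫⁻ q, f q ^ p ∂π) ^ (1/p) + (∫⁻ q, g q ^ p ∂π) ^ (1/p) :=
      ENNReal.lintegral_Lp_add_le (by fun_prop) (by fun_prop) hp1
    have h4 : (∫⁻ q, f q ^ p ∂π) ^ (1/p) = 1 := by
      rw [show (∫⁻ q, f q ^ p ∂π) = ∫⁻ q, (‖q.1‖₊ : ℝ≥0∞) ^ p ∂π from rfl,
        aux_marg_fst μ ν p π hπ, hIμ, ENNReal.one_rpow]
    have h5 : (∫⁻ q, g q ^ p ∂π) ^ (1/p) = ENNReal.ofReal t := by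
      rw [show (∫⁻ q, g q ^ p ∂π) = ∫⁻ q, (‖q.2‖₊ : ℝ≥0∞) ^ p ∂π from rfl,
        aux_marg_snd μ ν p π hπ, hIν']
    have h6 : (∫⁻ q, (‖q.1 - q.2‖₊ : ℝ≥0∞) ^ p ∂π) ≤ (1 + ENNReal.ofReal t) ^ p := by
      have := ENNReal.rpow_le_rpow (le_trans (ENNReal.rpow_le_rpow h1 (by positivity :
        (0:ℝ) ≤ 1/p)) h2) hp0.le
      rw [← ENNReal.rpow_mul, one_div_mul_cancel hp0.ne', ENNReal.rpow_one, h4, h5] at this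
      exact this
    refine ne_top_of_le_ne_top ?_ (le_trans (iInf₂_le π hπ) h6)
    exact (ENNReal.rpow_lt_top_of_nonneg hp0.le (by finiteness)).ne
  have hmain := ENNReal.rpow_le_rpow keyC (by positivity : (0:ℝ) ≤ 1/p)
  rw [← ENNReal.rpow_mul, mul_one_div_cancel hp0.ne', ENNReal.rpow_one] at hmain
  have hfin : (⨅ π ∈ {π : Measure (Ed × Ed) | IsCoupling π μ ν},
      ∫⁻ q, (‖q.1 - q.2‖₊ : ℝ≥0∞) ^ p ∂π) ^ (1/p) ≠ ⊤ :=
    (ENNReal.rpow_lt_top_of_nonneg (by positivity) keyD).ne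
  have h7 := ENNReal.toReal_mono hfin hmain
  rwa [ENNReal.toReal_ofReal (by linarith)] at h7

end Aux

/-- If `E : P_n(Ω) → ℝ^m` satisfies `E(δ_0) = 0` and is upper-Lipschitz
with constant `C` w.r.t. `W_p`, then for `μ, ν ∈ P_n(Ω)` with `‖μ‖_{W_p} = 1` and
`0 < ‖ν‖_{W_p} ≤ 1`,
`‖E(μ) − ‖ν‖_{W_p}·E((1/‖ν‖_{W_p})·ν)‖ ≤ 3C·W_p(μ,ν)`. -/
theorem homogenization_error_bound_Wp (d n m : ℕ) (hd : 1 ≤ d) (hn : 1 ≤ n) (hm : 1 ≤ m)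
    (Ω : Set (EuclideanSpace ℝ (Fin d)))
    (hΩ : ∃ R : ℝ, 0 < R ∧ Ω = Metric.ball (0 : EuclideanSpace ℝ (Fin d)) R)
    (p : ℝ) (hp : 1 ≤ p)
    (E : Measure (EuclideanSpace ℝ (Fin d)) → EuclideanSpace ℝ (Fin m)) (C : ℝ)
    (hE0 : E (Measure.dirac (0 : EuclideanSpace ℝ (Fin d))) = 0)
    (hlip : ∀ μ ν : Measure (EuclideanSpace ℝ (Fin d)), MemPn d n Ω μ → MemPn d n Ω ν →
      ‖E μ - E ν‖ ≤ C * Wp d p μ ν) :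
    ∀ μ ν : Measure (EuclideanSpace ℝ (Fin d)), MemPn d n Ω μ → MemPn d n Ω ν →
      Wp d p μ (Measure.dirac 0) = 1 →
      0 < Wp d p ν (Measure.dirac 0) → Wp d p ν (Measure.dirac 0) ≤ 1 →
      MemPn d n Ω (scaleMeasure d (Wp d p ν (Measure.dirac 0))⁻¹ ν) →
      ‖E μ - Wp d p ν (Measure.dirac 0) •
          E (scaleMeasure d (Wp d p ν (Measure.dirac 0))⁻¹ ν)‖
        ≤ 3 * C * Wp d p μ ν := by
  intro μ ν hμ hν hμ1 hνpos hν1 hν'mem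
  have hp0 : (0:ℝ) < p := lt_of_lt_of_le one_pos hp
  haveI : IsProbabilityMeasure μ := hμ.1
  haveI : IsProbabilityMeasure ν := hν.1
  set t : ℝ := Wp d p ν (Measure.dirac 0) with htdef
  set ν' : Measure (EuclideanSpace ℝ (Fin d)) := scaleMeasure d t⁻¹ ν with hν'def
  haveI : IsProbabilityMeasure ν' := hν'mem.1
  have ht0 : 0 < t := hνpos
  have htinv1 : (1:ℝ) ≤ t⁻¹ := one_le_inv_iff₀.mpr ⟨ht0, hν1⟩
  -- δ_0 ∈ P_n(Ω)
  have hδ0 : MemPn d n Ω (Measure.dirac (0 : EuclideanSpace ℝ (Fin d))) := by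
    obtain ⟨R, hR, hΩeq⟩ := hΩ
    refine ⟨inferInstance, {0}, ?_, ?_, ?_⟩
    · simpa using hn
    · intro x hx
      simp only [Finset.coe_singleton, Set.mem_singleton_iff] at hx
      rw [hx, hΩeq]
      exact Metric.mem_ball_self hR
    · rw [Measure.dirac_apply' _ (by simp : MeasurableSet
        ((↑({0} : Finset (EuclideanSpace ℝ (Fin d))) : Set (EuclideanSpace ℝ (Fin d)))ᶜ))]
      simp
  -- moments
  have hIμ : ∫⁻ x, (‖x‖₊ : ℝ≥0∞) ^ p ∂μ = 1 := by
    have := aux_moment_of_Wp_dirac μ p hp0 1 one_pos hμ1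
    rwa [ENNReal.ofReal_one, ENNReal.one_rpow] at this
  have hIν : ∫⁻ x, (‖x‖₊ : ℝ≥0∞) ^ p ∂ν = ENNReal.ofReal t ^ p :=
    aux_moment_of_Wp_dirac ν p hp0 t ht0 rfl
  -- moment of ν'
  have hgmeas : Measurable fun y : EuclideanSpace ℝ (Fin d) => t⁻¹ • y := by fun_prop
  have hIν' : ∫⁻ x, (‖x‖₊ : ℝ≥0∞) ^ p ∂ν' = 1 := by
    rw [hν'def, scaleMeasure, lintegral_map (aux_meas_nrm p) hgmeas,
      aux_I_smul ν p hp0.le t⁻¹, hIν]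
    rw [← enorm_eq_nnnorm, Real.enorm_eq_ofReal (by positivity), ← ENNReal.mul_rpow_of_nonneg _ _ hp0.le,
      ← ENNReal.ofReal_mul (by positivity), inv_mul_cancel₀ ht0.ne', ENNReal.ofReal_one,
      ENNReal.one_rpow]
  -- W_p(ν', δ_0) = 1
  have hWν'0 : Wp d p ν' (Measure.dirac 0) = 1 := by
    rw [aux_Wp_dirac ν' p, hIν', ENNReal.one_rpow, ENNReal.toReal_one]
  -- W_p(ν, ν') ≤ 1 - t
  have hWνν' : Wp d p ν ν' ≤ 1 - t := by
    have hcoup0 := aux_isCoupling_map ν (fun y => y) (fun y => t⁻¹ • y) measurable_id hgmeas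
    rw [Measure.map_id'] at hcoup0
    have hcoup : IsCoupling (ν.map (fun x => (x, t⁻¹ • x))) ν ν' := hcoup0
    refine aux_Wp_le ν ν' p hp0 (ν.map (fun x => (x, t⁻¹ • x))) hcoup (1 - t) (by linarith) ?_
    rw [lintegral_map (aux_meas_cost p) (show Measurable fun x : EuclideanSpace ℝ (Fin d) => (x, t⁻¹ • x) by fun_prop)]
    have hptw : ∀ x : EuclideanSpace ℝ (Fin d), x - t⁻¹ • x = (1 - t⁻¹) • x := by
      intro x; rw [sub_smul, one_smul]
    simp_rw [hptw]
    rw [aux_I_smul ν p hp0.le (1 - t⁻¹), hIν]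
    rw [← enorm_eq_nnnorm, Real.enorm_eq_ofReal_abs, abs_of_nonpos (by linarith),
      ← ENNReal.mul_rpow_of_nonneg _ _ hp0.le, ← ENNReal.ofReal_mul (by linarith)]
    have : -(1 - t⁻¹) * t = 1 - t := by field_simp; ring
    rw [this]
  -- 1 - t ≤ W_p(μ, ν)
  have htri : 1 - t ≤ Wp d p μ ν :=
    aux_Wp_triangle_zero μ ν p hp hIμ t ht0.le hν1 hIν
  -- C ≥ 0
  have hC : 0 ≤ C := by
    have h := hlip ν (Measure.dirac 0) hν hδ0
    by_contra hneg
    push_neg at hneg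
    nlinarith [norm_nonneg (E ν - E (Measure.dirac (0 : EuclideanSpace ℝ (Fin d))))]
  -- norm bounds
  have hb1 : ‖E μ - E ν‖ ≤ C * Wp d p μ ν := hlip μ ν hμ hν
  have hb2 : ‖E ν - E ν'‖ ≤ C * (1 - t) :=
    le_trans (hlip ν ν' hν hν'mem) (mul_le_mul_of_nonneg_left hWνν' hC)
  have hb3 : ‖E ν'‖ ≤ C := by
    have h := hlip ν' (Measure.dirac 0) hν'mem hδ0
    rwa [hE0, sub_zero, hWν'0, mul_one] at h
  -- algebraic decomposition
  have hdec : E μ - t • E ν' = (E μ - E ν) + (E ν - E ν') + (1 - t) • E ν' := by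
    rw [sub_smul, one_smul]
    abel
  have hnorm : ‖E μ - t • E ν'‖ ≤ ‖E μ - E ν‖ + ‖E ν - E ν'‖ + (1 - t) * ‖E ν'‖ := by
    rw [hdec]
    refine le_trans (norm_add_le _ _) ?_
    have : ‖(1 - t) • E ν'‖ = (1 - t) * ‖E ν'‖ := by
      rw [norm_smul, Real.norm_of_nonneg (by linarith)]
    rw [this]
    exact add_le_add_left (norm_add_le _ _) _
  have hW0 : 0 ≤ Wp d p μ ν := by
    have := htri
    nlinarith [norm_nonneg (E ν'), mul_le_mul_of_nonneg_left htri hC]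
  calc ‖E μ - t • E ν'‖ ≤ ‖E μ - E ν‖ + ‖E ν - E ν'‖ + (1 - t) * ‖E ν'‖ := hnorm
    _ ≤ C * Wp d p μ ν + C * (1 - t) + (1 - t) * C := by
        refine add_le_add (add_le_add hb1 hb2) ?_
        exact mul_le_mul_of_nonneg_left hb3 (by linarith)
    _ ≤ 3 * C * Wp d p μ ν := by nlinarith [mul_le_mul_of_nonneg_left htri hC]
end
end

section
/- Let d ≥ 1, n ≥ 2, m ≥ 1, let Ω ⊆ ℝ^d be an open ball centered at the origin, let p ∈ [1,∞), and let E : P_n(Ω) → ℝ^m be homogeneous (E(α·μ) = α·E(μ) for all μ ∈ P_n(Ω), α ∈ [0,1]) and upper-Lipschitz with constant C with respect to W_p. Fix distinct nonzero points x_1, …, x_k ∈ Ω with 1 ≤ k < n and weights p_1, …, p_k > 0 summing to 1, and set μ(δ) := (1−δ)·δ_0-mass plus δ·Σ_i p_i δ_{x_i}, i.e. μ(δ) = Σ_{i=1}^k δp_i δ_{x_i} + (1−δ)δ_0 for δ ∈ [0,1]. Suppose (δ_t)_{t≥1} satisfies 0 < δ_{t+1} ≤ δ_t/2 ≤ 1/2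 for all t, and suppose the limit L := lim_{t→∞} E(μ(δ_t))/δ_t^{1/p} exists in ℝ^m. Then, with μ̃_t := (δ_t/δ_{t−1})^{1/p}·μ(δ_{t−1}) (pushforward of μ(δ_{t−1}) under x ↦ (δ_t/δ_{t−1})^{1/p}x), one has ‖E(μ(δ_t)) − E(μ̃_t)‖ / W_p(μ(δ_t), μ̃_t) → 0 as t → ∞; consequently E is not lower-Lipschitz with respect to W_p. -/
open MeasureTheory ENNReal Filter

noncomputable section

lemma coupling_lintegral_lb {d : ℕ} (p : ℝ) (hp : 0 ≤ p)
    (ν₁ ν₂ : Measure (EuclideanSpace ℝ (Fin d)))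
    (π : Measure (EuclideanSpace ℝ (Fin d) × EuclideanSpace ℝ (Fin d)))
    (hπ : IsCoupling π ν₁ ν₂)
    (A : Set (EuclideanSpace ℝ (Fin d))) (hA : MeasurableSet A)
    (h0A : (0 : EuclideanSpace ℝ (Fin d)) ∉ A)
    (hν₂A : ν₂ (({0} ∪ A)ᶜ) = 0)
    (s : ℝ) (hs : 0 ≤ s) (hsA : ∀ y ∈ A, s ≤ ‖y‖)
    (ε : ℝ≥0∞) (hε : ν₂ {0} + ε ≤ ν₁ {0}) :
    ENNReal.ofReal (s ^ p) * ε ≤ ∫⁻ q, (‖q.1 - q.2‖₊ : ℝ≥0∞) ^ p ∂π := by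
  obtain ⟨hprob, hfst, hsnd⟩ := hπ
  have h1 : ν₁ {0} = π (Prod.fst ⁻¹' {0}) := by
    rw [← hfst, Measure.map_apply measurable_fst (measurableSet_singleton 0)]
  have h2 : ν₂ {0} = π (Prod.snd ⁻¹' {0}) := by
    rw [← hsnd, Measure.map_apply measurable_snd (measurableSet_singleton 0)]
  have h3 : π (Prod.snd ⁻¹' (({0} ∪ A)ᶜ)) = 0 := by
    rw [← Measure.map_apply measurable_snd, hsnd]
    · exact hν₂A
    · exact (((measurableSet_singleton 0).union hA).compl)
  set G : Set (EuclideanSpace ℝ (Fin d) × EuclideanSpace ℝ (Fin d)) :=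
    ({0} : Set (EuclideanSpace ℝ (Fin d))) ×ˢ A with hGdef
  have hGmeas : MeasurableSet G := (measurableSet_singleton 0).prod hA
  have hsub : (Prod.fst ⁻¹' ({0} : Set (EuclideanSpace ℝ (Fin d)))) ⊆
      (Prod.snd ⁻¹' ({0} : Set (EuclideanSpace ℝ (Fin d)))) ∪ G ∪
        (Prod.snd ⁻¹' (({0} ∪ A)ᶜ)) := by
    rintro ⟨q1, q2⟩ hq
    by_cases h02 : q2 ∈ ({0} : Set (EuclideanSpace ℝ (Fin d))) ∪ A
    · rcases h02 with h02 | h02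
      · exact Or.inl (Or.inl h02)
      · exact Or.inl (Or.inr ⟨hq, h02⟩)
    · exact Or.inr h02
  have hπG : ε ≤ π G := by
    have hle : ν₁ {0} ≤ ν₂ {0} + π G := by
      calc ν₁ {0} = π (Prod.fst ⁻¹' {0}) := h1
        _ ≤ π ((Prod.snd ⁻¹' ({0} : Set (EuclideanSpace ℝ (Fin d)))) ∪ G) +
            π (Prod.snd ⁻¹' (({0} ∪ A)ᶜ)) := (measure_mono hsub).trans (measure_union_le _ _)
        _ = π ((Prod.snd ⁻¹' ({0} : Set (EuclideanSpace ℝ (Fin d)))) ∪ G) := by rw [h3, add_zero]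
        _ ≤ π (Prod.snd ⁻¹' ({0} : Set (EuclideanSpace ℝ (Fin d)))) + π G := measure_union_le _ _
        _ = ν₂ {0} + π G := by rw [h2]
    have hfin : ν₂ {0} ≠ ⊤ := by
      rw [h2]; exact (measure_lt_top π _).ne
    exact (ENNReal.add_le_add_iff_left hfin).mp (hε.trans hle)
  calc ENNReal.ofReal (s ^ p) * ε ≤ ENNReal.ofReal (s ^ p) * π G := by
        exact mul_le_mul_right hπG _
    _ = ∫⁻ _ in G, ENNReal.ofReal (s ^ p) ∂π := (setLIntegral_const _ _).symm
    _ ≤ ∫⁻ q in G, (‖q.1 - q.2‖₊ : ℝ≥0∞) ^ p ∂π := by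
        apply setLIntegral_mono' hGmeas
        rintro ⟨q1, q2⟩ ⟨hq1, hq2⟩
        have hq1' : q1 = 0 := hq1
        have : s ≤ ‖q1 - q2‖ := by
          rw [hq1', zero_sub, norm_neg]; exact hsA q2 hq2
        rw [← enorm_eq_nnnorm, ← ofReal_norm, ENNReal.ofReal_rpow_of_nonneg (norm_nonneg _) hp]
        exact ENNReal.ofReal_le_ofReal (Real.rpow_le_rpow hs this hp)
    _ ≤ ∫⁻ q, (‖q.1 - q.2‖₊ : ℝ≥0∞) ^ p ∂π := setLIntegral_le_lintegral _ _

lemma coupling_inf_ne_top {d : ℕ} (p : ℝ) (hp : 0 ≤ p)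
    (ν₁ ν₂ : Measure (EuclideanSpace ℝ (Fin d)))
    [IsProbabilityMeasure ν₁] [IsProbabilityMeasure ν₂]
    (S₁ S₂ : Set (EuclideanSpace ℝ (Fin d)))
    (hS₁m : MeasurableSet S₁) (hS₂m : MeasurableSet S₂)
    (h₁ : ν₁ S₁ᶜ = 0) (h₂ : ν₂ S₂ᶜ = 0)
    (M : ℝ) (hb : ∀ q1 ∈ S₁, ∀ q2 ∈ S₂, ‖q1 - q2‖ ^ p ≤ M) :
    (⨅ π ∈ {π : Measure (EuclideanSpace ℝ (Fin d) × EuclideanSpace ℝ (Fin d)) |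
        IsCoupling π ν₁ ν₂},
      ∫⁻ q, (‖q.1 - q.2‖₊ : ℝ≥0∞) ^ p ∂π) ≠ ⊤ := by
  have hmem : (ν₁.prod ν₂) ∈ {π : Measure (EuclideanSpace ℝ (Fin d) × EuclideanSpace ℝ (Fin d)) |
      IsCoupling π ν₁ ν₂} := by
    refine ⟨inferInstance, ?_, ?_⟩
    · simp [Measure.map_fst_prod]
    · simp [Measure.map_snd_prod]
  have hae : ∀ᵐ q ∂(ν₁.prod ν₂), (‖q.1 - q.2‖₊ : ℝ≥0∞) ^ p ≤ ENNReal.ofReal M := by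
    have hnull : (ν₁.prod ν₂) ((S₁ ×ˢ S₂)ᶜ) = 0 := by
      have hsub : (S₁ ×ˢ S₂)ᶜ ⊆ (S₁ᶜ ×ˢ (Set.univ : Set (EuclideanSpace ℝ (Fin d)))) ∪
          ((Set.univ : Set (EuclideanSpace ℝ (Fin d))) ×ˢ S₂ᶜ) := by
        rintro ⟨q1, q2⟩ hq
        by_cases h : q1 ∈ S₁
        · exact Or.inr ⟨trivial, fun h2 => hq ⟨h, h2⟩⟩
        · exact Or.inl ⟨h, trivial⟩
      refine measure_mono_null hsub ?_
      have e1 : (ν₁.prod ν₂) (S₁ᶜ ×ˢ (Set.univ : Set (EuclideanSpace ℝ (Fin d)))) = 0 := by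
        rw [Measure.prod_prod, h₁, zero_mul]
      have e2 : (ν₁.prod ν₂) ((Set.univ : Set (EuclideanSpace ℝ (Fin d))) ×ˢ S₂ᶜ) = 0 := by
        rw [Measure.prod_prod, h₂, mul_zero]
      exact measure_union_null e1 e2
    have haeS : ∀ᵐ q ∂(ν₁.prod ν₂), q ∈ S₁ ×ˢ S₂ := by
      rw [ae_iff]; exact measure_mono_null (fun q hq => hq) hnull
    filter_upwards [haeS] with q hq
    rcases hq with ⟨hq1, hq2⟩
    rw [← enorm_eq_nnnorm, ← ofReal_norm, ENNReal.ofReal_rpow_of_nonneg (norm_nonneg _) hp]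
    exact ENNReal.ofReal_le_ofReal (hb q.1 hq1 q.2 hq2)
  have hle : (⨅ π ∈ {π : Measure (EuclideanSpace ℝ (Fin d) × EuclideanSpace ℝ (Fin d)) |
        IsCoupling π ν₁ ν₂},
      ∫⁻ q, (‖q.1 - q.2‖₊ : ℝ≥0∞) ^ p ∂π) ≤ ENNReal.ofReal M := by
    refine (iInf₂_le _ hmem).trans ?_
    calc ∫⁻ q, (‖q.1 - q.2‖₊ : ℝ≥0∞) ^ p ∂(ν₁.prod ν₂)
        ≤ ∫⁻ _, ENNReal.ofReal M ∂(ν₁.prod ν₂) := lintegral_mono_ae hae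
      _ = ENNReal.ofReal M := by simp
  exact ne_top_of_le_ne_top ofReal_ne_top hle

/-- Let `E : P_n(Ω) → ℝ^m` be homogeneous and upper-Lipschitz with
constant `C` w.r.t. `W_p`, on `Ω` an open ball centered at the origin. Fix distinct nonzero
points `x_1,…,x_k ∈ Ω` (`1 ≤ k < n`) and positive weights summing to `1`, and let
`μ(δ) = Σ_i δ p_i δ_{x_i} + (1−δ) δ_0`. If `(δ_t)` satisfies `0 < δ_{t+1} ≤ δ_t/2 ≤ 1/2`
and `L = lim_t E(μ(δ_t))/δ_t^{1/p}` exists, then with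
`μ̃_{t+1} = (δ_{t+1}/δ_t)^{1/p}·μ(δ_t)` one has
`‖E(μ(δ_{t+1})) − E(μ̃_{t+1})‖ / W_p(μ(δ_{t+1}), μ̃_{t+1}) → 0`, and consequently `E` is
not lower-Lipschitz w.r.t. `W_p`. -/
theorem not_lowerLipschitz_of_homogeneous_Wp (d n m : ℕ) (hd : 1 ≤ d) (hn : 2 ≤ n)
    (hm : 1 ≤ m)
    (Ω : Set (EuclideanSpace ℝ (Fin d)))
    (hΩ : ∃ R : ℝ, 0 < R ∧ Ω = Metric.ball (0 : EuclideanSpace ℝ (Fin d)) R)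
    (p : ℝ) (hp : 1 ≤ p)
    (E : Measure (EuclideanSpace ℝ (Fin d)) → EuclideanSpace ℝ (Fin m)) (C : ℝ)
    (hhom : ∀ μ' : Measure (EuclideanSpace ℝ (Fin d)), MemPn d n Ω μ' →
      ∀ α : ℝ, 0 ≤ α → α ≤ 1 → E (scaleMeasure d α μ') = α • E μ')
    (hlip : ∀ μ' ν' : Measure (EuclideanSpace ℝ (Fin d)), MemPn d n Ω μ' → MemPn d n Ω ν' →
      ‖E μ' - E ν'‖ ≤ C * Wp d p μ' ν')
    (k : ℕ) (hk1 : 1 ≤ k) (hkn : k < n)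
    (x : Fin k → EuclideanSpace ℝ (Fin d)) (hxΩ : ∀ i, x i ∈ Ω) (hx0 : ∀ i, x i ≠ 0)
    (hxdist : Function.Injective x)
    (w : Fin k → ℝ) (hw : ∀ i, 0 < w i) (hw1 : ∑ i, w i = 1)
    (μ : ℝ → Measure (EuclideanSpace ℝ (Fin d)))
    (hμ : ∀ δ' : ℝ, μ δ' = (∑ i, ENNReal.ofReal (δ' * w i) • Measure.dirac (x i))
        + ENNReal.ofReal (1 - δ') • Measure.dirac (0 : EuclideanSpace ℝ (Fin d)))
    (δ : ℕ → ℝ) (hδpos : ∀ t, 0 < δ (t + 1)) (hδhalf : ∀ t, δ (t + 1) ≤ δ t / 2)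
    (hδ1 : ∀ t, δ t / 2 ≤ 1 / 2)
    (L : EuclideanSpace ℝ (Fin m))
    (hL : Filter.Tendsto (fun t : ℕ => ((δ t) ^ (1 / p))⁻¹ • E (μ (δ t)))
      Filter.atTop (nhds L))
    (μtil : ℕ → Measure (EuclideanSpace ℝ (Fin d)))
    (hμtil : ∀ t : ℕ, μtil (t + 1) = scaleMeasure d ((δ (t + 1) / δ t) ^ (1 / p)) (μ (δ t))) :
    Filter.Tendsto
      (fun t : ℕ =>
        ‖E (μ (δ (t + 1))) - E (μtil (t + 1))‖ / Wp d p (μ (δ (t + 1))) (μtil (t + 1)))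
      Filter.atTop (nhds 0) ∧
    ¬ ∃ c : ℝ, 0 < c ∧
      ∀ μ' ν' : Measure (EuclideanSpace ℝ (Fin d)), MemPn d n Ω μ' → MemPn d n Ω ν' →
        c * Wp d p μ' ν' ≤ ‖E μ' - E ν'‖ := by
  classical
  obtain ⟨R, hRpos, hΩeq⟩ := hΩ
  have hppos : (0:ℝ) < p := lt_of_lt_of_le one_pos hp
  have hpne : p ≠ 0 := hppos.ne'
  have hpinv : (0:ℝ) < 1 / p := by positivity
  have hδpos' : ∀ t, 0 < δ t := by
    intro t
    cases t with
    | zero => have h1 := hδpos 0; have h2 := hδhalf 0; linarith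
    | succ t => exact hδpos t
  have hδle1 : ∀ t, δ t ≤ 1 := fun t => by have := hδ1 t; linarith
  haveI : Nonempty (Fin k) := ⟨⟨0, hk1⟩⟩
  set r : ℝ := Finset.univ.inf' Finset.univ_nonempty (fun i => ‖x i‖) with hrdef
  have hrle : ∀ i, r ≤ ‖x i‖ := fun i => Finset.inf'_le _ (Finset.mem_univ i)
  have hrpos : 0 < r := by
    rw [hrdef, Finset.lt_inf'_iff]
    exact fun i _ => norm_pos_iff.mpr (hx0 i)
  set S : Finset (EuclideanSpace ℝ (Fin d)) := insert 0 (Finset.image x Finset.univ)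
    with hSdef
  have hxS : ∀ i, x i ∈ S := fun i =>
    Finset.mem_insert_of_mem (Finset.mem_image_of_mem x (Finset.mem_univ i))
  have h0S : (0 : EuclideanSpace ℝ (Fin d)) ∈ S := Finset.mem_insert_self _ _
  have hScard : S.card ≤ n := by
    calc S.card ≤ (Finset.image x Finset.univ).card + 1 := Finset.card_insert_le _ _
      _ ≤ k + 1 := by
          have h := Finset.card_image_le (f := x) (s := Finset.univ)
          simp only [Finset.card_univ, Fintype.card_fin] at h
          omega
      _ ≤ n := hkn
  have hSΩ : (↑S : Set (EuclideanSpace ℝ (Fin d))) ⊆ Ω := by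
    intro z hz
    rw [hSdef] at hz
    simp only [Finset.coe_insert, Set.mem_insert_iff, Finset.coe_image, Set.mem_image,
      Finset.coe_univ, Set.mem_univ, true_and] at hz
    rcases hz with rfl | ⟨i, rfl⟩
    · rw [hΩeq]; exact Metric.mem_ball_self hRpos
    · exact hxΩ i
  have hmuapp : ∀ (δ' : ℝ) (B : Set (EuclideanSpace ℝ (Fin d))),
      μ δ' B = (∑ i, ENNReal.ofReal (δ' * w i) * B.indicator 1 (x i))
        + ENNReal.ofReal (1 - δ') * B.indicator 1 0 := by
    intro δ' B
    rw [hμ δ']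
    simp [Measure.finset_sum_apply, Measure.dirac_apply, smul_eq_mul]
  have hmusum : ∀ δ' : ℝ, 0 ≤ δ' → (∑ i, ENNReal.ofReal (δ' * w i)) = ENNReal.ofReal δ' := by
    intro δ' h
    rw [← ENNReal.ofReal_sum_of_nonneg (fun i _ => mul_nonneg h (hw i).le), ← Finset.mul_sum,
      hw1, mul_one]
  have hmuprob : ∀ δ' : ℝ, 0 ≤ δ' → δ' ≤ 1 → IsProbabilityMeasure (μ δ') := by
    intro δ' h0 h1
    constructor
    rw [hmuapp]
    simp only [Set.indicator_univ, Pi.one_apply, mul_one]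
    rw [hmusum δ' h0, ← ENNReal.ofReal_add h0 (by linarith)]
    norm_num
  have hmuS : ∀ δ' : ℝ, μ δ' ((↑S : Set (EuclideanSpace ℝ (Fin d)))ᶜ) = 0 := by
    intro δ'
    rw [hmuapp]
    have h1 : ∀ i : Fin k,
        (Set.indicator ((↑S : Set (EuclideanSpace ℝ (Fin d)))ᶜ) (1 : EuclideanSpace ℝ (Fin d) → ℝ≥0∞)) (x i) = 0 :=
      fun i => Set.indicator_of_notMem (by simp [hxS i]) _
    have h2 : (Set.indicator ((↑S : Set (EuclideanSpace ℝ (Fin d)))ᶜ) (1 : EuclideanSpace ℝ (Fin d) → ℝ≥0∞)) 0 = 0 :=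
      Set.indicator_of_notMem (by simp [h0S]) _
    simp [h1, h2]
  have hmu0 : ∀ δ' : ℝ, μ δ' {0} = ENNReal.ofReal (1 - δ') := by
    intro δ'
    rw [hmuapp]
    have h1 : ∀ i : Fin k,
        (Set.indicator ({0} : Set (EuclideanSpace ℝ (Fin d))) (1 : EuclideanSpace ℝ (Fin d) → ℝ≥0∞)) (x i) = 0 :=
      fun i => Set.indicator_of_notMem (by simp [hx0 i]) _
    simp [h1]
  have hmuPn : ∀ δ' : ℝ, 0 ≤ δ' → δ' ≤ 1 → MemPn d n Ω (μ δ') :=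
    fun δ' h0 h1 => ⟨hmuprob δ' h0 h1, S, hScard, hSΩ, hmuS δ'⟩
  set α : ℕ → ℝ := fun t => (δ (t+1) / δ t) ^ (1/p) with hαdef
  have hratpos : ∀ t, 0 < δ (t+1) / δ t := fun t => div_pos (hδpos t) (hδpos' t)
  have hratle : ∀ t, δ (t+1) / δ t ≤ 1 := fun t => by
    rw [div_le_one (hδpos' t)]
    linarith [hδhalf t, (hδpos' t).le]
  have hαpos : ∀ t, 0 < α t := fun t => Real.rpow_pos_of_pos (hratpos t) _
  have hαle1 : ∀ t, α t ≤ 1 := fun t => Real.rpow_le_one (hratpos t).le (hratle t) hpinv.le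
  have hmeasα : ∀ t, Measurable (fun y : EuclideanSpace ℝ (Fin d) => α t • y) :=
    fun t => measurable_const_smul _
  have hmutilapp : ∀ (t : ℕ) (B : Set (EuclideanSpace ℝ (Fin d))), MeasurableSet B →
      μtil (t+1) B = μ (δ t) ((fun y => α t • y) ⁻¹' B) := by
    intro t B hB
    rw [hμtil t, scaleMeasure, Measure.map_apply (hmeasα t) hB]
  have hmutil0 : ∀ t, μtil (t+1) {0} = ENNReal.ofReal (1 - δ t) := by
    intro t
    rw [hmutilapp t _ (measurableSet_singleton 0)]
    have h : (fun y : EuclideanSpace ℝ (Fin d) => α t • y) ⁻¹' {0} = {0} := by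
      ext y; simp [smul_eq_zero, (hαpos t).ne']
    rw [h, hmu0]
  set S' : ℕ → Finset (EuclideanSpace ℝ (Fin d)) := fun t => S.image (fun y => α t • y)
    with hS'def
  have hmutilS' : ∀ t, μtil (t+1) ((↑(S' t) : Set (EuclideanSpace ℝ (Fin d)))ᶜ) = 0 := by
    intro t
    rw [hmutilapp t _ (S' t).measurableSet.compl]
    refine measure_mono_null ?_ (hmuS (δ t))
    intro y hy
    simp only [Set.mem_preimage, Set.mem_compl_iff, Finset.mem_coe] at hy ⊢
    intro hyS
    exact hy (Finset.mem_image_of_mem _ hyS)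
  have hmutilprob : ∀ t, IsProbabilityMeasure (μtil (t+1)) := by
    intro t
    rw [hμtil t, scaleMeasure]
    haveI := hmuprob (δ t) (hδpos' t).le (hδle1 t)
    exact Measure.isProbabilityMeasure_map (hmeasα t).aemeasurable
  have hS'Ω : ∀ t, (↑(S' t) : Set (EuclideanSpace ℝ (Fin d))) ⊆ Ω := by
    intro t z hz
    simp only [hS'def, Finset.coe_image, Set.mem_image, Finset.mem_coe] at hz
    obtain ⟨y, hyS, rfl⟩ := hz
    have hyΩ : y ∈ Ω := hSΩ hyS
    rw [hΩeq] at hyΩ ⊢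
    rw [mem_ball_zero_iff] at hyΩ ⊢
    calc ‖α t • y‖ = |α t| * ‖y‖ := by rw [norm_smul, Real.norm_eq_abs]
      _ ≤ 1 * ‖y‖ := by
          apply mul_le_mul_of_nonneg_right _ (norm_nonneg y)
          rw [abs_of_pos (hαpos t)]; exact hαle1 t
      _ < R := by rw [one_mul]; exact hyΩ
  have hmutilPn : ∀ t, MemPn d n Ω (μtil (t+1)) := by
    intro t
    exact ⟨hmutilprob t, S' t, (Finset.card_image_le).trans hScard, hS'Ω t, hmutilS' t⟩
  have hΔpos : ∀ t : ℕ, 0 ≤ δ t - δ (t+1) := by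
    intro t; linarith [hδhalf t, (hδpos' t).le]
  -- lower bound on Wp
  have hWlb : ∀ t, δ (t+1) ^ (1/p) * (r/2) ≤ Wp d p (μ (δ (t+1))) (μtil (t+1)) := by
    intro t
    set A : Set (EuclideanSpace ℝ (Fin d)) := (↑(S' t) : Set (EuclideanSpace ℝ (Fin d))) \ {0}
      with hAdef
    have hAmeas : MeasurableSet A := (S' t).measurableSet.diff (measurableSet_singleton 0)
    have h0A : (0 : EuclideanSpace ℝ (Fin d)) ∉ A := fun h => h.2 rfl
    have hν₂A : μtil (t+1) (({0} ∪ A)ᶜ) = 0 := by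
      refine measure_mono_null (fun y hy => ?_) (hmutilS' t)
      simp only [Set.mem_compl_iff, Set.mem_union, Set.mem_singleton_iff, hAdef,
        Set.mem_diff, Finset.mem_coe, not_or] at hy
      obtain ⟨hy0, hyA⟩ := hy
      simp only [Set.mem_compl_iff, Finset.mem_coe]
      intro hyS'
      exact hyA ⟨hyS', hy0⟩
    have hsA : ∀ y ∈ A, α t * r ≤ ‖y‖ := by
      intro y hy
      obtain ⟨hyS', hy0⟩ := hy
      simp only [hS'def, Finset.coe_image, Set.mem_image, Finset.mem_coe] at hyS'
      obtain ⟨z, hzS, rfl⟩ := hyS'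
      rw [hSdef] at hzS
      rcases Finset.mem_insert.mp hzS with rfl | hz
      · exact absurd (by simp) hy0
      · obtain ⟨i, _, rfl⟩ := Finset.mem_image.mp hz
        rw [norm_smul, Real.norm_eq_abs, abs_of_pos (hαpos t)]
        exact mul_le_mul_of_nonneg_left (hrle i) (hαpos t).le
    have hε : μtil (t+1) {0} + ENNReal.ofReal (δ t - δ (t+1)) ≤ μ (δ (t+1)) {0} := by
      rw [hmutil0 t, hmu0, ← ENNReal.ofReal_add (by linarith [hδle1 t]) (hΔpos t)]
      apply le_of_eq; congr 1; ring
    haveI := hmuprob (δ (t+1)) (hδpos t).le (hδle1 (t+1))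
    haveI := hmutilprob t
    have hinflb : ENNReal.ofReal ((α t * r) ^ p) * ENNReal.ofReal (δ t - δ (t+1)) ≤
        (⨅ π ∈ {π : Measure (EuclideanSpace ℝ (Fin d) × EuclideanSpace ℝ (Fin d)) |
            IsCoupling π (μ (δ (t+1))) (μtil (t+1))},
          ∫⁻ q, (‖q.1 - q.2‖₊ : ℝ≥0∞) ^ p ∂π) := by
      refine le_iInf₂ (fun π hπ => ?_)
      exact coupling_lintegral_lb p hppos.le _ _ π hπ A hAmeas h0A hν₂A (α t * r)
        (mul_nonneg (hαpos t).le hrpos.le) hsA _ hε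
    have hSnorm : ∀ z ∈ (↑S : Set (EuclideanSpace ℝ (Fin d))), ‖z‖ < R := by
      intro z hz
      have := hSΩ hz
      rw [hΩeq, mem_ball_zero_iff] at this
      exact this
    have hS'norm : ∀ z ∈ (↑(S' t) : Set (EuclideanSpace ℝ (Fin d))), ‖z‖ < R := by
      intro z hz
      have := hS'Ω t hz
      rw [hΩeq, mem_ball_zero_iff] at this
      exact this
    have hne : (⨅ π ∈ {π : Measure (EuclideanSpace ℝ (Fin d) × EuclideanSpace ℝ (Fin d)) |
            IsCoupling π (μ (δ (t+1))) (μtil (t+1))},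
          ∫⁻ q, (‖q.1 - q.2‖₊ : ℝ≥0∞) ^ p ∂π) ≠ ⊤ := by
      refine coupling_inf_ne_top p hppos.le _ _ (↑S) (↑(S' t)) S.measurableSet
        (S' t).measurableSet (hmuS _) (hmutilS' t) ((2*R)^p) ?_
      intro q1 hq1 q2 hq2
      have h1 := hSnorm q1 hq1
      have h2 := hS'norm q2 hq2
      have hle : ‖q1 - q2‖ ≤ 2 * R := by
        calc ‖q1 - q2‖ ≤ ‖q1‖ + ‖q2‖ := norm_sub_le _ _
          _ ≤ 2 * R := by linarith
      exact Real.rpow_le_rpow (norm_nonneg _) hle hppos.le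
    simp only [Wp]
    have h1 : (ENNReal.ofReal ((α t * r) ^ p) * ENNReal.ofReal (δ t - δ (t+1))) ^ (1/p) ≤
        (⨅ π ∈ {π : Measure (EuclideanSpace ℝ (Fin d) × EuclideanSpace ℝ (Fin d)) |
            IsCoupling π (μ (δ (t+1))) (μtil (t+1))},
          ∫⁻ q, (‖q.1 - q.2‖₊ : ℝ≥0∞) ^ p ∂π) ^ (1/p) :=
      ENNReal.rpow_le_rpow hinflb hpinv.le
    have h2 := ENNReal.toReal_mono (ENNReal.rpow_ne_top_of_nonneg hpinv.le hne) h1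
    refine le_trans ?_ h2
    have h3 : ((ENNReal.ofReal ((α t * r) ^ p) * ENNReal.ofReal (δ t - δ (t+1)))
        ^ (1/p)).toReal = ((α t * r) ^ p * (δ t - δ (t+1))) ^ (1/p) := by
      have hnn : 0 ≤ (α t * r) ^ p := Real.rpow_nonneg (mul_nonneg (hαpos t).le hrpos.le) p
      rw [← ENNReal.ofReal_mul hnn, ← ENNReal.toReal_rpow,
        ENNReal.toReal_ofReal (mul_nonneg hnn (hΔpos t))]
    rw [h3]
    have hα2 : α t ^ p = δ (t+1) / δ t := by
      have : α t ^ p = ((δ (t+1) / δ t) ^ (1/p)) ^ p := rfl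
      rw [this, ← Real.rpow_mul (hratpos t).le, one_div_mul_cancel hpne, Real.rpow_one]
    have e1 : (α t * r) ^ p = (δ (t+1) / δ t) * r ^ p := by
      rw [Real.mul_rpow (hαpos t).le hrpos.le, hα2]
    have e2 : δ (t+1) * r ^ p * (1/2) ≤ (δ (t+1) / δ t) * r ^ p * (δ t - δ (t+1)) := by
      have h4 : δ t / 2 ≤ δ t - δ (t+1) := by linarith [hδhalf t]
      have h5 : (δ (t+1) / δ t) * r ^ p * (δ t / 2) ≤
          (δ (t+1) / δ t) * r ^ p * (δ t - δ (t+1)) := by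
        exact mul_le_mul_of_nonneg_left h4
          (mul_nonneg (hratpos t).le (Real.rpow_nonneg hrpos.le p))
      refine le_trans (le_of_eq ?_) h5
      have hδtne : δ t ≠ 0 := (hδpos' t).ne'
      field_simp
    calc δ (t+1) ^ (1/p) * (r/2)
        ≤ δ (t+1) ^ (1/p) * (r ^ p) ^ (1/p) * (1/2 : ℝ) ^ (1/p) := by
          have hr1 : (r ^ p) ^ (1/p) = r := by
            rw [← Real.rpow_mul hrpos.le, mul_one_div_cancel hpne, Real.rpow_one]
          have hhalf : (1/2 : ℝ) ≤ (1/2 : ℝ) ^ (1/p) := by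
            have := Real.rpow_le_rpow_of_exponent_ge (x := (1/2 : ℝ)) (by norm_num)
              (by norm_num) ((div_le_one hppos).mpr hp)
            simpa using this
          rw [hr1]
          calc δ (t+1) ^ (1/p) * (r/2) = δ (t+1) ^ (1/p) * r * (1/2) := by ring
            _ ≤ δ (t+1) ^ (1/p) * r * (1/2 : ℝ) ^ (1/p) :=
                mul_le_mul_of_nonneg_left hhalf
                  (mul_nonneg (Real.rpow_nonneg (hδpos t).le _) hrpos.le)
      _ = (δ (t+1) * r ^ p * (1/2)) ^ (1/p) := by
          rw [Real.mul_rpow (mul_nonneg (hδpos t).le (Real.rpow_nonneg hrpos.le p))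
              (by norm_num),
            Real.mul_rpow (hδpos t).le (Real.rpow_nonneg hrpos.le p)]
      _ ≤ ((δ (t+1) / δ t) * r ^ p * (δ t - δ (t+1))) ^ (1/p) :=
          Real.rpow_le_rpow
            (mul_nonneg (mul_nonneg (hδpos t).le (Real.rpow_nonneg hrpos.le p)) (by norm_num))
            e2 hpinv.le
      _ = ((α t * r) ^ p * (δ t - δ (t+1))) ^ (1/p) := by rw [e1]
  -- numerator
  set a : ℕ → EuclideanSpace ℝ (Fin m) := fun t => ((δ t) ^ (1/p))⁻¹ • E (μ (δ t)) with hadef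
  have hEμtil : ∀ t, E (μtil (t+1)) = α t • E (μ (δ t)) := by
    intro t
    rw [hμtil t]
    exact hhom (μ (δ t)) (hmuPn (δ t) (hδpos' t).le (hδle1 t)) (α t) (hαpos t).le (hαle1 t)
  have hnum : ∀ t, E (μ (δ (t+1))) - E (μtil (t+1)) = (δ (t+1)) ^ (1/p) • (a (t+1) - a t) := by
    intro t
    have hα' : α t = δ (t+1) ^ (1/p) * ((δ t) ^ (1/p))⁻¹ := by
      show (δ (t+1) / δ t) ^ (1/p) = _
      rw [Real.div_rpow (hδpos t).le (hδpos' t).le, div_eq_mul_inv]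
    have ha1 : a (t+1) = ((δ (t+1)) ^ (1/p))⁻¹ • E (μ (δ (t+1))) := rfl
    have ha2 : a t = ((δ t) ^ (1/p))⁻¹ • E (μ (δ t)) := rfl
    rw [hEμtil t, ha1, ha2, smul_sub, smul_smul, smul_smul]
    have hδ1p : (δ (t+1)) ^ (1/p) ≠ 0 := (Real.rpow_pos_of_pos (hδpos t) _).ne'
    rw [mul_inv_cancel₀ hδ1p, one_smul, hα']
  have hnumnorm : ∀ t, ‖E (μ (δ (t+1))) - E (μtil (t+1))‖
      = (δ (t+1)) ^ (1/p) * ‖a (t+1) - a t‖ := by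
    intro t
    rw [hnum t, norm_smul, Real.norm_eq_abs, abs_of_pos (Real.rpow_pos_of_pos (hδpos t) _)]
  have hratio : ∀ t, ‖E (μ (δ (t+1))) - E (μtil (t+1))‖ / Wp d p (μ (δ (t+1))) (μtil (t+1))
      ≤ (2 / r) * ‖a (t+1) - a t‖ := by
    intro t
    have hWpos : (0:ℝ) < δ (t+1) ^ (1/p) * (r/2) := by
      have := Real.rpow_pos_of_pos (hδpos t) (1/p)
      positivity
    have hle := hWlb t
    calc ‖E (μ (δ (t+1))) - E (μtil (t+1))‖ / Wp d p (μ (δ (t+1))) (μtil (t+1))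
        ≤ ‖E (μ (δ (t+1))) - E (μtil (t+1))‖ / (δ (t+1) ^ (1/p) * (r/2)) :=
          div_le_div_of_nonneg_left (norm_nonneg _) hWpos hle
      _ = (2 / r) * ‖a (t+1) - a t‖ := by
          rw [hnumnorm t]
          have hδ1p : (δ (t+1)) ^ (1/p) ≠ 0 := (Real.rpow_pos_of_pos (hδpos t) _).ne'
          field_simp
  have hLa : Tendsto a atTop (nhds L) := hL
  have hL' : Tendsto (fun t => a (t+1)) atTop (nhds L) := hLa.comp (tendsto_add_atTop_nat 1)
  have hdiff : Tendsto (fun t => (2/r) * ‖a (t+1) - a t‖) atTop (nhds 0) := by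
    have h0 : Tendsto (fun t => a (t+1) - a t) atTop (nhds (L - L)) := hL'.sub hLa
    rw [sub_self] at h0
    have h1 : Tendsto (fun t => ‖a (t+1) - a t‖) atTop (nhds 0) := by
      simpa using h0.norm
    simpa using h1.const_mul (2/r)
  have hmain : Tendsto (fun t : ℕ =>
      ‖E (μ (δ (t+1))) - E (μtil (t+1))‖ / Wp d p (μ (δ (t+1))) (μtil (t+1)))
      atTop (nhds 0) := by
    refine squeeze_zero (fun t => div_nonneg (norm_nonneg _) ?_) hratio hdiff
    exact ENNReal.toReal_nonneg
  refine ⟨hmain, ?_⟩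
  rintro ⟨c, hc, hlow⟩
  have hcle : ∀ t : ℕ, c ≤
      ‖E (μ (δ (t+1))) - E (μtil (t+1))‖ / Wp d p (μ (δ (t+1))) (μtil (t+1)) := by
    intro t
    have hW := hWlb t
    have hWpos0 : (0:ℝ) < δ (t+1) ^ (1/p) * (r/2) := by
      have := Real.rpow_pos_of_pos (hδpos t) (1/p)
      positivity
    have hWpos : 0 < Wp d p (μ (δ (t+1))) (μtil (t+1)) := lt_of_lt_of_le hWpos0 hW
    have hlb := hlow (μ (δ (t+1))) (μtil (t+1))
      (hmuPn (δ (t+1)) (hδpos t).le (hδle1 (t+1))) (hmutilPn t)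
    rw [le_div_iff₀ hWpos]
    exact hlb
  have hc0 : c ≤ 0 := ge_of_tendsto' hmain hcle
  linarith
end
end
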